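/- arXiv:2012.15303 — 13 statements merged into one kernel-verified Lean document; each statement's English description precedes it below -/
import Mathlib

section
/- Let Γ be a group, let Λ, Ξ ⊆ Γ be approximate subgroups, and let k, l ≥ 2 be natural numbers. Then the intersection Λ^k ∩ Ξ^l is an approximate subgroup of Γ. -/
open Pointwise

/-- A subset `Λ` of a group `G` is an approximate subgroup if it is symmetric, contains the
identity and `Λ·Λ ⊆ Λ·F` for some finite set `F ⊆ G`. -/
def IsApproximateSubgroup' {G : Type*} [Group G] (Λ : Set G) : Prop :=
  Λ⁻¹ = Λ ∧ (1 : G) ∈ Λ ∧ ∃ F : Set G, F.Finite ∧ Λ * Λ ⊆ Λ * F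

/-! Inverting both sides turns `A * A ⊆ A * F` into `A * A ⊆ F⁻¹ * A` when `A` is symmetric, so
`IsApproximateSubgroup' A` says that `A` is a `K`-approximate subgroup in Mathlib's sense for some
`K`, and the theorem becomes `IsApproximateSubgroup.pow_inter_pow`. -/

section

variable {G : Type*} [Group G]

lemma Set.mul_self_subset_mul_iff_subset_inv_mul {A F : Set G} (hA : A⁻¹ = A) :
    A * A ⊆ A * F ↔ A * A ⊆ F⁻¹ * A := by
  rw [← Set.inv_subset_inv, mul_inv_rev, mul_inv_rev, hA]

lemma isApproximateSubgroup'_iff_exists_isApproximateSubgroup {A : Set G} :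
    IsApproximateSubgroup' A ↔ ∃ K : ℝ, IsApproximateSubgroup K A := by
  constructor
  · rintro ⟨hA, hA₁, F, hF, hAF⟩
    rw [Set.mul_self_subset_mul_iff_subset_inv_mul hA] at hAF
    refine ⟨_, hA₁, hA, hF.inv.toFinset, le_rfl, ?_⟩
    rwa [Set.Finite.coe_toFinset, sq]
  · rintro ⟨K, hA₁, hA, F, -, hAF⟩
    refine ⟨hA, hA₁, (F : Set G)⁻¹, F.finite_toSet.inv, ?_⟩
    rw [Set.mul_self_subset_mul_iff_subset_inv_mul hA, inv_inv, ← sq]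
    exact hAF

end

theorem intersection_of_powers_approximate_subgroup {G : Type*} [Group G]
    (Λ Ξ : Set G) (hΛ : IsApproximateSubgroup' Λ) (hΞ : IsApproximateSubgroup' Ξ)
    (k l : ℕ) (hk : 2 ≤ k) (hl : 2 ≤ l) :
    IsApproximateSubgroup' (Λ ^ k ∩ Ξ ^ l) := by
  rw [isApproximateSubgroup'_iff_exists_isApproximateSubgroup] at hΛ hΞ ⊢
  obtain ⟨K, hΛ⟩ := hΛ
  obtain ⟨L, hΞ⟩ := hΞ
  exact ⟨_, hΛ.pow_inter_pow hΞ hk hl⟩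
end

section
/- Let G and H be groups and let f : G → H be a quasimorphism. If Ξ ⊆ G is a left-quasi-subgroup of G, then f(Ξ) is a left-quasi-subgroup of H. In particular, if Ξ is an approximate subgroup of G and f is symmetric, then f(Ξ) is an approximate subgroup of H. -/
open Pointwise

/-- A subset `Λ` of a group `G` is a left-quasi-subgroup if `Λ⁻¹ ⊆ Λ·F₁` and `Λ·Λ ⊆ Λ·F₂` for
some finite sets `F₁, F₂ ⊆ G`. -/
def IsLeftQuasiSubgroup {G : Type*} [Group G] (Λ : Set G) : Prop :=
  (∃ F₁ : Set G, F₁.Finite ∧ Λ⁻¹ ⊆ Λ * F₁) ∧ ∃ F₂ : Set G, F₂.Finite ∧ Λ * Λ ⊆ Λ * F₂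

/-- The left-defect set of a map between groups. -/
def defectSet {G H : Type*} [Group G] [Group H] (f : G → H) : Set H :=
  {d : H | ∃ x y : G, d = (f y)⁻¹ * (f x)⁻¹ * f (x * y)}

/-- A map between groups is a quasimorphism if its left-defect set is finite. -/
def IsQuasimorphism {G H : Type*} [Group G] [Group H] (f : G → H) : Prop :=
  (defectSet f).Finite

/-!
Up to a right factor from the defect set `D`, `f` is multiplicative:
`f (x * y) ∈ f x * f y * D` and `f x * f y ∈ f (x * y) * D⁻¹`, and `(f x)⁻¹ ∈ f x⁻¹ * D * (f 1)⁻¹`.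
Pushing `Ξ * Ξ ⊆ Ξ * F₂` and `Ξ⁻¹ ⊆ Ξ * F₁` through `f` therefore gives the same inclusions for
`f '' Ξ`, with the finite sets `f '' F₂ * D * D⁻¹` and `f '' F₁ * D * D * {(f 1)⁻¹}`.
-/

section

variable {G H : Type*} [Group G] [Group H] (f : G → H) {Ξ F : Set G}

theorem mem_defectSet (x y : G) : (f y)⁻¹ * (f x)⁻¹ * f (x * y) ∈ defectSet f :=
  ⟨x, y, rfl⟩

theorem defectSet.image_mul_subset (A B : Set G) :
    f '' (A * B) ⊆ f '' A * f '' B * defectSet f := by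
  rintro _ ⟨_, ⟨x, hx, y, hy, rfl⟩, rfl⟩
  have hxy : f (x * y) = f x * f y * ((f y)⁻¹ * (f x)⁻¹ * f (x * y)) := by group
  rw [hxy]
  exact Set.mul_mem_mul (Set.mul_mem_mul ⟨x, hx, rfl⟩ ⟨y, hy, rfl⟩) (mem_defectSet f x y)

theorem defectSet.image_mul_image_subset (A B : Set G) :
    f '' A * f '' B ⊆ f '' (A * B) * (defectSet f)⁻¹ := by
  rintro _ ⟨_, ⟨x, hx, rfl⟩, _, ⟨y, hy, rfl⟩, rfl⟩
  have hxy : f x * f y = f (x * y) * ((f y)⁻¹ * (f x)⁻¹ * f (x * y))⁻¹ := by group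
  change f x * f y ∈ _
  rw [hxy]
  exact Set.mul_mem_mul ⟨x * y, Set.mul_mem_mul hx hy, rfl⟩
    (Set.inv_mem_inv.mpr (mem_defectSet f x y))

theorem defectSet.inv_image_subset (A : Set G) :
    (f '' A)⁻¹ ⊆ f '' A⁻¹ * defectSet f * {(f 1)⁻¹} := by
  rintro a ⟨x, hx, hxa⟩
  have ha : a = f x⁻¹ * ((f x⁻¹)⁻¹ * (f x)⁻¹ * f (x * x⁻¹)) * (f 1)⁻¹ := by
    rw [mul_inv_cancel, hxa]; group
  rw [ha]
  exact Set.mul_mem_mul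
    (Set.mul_mem_mul ⟨x⁻¹, Set.inv_mem_inv.mpr hx, rfl⟩ (mem_defectSet f x x⁻¹)) rfl

theorem image_mul_image_subset_of_mul_subset (hF : Ξ * Ξ ⊆ Ξ * F) :
    f '' Ξ * f '' Ξ ⊆ f '' Ξ * (f '' F * defectSet f * (defectSet f)⁻¹) :=
  calc f '' Ξ * f '' Ξ ⊆ f '' (Ξ * Ξ) * (defectSet f)⁻¹ := defectSet.image_mul_image_subset f Ξ Ξ
    _ ⊆ f '' (Ξ * F) * (defectSet f)⁻¹ := Set.mul_subset_mul_right (Set.image_mono hF)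
    _ ⊆ f '' Ξ * f '' F * defectSet f * (defectSet f)⁻¹ :=
      Set.mul_subset_mul_right (defectSet.image_mul_subset f Ξ F)
    _ = f '' Ξ * (f '' F * defectSet f * (defectSet f)⁻¹) := by simp only [mul_assoc]

theorem inv_image_subset_of_inv_subset (hF : Ξ⁻¹ ⊆ Ξ * F) :
    (f '' Ξ)⁻¹ ⊆ f '' Ξ * (f '' F * defectSet f * defectSet f * {(f 1)⁻¹}) :=
  calc (f '' Ξ)⁻¹ ⊆ f '' Ξ⁻¹ * defectSet f * {(f 1)⁻¹} := defectSet.inv_image_subset f Ξ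
    _ ⊆ f '' (Ξ * F) * defectSet f * {(f 1)⁻¹} :=
      Set.mul_subset_mul_right (Set.mul_subset_mul_right (Set.image_mono hF))
    _ ⊆ f '' Ξ * f '' F * defectSet f * defectSet f * {(f 1)⁻¹} :=
      Set.mul_subset_mul_right (Set.mul_subset_mul_right (defectSet.image_mul_subset f Ξ F))
    _ = f '' Ξ * (f '' F * defectSet f * defectSet f * {(f 1)⁻¹}) := by simp only [mul_assoc]

theorem inv_image_eq_of_map_inv (hinv : ∀ x : G, f x⁻¹ = (f x)⁻¹) (hΞ : Ξ⁻¹ = Ξ) :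
    (f '' Ξ)⁻¹ = f '' Ξ := by
  rw [← Set.image_inv_of_apply_inv_eq_inv (fun x _ ↦ hinv x), hΞ]

end

theorem image_of_quasi_subgroup_under_quasimorphism {G H : Type*} [Group G] [Group H]
    (f : G → H) (hf : IsQuasimorphism f) (Ξ : Set G) :
    (IsLeftQuasiSubgroup Ξ → IsLeftQuasiSubgroup (f '' Ξ)) ∧
    (IsApproximateSubgroup' Ξ → f 1 = 1 → (∀ x : G, f x⁻¹ = (f x)⁻¹) →
      IsApproximateSubgroup' (f '' Ξ)) := by
  constructor
  · rintro ⟨⟨F₁, hF₁, hΞF₁⟩, ⟨F₂, hF₂, hΞF₂⟩⟩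
    exact ⟨⟨_, (((hF₁.image f).mul hf).mul hf).mul (Set.finite_singleton _),
        inv_image_subset_of_inv_subset f hΞF₁⟩,
      ⟨_, ((hF₂.image f).mul hf).mul hf.inv, image_mul_image_subset_of_mul_subset f hΞF₂⟩⟩
  · rintro ⟨hsymm, hone, F, hF, hΞF⟩ hf1 hinv
    exact ⟨inv_image_eq_of_map_inv f hinv hsymm, ⟨1, hone, hf1⟩,
      _, ((hF.image f).mul hf).mul hf.inv, image_mul_image_subset_of_mul_subset f hΞF⟩
end

section
/- (i) Let ρ : G → H be a group homomorphism and let Λ ⊆ H be an approximate subgroup. Then ρ⁻¹(Λ·Λ) is an approximate subgroup of G; if moreover ρ is surjective, then already ρ⁻¹(Λ) is an approximate subgroup of G, and if in addition Λ generates H then ρ⁻¹(Λ) generates G. (ii) Let A be an abelian group, ρ : G → A a surjective symmetric quasimorphism, Λ ⊆ A an approximate subgroup, and S ⊆ A a finite symmetric set with D(ρ) ⊆ S. Then ρ⁻¹(Λ·S) is an approximate subgroup of G; in particular (taking Λ = {0} and S the symmetrization of D(ρ)) the quasi-kernel qker(ρ) = ρ⁻¹(D_sym(ρ)) is an approximate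 subgroup of G. -/
/-!
A symmetric set `P ∋ 1` is an approximate subgroup once `P * P` lies in finitely many right
translates of `P`. Write `ρ (x * y) = ρ x * ρ y * d` with `d` in the defect set `D` (`d = 1` for
a homomorphism). If `ρ g = y * t` with `t` in a finite set `F` and `ρ (c t) = y' * t`, then
`g = (g * (c t)⁻¹) * c t` and, for symmetric `ρ`, `ρ (g * (c t)⁻¹) ∈ y * y'⁻¹ * D`. For surjective
`ρ` take `c` a right inverse, so `y' = 1`; for an arbitrary homomorphism `c t` can only be chosen
in `ρ⁻¹' (Λ * {t})`, which is why part (i) needs `Λ * Λ = Λ * Λ⁻¹`. Generation passes to the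
preimage because the subgroup generated by `ρ⁻¹' Λ` contains the kernel.
-/

open Pointwise

open Set

section Preimage

variable {G H : Type*} [Group G] [Group H]

lemma exists_mem_defectSet_map_mul (f : G → H) (x y : G) :
    ∃ d ∈ defectSet f, f (x * y) = f x * f y * d :=
  ⟨_, ⟨x, y, rfl⟩, by group⟩

lemma one_mem_defectSet {f : G → H} (hf : f 1 = 1) : (1 : H) ∈ defectSet f :=
  ⟨1, 1, by simp [hf]⟩

lemma defectSet_monoidHom (ρ : G →* H) : defectSet ρ = {1} := by
  ext d
  simp [defectSet, mul_assoc]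

lemma preimage_mul_preimage_subset_defectSet (f : G → H) (X Y : Set H) :
    f ⁻¹' X * f ⁻¹' Y ⊆ f ⁻¹' (X * Y * defectSet f) := by
  rintro _ ⟨x, hx, y, hy, rfl⟩
  obtain ⟨d, hd, hxy⟩ := exists_mem_defectSet_map_mul f x y
  rw [mem_preimage, hxy]
  exact mul_mem_mul (mul_mem_mul hx hy) hd

lemma preimage_mul_subset_of_rightInverse {f : G → H} (hf : ∀ x, f x⁻¹ = (f x)⁻¹)
    {c : H → G} (hc : Function.RightInverse c f) (Y F : Set H) :
    f ⁻¹' (Y * F) ⊆ f ⁻¹' (Y * defectSet f) * c '' F := by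
  rintro g ⟨y, hy, t, ht, hg⟩
  obtain ⟨d, hd, h⟩ := exists_mem_defectSet_map_mul f g (c t)⁻¹
  refine ⟨g * (c t)⁻¹, ?_, c t, mem_image_of_mem c ht, inv_mul_cancel_right g (c t)⟩
  rw [mem_preimage, h, hf, hc t, ← hg, mul_inv_cancel_right]
  exact mul_mem_mul hy hd

lemma MonoidHom.exists_finite_preimage_mul_subset (ρ : G →* H) (Y : Set H) {F : Set H}
    (hF : F.Finite) : ∃ C : Set G, C.Finite ∧ ρ ⁻¹' (Y * F) ⊆ ρ ⁻¹' (Y * Y⁻¹) * C := by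
  classical
  let c : H → G := fun t => if h : ∃ g, ρ g * t⁻¹ ∈ Y then h.choose else 1
  refine ⟨c '' F, hF.image c, ?_⟩
  rintro g ⟨y, hy, t, ht, hg⟩
  have hgt : ρ g * t⁻¹ ∈ Y := by rwa [← hg, mul_inv_cancel_right]
  have hct : ρ (c t) * t⁻¹ ∈ Y := by
    have hex : ∃ g, ρ g * t⁻¹ ∈ Y := ⟨g, hgt⟩
    simp only [c, dif_pos hex]
    exact hex.choose_spec
  refine ⟨g * (c t)⁻¹, ?_, c t, mem_image_of_mem c ht, inv_mul_cancel_right g (c t)⟩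
  have hsplit : ρ (g * (c t)⁻¹) = ρ g * t⁻¹ * (ρ (c t) * t⁻¹)⁻¹ := by
    rw [map_mul, map_inv]
    group
  rw [mem_preimage, hsplit]
  exact mul_mem_mul hgt (inv_mem_inv.2 hct)

lemma MonoidHom.closure_preimage_eq_top (ρ : G →* H) (hρ : Function.Surjective ρ)
    {Λ : Set H} (h1 : (1 : H) ∈ Λ) (hΛ : Subgroup.closure Λ = ⊤) :
    Subgroup.closure (ρ ⁻¹' Λ) = ⊤ := by
  have hker : ρ.ker ≤ Subgroup.closure (ρ ⁻¹' Λ) := fun g hg =>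
    Subgroup.subset_closure (by simpa [ρ.mem_ker.1 hg] using h1)
  calc Subgroup.closure (ρ ⁻¹' Λ) = ((Subgroup.closure (ρ ⁻¹' Λ)).map ρ).comap ρ := by
        rw [Subgroup.comap_map_eq, sup_eq_left.2 hker]
    _ = ⊤ := by rw [MonoidHom.map_closure, image_preimage_eq Λ hρ, hΛ, Subgroup.comap_top]

lemma isApproximateSubgroup'_one : IsApproximateSubgroup' (1 : Set G) :=
  ⟨inv_one, rfl, 1, finite_one, by rw [one_mul]⟩

lemma mul_mul_mul_subset_of_mul_subset {Λ F : Set H} (h : Λ * Λ ⊆ Λ * F) :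
    Λ * Λ * (Λ * Λ) ⊆ Λ * (F * F * F) := by
  have hcube : Λ * (Λ * Λ) ⊆ Λ * (F * F) :=
    calc Λ * (Λ * Λ) ⊆ Λ * (Λ * F) := mul_subset_mul_left h
      _ = Λ * Λ * F := (mul_assoc _ _ _).symm
      _ ⊆ Λ * F * F := mul_subset_mul_right h
      _ = Λ * (F * F) := mul_assoc _ _ _
  calc Λ * Λ * (Λ * Λ) = Λ * (Λ * (Λ * Λ)) := mul_assoc _ _ _
    _ ⊆ Λ * (Λ * (F * F)) := mul_subset_mul_left hcube
    _ = Λ * Λ * (F * F) := (mul_assoc _ _ _).symm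
    _ ⊆ Λ * F * (F * F) := mul_subset_mul_right h
    _ = Λ * (F * F * F) := by rw [mul_assoc, mul_assoc]

lemma isApproximateSubgroup'_preimage_of_mul_subset {f : G → H} (hf1 : f 1 = 1)
    (hf : ∀ x, f x⁻¹ = (f x)⁻¹) {T : Set H} (hT : T⁻¹ = T) (h1 : (1 : H) ∈ T) {C : Set G}
    (hC : C.Finite) (hcov : f ⁻¹' T * f ⁻¹' T ⊆ f ⁻¹' T * C) :
    IsApproximateSubgroup' (f ⁻¹' T) := by
  refine ⟨?_, by rwa [mem_preimage, hf1], C, hC, hcov⟩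
  ext x
  rw [mem_inv, mem_preimage, mem_preimage, hf, ← mem_inv, hT]

lemma IsApproximateSubgroup'.preimage_mul {A : Type*} [CommGroup A] {Λ S : Set A}
    (hΛ : IsApproximateSubgroup' Λ) {f : G → A} (hf : Function.Surjective f) (hf1 : f 1 = 1)
    (hfinv : ∀ x, f x⁻¹ = (f x)⁻¹) (hS : S.Finite) (hSsymm : S⁻¹ = S)
    (hDS : defectSet f ⊆ S) : IsApproximateSubgroup' (f ⁻¹' (Λ * S)) := by
  obtain ⟨hsymm, h1, F, hF, hcov⟩ := hΛ
  obtain ⟨c, hc⟩ := hf.hasRightInverse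
  have hsq : Λ * S * (Λ * S) * defectSet f ⊆ Λ * (F * (S * S * S)) :=
    calc Λ * S * (Λ * S) * defectSet f ⊆ Λ * S * (Λ * S) * S := mul_subset_mul_left hDS
      _ = Λ * Λ * (S * S * S) := by ac_rfl
      _ ⊆ Λ * F * (S * S * S) := mul_subset_mul_right hcov
      _ = Λ * (F * (S * S * S)) := mul_assoc _ _ _
  refine isApproximateSubgroup'_preimage_of_mul_subset hf1 hfinv
    (by rw [mul_inv_rev, hSsymm, hsymm, mul_comm])
    ⟨1, h1, 1, hDS (one_mem_defectSet hf1), one_mul 1⟩ ((hF.mul ((hS.mul hS).mul hS)).image c) ?_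
  calc f ⁻¹' (Λ * S) * f ⁻¹' (Λ * S) ⊆ f ⁻¹' (Λ * S * (Λ * S) * defectSet f) :=
        preimage_mul_preimage_subset_defectSet f _ _
    _ ⊆ f ⁻¹' (Λ * (F * (S * S * S))) := preimage_mono hsq
    _ ⊆ f ⁻¹' (Λ * defectSet f) * c '' (F * (S * S * S)) :=
        preimage_mul_subset_of_rightInverse hfinv hc _ _
    _ ⊆ f ⁻¹' (Λ * S) * c '' (F * (S * S * S)) :=
        mul_subset_mul_right (preimage_mono (mul_subset_mul_left hDS))

lemma IsApproximateSubgroup'.preimage_mul_self {Λ : Set H} (hΛ : IsApproximateSubgroup' Λ)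
    (ρ : G →* H) : IsApproximateSubgroup' (ρ ⁻¹' (Λ * Λ)) := by
  obtain ⟨hsymm, h1, F, hF, hcov⟩ := hΛ
  obtain ⟨C, hC, hsub⟩ := ρ.exists_finite_preimage_mul_subset Λ ((hF.mul hF).mul hF)
  refine isApproximateSubgroup'_preimage_of_mul_subset (map_one ρ) (map_inv ρ)
    (by rw [mul_inv_rev, hsymm]) ⟨1, h1, 1, h1, one_mul 1⟩ hC ?_
  calc ρ ⁻¹' (Λ * Λ) * ρ ⁻¹' (Λ * Λ) ⊆ ρ ⁻¹' (Λ * Λ * (Λ * Λ)) := preimage_mul_preimage_subset ρ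
    _ ⊆ ρ ⁻¹' (Λ * (F * F * F)) := preimage_mono (mul_mul_mul_subset_of_mul_subset hcov)
    _ ⊆ ρ ⁻¹' (Λ * Λ) * C := by rwa [hsymm] at hsub

lemma IsApproximateSubgroup'.preimage_of_surjective {Λ : Set H} (hΛ : IsApproximateSubgroup' Λ)
    {ρ : G →* H} (hρ : Function.Surjective ρ) : IsApproximateSubgroup' (ρ ⁻¹' Λ) := by
  obtain ⟨hsymm, h1, F, hF, hcov⟩ := hΛ
  obtain ⟨c, hc⟩ := hρ.hasRightInverse
  refine isApproximateSubgroup'_preimage_of_mul_subset (map_one ρ) (map_inv ρ) hsymm h1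
    (hF.image c) ?_
  calc ρ ⁻¹' Λ * ρ ⁻¹' Λ ⊆ ρ ⁻¹' (Λ * Λ) := preimage_mul_preimage_subset ρ
    _ ⊆ ρ ⁻¹' (Λ * F) := preimage_mono hcov
    _ ⊆ ρ ⁻¹' (Λ * defectSet ρ) * c '' F := preimage_mul_subset_of_rightInverse (map_inv ρ) hc Λ F
    _ = ρ ⁻¹' Λ * c '' F := by rw [defectSet_monoidHom, singleton_one, mul_one]

end Preimage

theorem preimages_of_approximate_subgroups {G H A : Type*} [Group G] [Group H] [CommGroup A] :
    -- (i) preimages under group homomorphisms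
    (∀ (ρ : G →* H) (Λ : Set H), IsApproximateSubgroup' Λ →
        IsApproximateSubgroup' (⇑ρ ⁻¹' (Λ * Λ)) ∧
        (Function.Surjective ⇑ρ →
          IsApproximateSubgroup' (⇑ρ ⁻¹' Λ) ∧
          (Subgroup.closure Λ = ⊤ → Subgroup.closure (⇑ρ ⁻¹' Λ) = ⊤))) ∧
    -- (ii) preimages under surjective symmetric quasimorphisms with abelian target
    (∀ ρ : G → A, IsQuasimorphism ρ → Function.Surjective ρ → ρ 1 = 1 →
        (∀ x : G, ρ x⁻¹ = (ρ x)⁻¹) →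
        (∀ Λ S : Set A, IsApproximateSubgroup' Λ → S.Finite → S⁻¹ = S →
            defectSet ρ ⊆ S → IsApproximateSubgroup' (ρ ⁻¹' (Λ * S))) ∧
        IsApproximateSubgroup' (ρ ⁻¹' (defectSet ρ ∪ (defectSet ρ)⁻¹))) := by
  refine ⟨fun ρ Λ hΛ => ⟨hΛ.preimage_mul_self ρ, fun hρ =>
      ⟨hΛ.preimage_of_surjective hρ, ρ.closure_preimage_eq_top hρ hΛ.2.1⟩⟩,
    fun ρ hq hρ hρ1 hρinv => ⟨fun Λ S hΛ => hΛ.preimage_mul hρ hρ1 hρinv, ?_⟩⟩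
  have hD : (defectSet ρ ∪ (defectSet ρ)⁻¹)⁻¹ = defectSet ρ ∪ (defectSet ρ)⁻¹ := by
    rw [union_inv, inv_inv, union_comm]
  simpa only [one_mul] using isApproximateSubgroup'_one.preimage_mul hρ hρ1 hρinv
    (hq.union hq.inv) hD subset_union_left
end

section
/- Let (Ξ, Ξ^∞) and (Λ, Λ^∞) be approximate groups. (i) If ρ : Ξ^{10} → Λ^{10} is a 10-local morphism, then the partial kernel ker₂(ρ) = Ξ² ∩ ρ⁻¹(1) is an approximate subgroup of Ξ^∞. (ii) More generally, if k ≥ 2 and ρ : Ξ^{6k−2} → Λ^{6k−2} is a (6k−2)-local morphism, then each of the partial kernels ker₂(ρ), …, ker_k(ρ), where ker_j(ρ) = Ξ^j ∩ ρ⁻¹(1), is an approximate subgroup of Ξ^∞. -/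
open Pointwise

/-- A `k`-local morphism between approximate groups `(Ξ, Ξ^∞)` and `(Λ, Λ^∞)`: it maps `Ξ^j`
into `Λ^j` for `j ≤ k`, sends `1` to `1`, and is multiplicative whenever all of `g`, `h`, `g*h`
lie in `Ξ^k`. -/
def IsLocalMorphism {G H : Type*} [Group G] [Group H] (Ξ : Set G) (Λ : Set H) (k : ℕ)
    (ρ : G → H) : Prop :=
  (∀ j : ℕ, j ≤ k → ∀ g ∈ Ξ ^ j, ρ g ∈ Λ ^ j) ∧ ρ 1 = 1 ∧
    ∀ g h : G, g ∈ Ξ ^ k → h ∈ Ξ ^ k → g * h ∈ Ξ ^ k → ρ (g * h) = ρ g * ρ h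

/-!
Local multiplicativity makes `ρ` behave like a homomorphism on `Ξ^K`, so for `2j ≤ K` the partial
kernel `ker_j` is symmetric and `ker_j · ker_j ⊆ ker_{2j}`. Since `Ξ²` is covered by finitely many
right translates `Ξ f`, so is `Ξ^{2j}`. Choose one element of `ker_{2j}` in each translate that
meets it: any other element `s` of `ker_{2j}` in the same translate as the chosen `p` satisfies
`s p⁻¹ ∈ Ξ Ξ⁻¹ = Ξ²` and `ρ (s p⁻¹) = 1`, whence `ker_{2j} ⊆ ker_2 · P ⊆ ker_j · P` for the finite
set `P` of chosen elements.
-/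

namespace Set

lemma pow_succ_subset_mul_pow_of_mul_self_subset {M : Type*} [Monoid M] {s t : Set M}
    (hst : s * s ⊆ s * t) : ∀ n : ℕ, s ^ (n + 1) ⊆ s * t ^ n
  | 0 => by simp
  | n + 1 =>
    calc s ^ (n + 2) = s * s ^ (n + 1) := pow_succ' s (n + 1)
      _ ⊆ s * (s * t ^ n) := mul_subset_mul_left (pow_succ_subset_mul_pow_of_mul_self_subset hst n)
      _ = s * s * t ^ n := (mul_assoc _ _ _).symm
      _ ⊆ s * t * t ^ n := mul_subset_mul_right hst
      _ = s * t ^ (n + 1) := by rw [mul_assoc, ← pow_succ']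

lemma inv_mem_pow_of_inv_eq {G : Type*} [Group G] {s : Set G} (hs : s⁻¹ = s) {n : ℕ} {g : G}
    (hg : g ∈ s ^ n) : g⁻¹ ∈ s ^ n := by
  have hsn : (s ^ n)⁻¹ = s ^ n := by rw [← inv_pow, hs]
  exact hsn ▸ inv_mem_inv.mpr hg

lemma Finite.pow {M : Type*} [Monoid M] {s : Set M} (hs : s.Finite) : ∀ n : ℕ, (s ^ n).Finite
  | 0 => by simp
  | n + 1 => by rw [pow_succ]; exact (hs.pow n).mul hs

lemma exists_finite_subset_forall_mul_inv_mem_mul_inv {G : Type*} [Group G] {S X F : Set G}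
    (hF : F.Finite) (hSXF : S ⊆ X * F) :
    ∃ P ⊆ S, P.Finite ∧ ∀ s ∈ S, ∃ p ∈ P, s * p⁻¹ ∈ X * X⁻¹ := by
  let F' : Set G := {f ∈ F | ∃ p ∈ S, p * f⁻¹ ∈ X}
  have : Finite F' := (hF.subset fun _ hf => hf.1).to_subtype
  choose rep hrepS hrepX using fun f : F' => f.2.2
  refine ⟨range rep, range_subset_iff.mpr hrepS, finite_range rep, fun s hs => ?_⟩
  obtain ⟨x, hx, f, hf, rfl⟩ := hSXF hs
  have hxf : x * f * f⁻¹ ∈ X := by rwa [mul_inv_cancel_right]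
  let f' : F' := ⟨f, hf, x * f, hs, hxf⟩
  refine ⟨rep f', mem_range_self f', ?_⟩
  have hsp : x * f * (rep f')⁻¹ = x * (rep f' * f⁻¹)⁻¹ := by group
  rw [hsp]
  exact mul_mem_mul hx (inv_mem_inv.mpr (hrepX f'))

end Set

open Set

section PartialKernel

variable {G H : Type*} [Group G] [Group H] {Ξ : Set G} {ρ : G → H} {K : ℕ}

def partialKernel (Ξ : Set G) (ρ : G → H) (j : ℕ) : Set G :=
  {g ∈ Ξ ^ j | ρ g = 1}

lemma one_mem_partialKernel (hone : (1 : G) ∈ Ξ) (hρ1 : ρ 1 = 1) (j : ℕ) :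
    (1 : G) ∈ partialKernel Ξ ρ j :=
  ⟨one_mem_pow hone, hρ1⟩

lemma partialKernel_mono (hone : (1 : G) ∈ Ξ) {i j : ℕ} (hij : i ≤ j) :
    partialKernel Ξ ρ i ⊆ partialKernel Ξ ρ j :=
  fun _ hg => ⟨pow_subset_pow_right hone hij hg.1, hg.2⟩

variable (hmul : ∀ g h : G, g ∈ Ξ ^ K → h ∈ Ξ ^ K → g * h ∈ Ξ ^ K → ρ (g * h) = ρ g * ρ h)
include hmul

lemma map_inv_of_mem_pow (hsymm : Ξ⁻¹ = Ξ) (hone : (1 : G) ∈ Ξ) (hρ1 : ρ 1 = 1) {g : G}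
    (hg : g ∈ Ξ ^ K) : ρ g⁻¹ = (ρ g)⁻¹ := by
  have hprod := hmul g g⁻¹ hg (inv_mem_pow_of_inv_eq hsymm hg)
    (by simpa using one_mem_pow hone)
  rw [mul_inv_cancel, hρ1] at hprod
  exact eq_inv_of_mul_eq_one_right hprod.symm

lemma partialKernel_inv (hsymm : Ξ⁻¹ = Ξ) (hone : (1 : G) ∈ Ξ) (hρ1 : ρ 1 = 1) {j : ℕ}
    (hjK : j ≤ K) : (partialKernel Ξ ρ j)⁻¹ = partialKernel Ξ ρ j := by
  have hker : ∀ {g}, g ∈ partialKernel Ξ ρ j → g⁻¹ ∈ partialKernel Ξ ρ j := fun {g} hg =>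
    ⟨inv_mem_pow_of_inv_eq hsymm hg.1, by
      rw [map_inv_of_mem_pow hmul hsymm hone hρ1 (pow_subset_pow_right hone hjK hg.1), hg.2,
        inv_one]⟩
  exact Subset.antisymm (fun g hg => inv_inv g ▸ hker hg) (fun g hg => hker hg)

lemma partialKernel_mul_subset (hone : (1 : G) ∈ Ξ) {i j : ℕ} (hijK : i + j ≤ K) :
    partialKernel Ξ ρ i * partialKernel Ξ ρ j ⊆ partialKernel Ξ ρ (i + j) := by
  rintro _ ⟨a, ⟨ha, hρa⟩, b, ⟨hb, hρb⟩, rfl⟩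
  have hab : a * b ∈ Ξ ^ (i + j) := pow_add Ξ i j ▸ mul_mem_mul ha hb
  have toK {n : ℕ} (hn : n ≤ i + j) : Ξ ^ n ⊆ Ξ ^ K := pow_subset_pow_right hone (hn.trans hijK)
  refine ⟨hab, ?_⟩
  rw [hmul a b (toK (Nat.le_add_right i j) ha) (toK (Nat.le_add_left j i) hb) (toK le_rfl hab),
    hρa, hρb, mul_one]

lemma exists_finite_partialKernel_subset_mul (hsymm : Ξ⁻¹ = Ξ) (hone : (1 : G) ∈ Ξ)
    (hρ1 : ρ 1 = 1) {F : Set G} (hF : F.Finite) (hΞF : Ξ * Ξ ⊆ Ξ * F) {n : ℕ}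
    (hnK : n + 1 ≤ K) (h2K : 2 ≤ K) :
    ∃ P : Set G, P.Finite ∧ partialKernel Ξ ρ (n + 1) ⊆ partialKernel Ξ ρ 2 * P := by
  have hcover : partialKernel Ξ ρ (n + 1) ⊆ Ξ * F ^ n :=
    fun _ hg => pow_succ_subset_mul_pow_of_mul_self_subset hΞF n hg.1
  obtain ⟨P, hPS, hP, hrep⟩ := exists_finite_subset_forall_mul_inv_mem_mul_inv (hF.pow n) hcover
  refine ⟨P, hP, fun s hs => ?_⟩
  obtain ⟨p, hpP, hsp⟩ := hrep s hs
  obtain ⟨hp, hρp⟩ := hPS hpP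
  have toK {m : ℕ} (hm : m ≤ K) : Ξ ^ m ⊆ Ξ ^ K := pow_subset_pow_right hone hm
  have hsp2 : s * p⁻¹ ∈ Ξ ^ 2 := by rw [hsymm] at hsp; rwa [sq]
  have hρsp : ρ (s * p⁻¹) = 1 := by
    rw [hmul s p⁻¹ (toK hnK hs.1) (inv_mem_pow_of_inv_eq hsymm (toK hnK hp)) (toK h2K hsp2),
      map_inv_of_mem_pow hmul hsymm hone hρ1 (toK hnK hp), hs.2, hρp, inv_one, mul_one]
  exact ⟨s * p⁻¹, ⟨hsp2, hρsp⟩, p, hpP, inv_mul_cancel_right s p⟩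

theorem isApproximateSubgroup'_partialKernel (hΞ : IsApproximateSubgroup' Ξ) (hρ1 : ρ 1 = 1)
    {j : ℕ} (hj : 2 ≤ j) (hjK : 2 * j ≤ K) : IsApproximateSubgroup' (partialKernel Ξ ρ j) := by
  obtain ⟨hsymm, hone, F, hF, hΞF⟩ := hΞ
  have h2j : 2 * j = 2 * j - 1 + 1 := by omega
  obtain ⟨P, hP, hcover⟩ := exists_finite_partialKernel_subset_mul hmul hsymm hone hρ1 hF hΞF
    (n := 2 * j - 1) (by omega) (by omega)
  refine ⟨partialKernel_inv hmul hsymm hone hρ1 (by omega), one_mem_partialKernel hone hρ1 j,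
    P, hP, ?_⟩
  calc partialKernel Ξ ρ j * partialKernel Ξ ρ j ⊆ partialKernel Ξ ρ (2 * j) := by
        rw [two_mul]; exact partialKernel_mul_subset hmul hone (by omega)
    _ ⊆ partialKernel Ξ ρ 2 * P := h2j ▸ hcover
    _ ⊆ partialKernel Ξ ρ j * P := mul_subset_mul_right (partialKernel_mono hone hj)

end PartialKernel

theorem partial_kernels_are_approximate_subgroups_general {G H : Type*} [Group G] [Group H]
    (Ξ : Set G) (Λ : Set H) (hΞ : IsApproximateSubgroup' Ξ) :
    (∀ ρ : G → H, IsLocalMorphism Ξ Λ 10 ρ →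
        IsApproximateSubgroup' {g ∈ Ξ ^ 2 | ρ g = 1}) ∧
    (∀ k : ℕ, 2 ≤ k → ∀ ρ : G → H, IsLocalMorphism Ξ Λ (6 * k - 2) ρ →
        ∀ j : ℕ, 2 ≤ j → j ≤ k → IsApproximateSubgroup' {g ∈ Ξ ^ j | ρ g = 1}) :=
  ⟨fun _ ⟨_, hρ1, hmul⟩ => isApproximateSubgroup'_partialKernel hmul hΞ hρ1 le_rfl (by norm_num),
    fun _ _ _ ⟨_, hρ1, hmul⟩ _ hj hjk =>
      isApproximateSubgroup'_partialKernel hmul hΞ hρ1 hj (by omega)⟩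

theorem partial_kernels_are_approximate_subgroups {G H : Type*} [Group G] [Group H]
    (Ξ : Set G) (Λ : Set H) (hΞ : IsApproximateSubgroup' Ξ) (hΛ : IsApproximateSubgroup' Λ) :
    (∀ ρ : G → H, IsLocalMorphism Ξ Λ 10 ρ →
        IsApproximateSubgroup' {g ∈ Ξ ^ 2 | ρ g = 1}) ∧
    (∀ k : ℕ, 2 ≤ k → ∀ ρ : G → H, IsLocalMorphism Ξ Λ (6 * k - 2) ρ →
        ∀ j : ℕ, 2 ≤ j → j ≤ k → IsApproximateSubgroup' {g ∈ Ξ ^ j | ρ g = 1}) :=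
  partial_kernels_are_approximate_subgroups_general Ξ Λ hΞ
end

section
/- Let (Ξ, Ξ^∞) and (Λ, Λ^∞) be approximate groups with Ξ countable, let k ≥ 2, and let ρ : Ξ^{k+1} → Λ^{k+1} be a (k+1)-local morphism. Then ker₂(ρ) is left-syndetic in ker_j(ρ) for every 2 ≤ j ≤ k; that is, for each such j there is a finite set F ⊆ Ξ^∞ with ker_j(ρ) ⊆ ker₂(ρ)·F. -/
open Pointwise

/-- A subset `Λ` of a group `G` is an approximate subgroup if it is symmetric, contains the
identity and `Λ·Λ ⊆ Λ·F` for some finite set `F ⊆ G`. -/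
def IsApproximateSubgroupFin {G : Type*} [Group G] (Λ : Set G) : Prop :=
  Λ⁻¹ = Λ ∧ (1 : G) ∈ Λ ∧ ∃ F : Set G, F.Finite ∧ Λ * Λ ⊆ Λ * F

/-- `Λ^∞ = ⋃_{k ≥ 1} Λ^k`. -/
def infPowers {G : Type*} [Group G] (Λ : Set G) : Set G :=
  ⋃ n : ℕ, Λ ^ (n + 1)

/-!
Cover `Ξ ^ j` by finitely many right translates `Ξ * f` with `f ∈ F ^ (j - 1)`, where
`Ξ * Ξ ⊆ Ξ * F`, and pick one element of `ker_j ρ` in each translate that meets it. Any two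
elements `g, r` of `ker_j ρ` in the same translate satisfy `g * r⁻¹ ∈ Ξ * Ξ⁻¹ = Ξ ^ 2`, and
`ρ (g * r⁻¹) = ρ g * (ρ r)⁻¹ = 1` by `(k + 1)`-locality, so `g ∈ ker₂ ρ * r`.
-/

namespace Set

variable {G : Type*} [Group G]

theorem Finite.pow_s6 {F : Set G} (hF : F.Finite) : ∀ n : ℕ, (F ^ n).Finite
  | 0 => by simp
  | n + 1 => by rw [pow_succ]; exact (hF.pow_s6 n).mul hF

theorem pow_succ_subset_mul_pow_of_mul_self_subset_s6 {A F : Set G} (hAF : A * A ⊆ A * F) :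
    ∀ n : ℕ, A ^ (n + 1) ⊆ A * F ^ n
  | 0 => by simp
  | n + 1 =>
    calc A ^ (n + 2) = A * A ^ (n + 1) := pow_succ' A (n + 1)
      _ ⊆ A * (A * F ^ n) := mul_subset_mul_left (pow_succ_subset_mul_pow_of_mul_self_subset_s6 hAF n)
      _ = A * A * F ^ n := (mul_assoc A A _).symm
      _ ⊆ A * F * F ^ n := mul_subset_mul_right hAF
      _ = A * F ^ (n + 1) := by rw [mul_assoc, ← pow_succ']

theorem exists_finite_subset_mul_inv_mem_of_subset_mul {S A F : Set G} (hF : F.Finite)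
    (hS : S ⊆ A * F) :
    ∃ R ⊆ S, R.Finite ∧ ∀ g ∈ S, ∃ r ∈ R, g * r⁻¹ ∈ A * A⁻¹ := by
  choose! rep hrepS hrepA using fun f (hf : ∃ s ∈ S, s * f⁻¹ ∈ A) => hf
  refine ⟨rep '' {f ∈ F | ∃ s ∈ S, s * f⁻¹ ∈ A}, ?_, (hF.subset (sep_subset _ _)).image rep, ?_⟩
  · rintro _ ⟨f, ⟨-, hf⟩, rfl⟩
    exact hrepS f hf
  · intro g hg
    obtain ⟨a, ha, f, hfF, rfl⟩ := hS hg
    have hf : ∃ s ∈ S, s * f⁻¹ ∈ A := ⟨a * f, hg, by simpa using ha⟩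
    refine ⟨rep f, ⟨f, ⟨hfF, hf⟩, rfl⟩, a, ha, (rep f * f⁻¹)⁻¹, inv_mem_inv.2 (hrepA f hf), ?_⟩
    group

end Set

namespace IsLocalMorphism

variable {G H : Type*} [Group G] [Group H] {Ξ : Set G} {Λ : Set H} {k : ℕ} {ρ : G → H}

theorem map_mul_inv (hρ : IsLocalMorphism Ξ Λ k ρ) {g h : G} (hg : g ∈ Ξ ^ k) (hh : h ∈ Ξ ^ k)
    (hgh : g * h⁻¹ ∈ Ξ ^ k) : ρ (g * h⁻¹) = ρ g * (ρ h)⁻¹ := by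
  have hmul := hρ.2.2 (g * h⁻¹) h hgh hh (by simpa using hg)
  rw [inv_mul_cancel_right] at hmul
  exact eq_mul_inv_of_mul_eq hmul.symm

end IsLocalMorphism

theorem partial_kernels_left_syndetic_general {G H : Type*} [Group G] [Group H]
    (Ξ : Set G) (Λ : Set H) (hΞ : IsApproximateSubgroupFin Ξ)
    (k : ℕ) (ρ : G → H)
    (hρ : IsLocalMorphism Ξ Λ (k + 1) ρ) :
    ∀ j : ℕ, 2 ≤ j → j ≤ k →
      ∃ F : Set G, F.Finite ∧ F ⊆ infPowers Ξ ∧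
        {g ∈ Ξ ^ j | ρ g = 1} ⊆ {g ∈ Ξ ^ 2 | ρ g = 1} * F := by
  obtain ⟨hΞsymm, hΞone, F, hF, hΞF⟩ := hΞ
  intro j hj2 hjk
  obtain ⟨m, rfl⟩ : ∃ m, j = m + 1 := ⟨j - 1, by omega⟩
  have hcover : {g ∈ Ξ ^ (m + 1) | ρ g = 1} ⊆ Ξ * F ^ m :=
    (Set.sep_subset _ _).trans (Set.pow_succ_subset_mul_pow_of_mul_self_subset_s6 hΞF m)
  obtain ⟨R, hRker, hR, hrep⟩ :=
    Set.exists_finite_subset_mul_inv_mem_of_subset_mul (hF.pow_s6 m) hcover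
  refine ⟨R, hR, fun r hr => Set.mem_iUnion.2 ⟨m, (hRker hr).1⟩, ?_⟩
  rintro g ⟨hgj, hρg⟩
  obtain ⟨r, hrR, hgr⟩ := hrep g ⟨hgj, hρg⟩
  obtain ⟨hrj, hρr⟩ := hRker hrR
  rw [hΞsymm, ← sq] at hgr
  have hlocal {n : ℕ} (hn : n ≤ k + 1) : Ξ ^ n ⊆ Ξ ^ (k + 1) := Set.pow_subset_pow_right hΞone hn
  have hρgr : ρ (g * r⁻¹) = 1 := by
    rw [hρ.map_mul_inv (hlocal (by omega) hgj) (hlocal (by omega) hrj) (hlocal (by omega) hgr),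
      hρg, hρr, inv_one, one_mul]
  exact ⟨g * r⁻¹, ⟨hgr, hρgr⟩, r, hrR, inv_mul_cancel_right g r⟩

theorem partial_kernels_left_syndetic {G H : Type*} [Group G] [Group H]
    (Ξ : Set G) (Λ : Set H) (hΞ : IsApproximateSubgroupFin Ξ) (hΛ : IsApproximateSubgroupFin Λ)
    (hcount : Ξ.Countable) (k : ℕ) (hk : 2 ≤ k) (ρ : G → H)
    (hρ : IsLocalMorphism Ξ Λ (k + 1) ρ) :
    ∀ j : ℕ, 2 ≤ j → j ≤ k →
      ∃ F : Set G, F.Finite ∧ F ⊆ infPowers Ξ ∧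
        {g ∈ Ξ ^ j | ρ g = 1} ⊆ {g ∈ Ξ ^ 2 | ρ g = 1} * F :=
  partial_kernels_left_syndetic_general Ξ Λ hΞ k ρ hρ
end

section
/- Let (Ξ, Ξ^∞) be an approximate group and let Λ ⊆ Ξ be a subset that is left-syndetic in Ξ (i.e. Ξ ⊆ Λ·F₁ for some finite set F₁), symmetric (Λ = Λ⁻¹), and contains the identity. Then Λ is an approximate subgroup of Ξ^∞; in particular there is a finite set F ⊆ Ξ^∞ with Λ·Λ ⊆ Λ·F. -/
/-!
Λ·Λ ⊆ Ξ·Ξ ⊆ Ξ·F₀ ⊆ Λ·F₁·F₀, so the finite set F₁·F₀ works for Λ. To make it lie in Ξ^∞, keep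
only those `t ∈ F₁·F₀` that are actually used, i.e. with `λ·t ∈ Λ·Λ` for some `λ ∈ Λ`: such a `t`
lies in `Λ⁻¹·Λ·Λ ⊆ Ξ³`.
-/

open Pointwise

section

variable {G : Type*} [Group G]

theorem pow_succ_subset_infPowers (Ξ : Set G) (n : ℕ) : Ξ ^ (n + 1) ⊆ infPowers Ξ :=
  Set.subset_iUnion (fun n : ℕ => Ξ ^ (n + 1)) n

theorem Set.subset_mul_inter_inv_mul {A B F : Set G} (h : B ⊆ A * F) :
    B ⊆ A * (F ∩ (A⁻¹ * B)) := by
  intro x hx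
  obtain ⟨a, ha, f, hf, rfl⟩ := h hx
  exact ⟨a, ha, f, ⟨hf, a⁻¹, Set.inv_mem_inv.mpr ha, a * f, hx, by group⟩, rfl⟩

theorem Set.mul_self_subset_of_subset_of_leftSyndetic {Λ Ξ F₀ F₁ : Set G} (hsub : Λ ⊆ Ξ)
    (hΞ : Ξ * Ξ ⊆ Ξ * F₀) (hsyn : Ξ ⊆ Λ * F₁) : Λ * Λ ⊆ Λ * (F₁ * F₀) :=
  calc Λ * Λ ⊆ Ξ * Ξ := Set.mul_subset_mul hsub hsub
    _ ⊆ Ξ * F₀ := hΞ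
    _ ⊆ Λ * F₁ * F₀ := Set.mul_subset_mul_right hsyn
    _ = Λ * (F₁ * F₀) := mul_assoc _ _ _

end

theorem left_syndetic_symmetric_subset_is_approximate {G : Type*} [Group G]
    (Ξ : Set G) (hΞ : IsApproximateSubgroup' Ξ) (Λ : Set G) (hsub : Λ ⊆ Ξ)
    (hsyn : ∃ F₁ : Set G, F₁.Finite ∧ Ξ ⊆ Λ * F₁)
    (hsym : Λ⁻¹ = Λ) (hone : (1 : G) ∈ Λ) :
    IsApproximateSubgroup' Λ ∧
      ∃ F : Set G, F.Finite ∧ F ⊆ infPowers Ξ ∧ Λ * Λ ⊆ Λ * F := by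
  obtain ⟨-, -, F₀, hF₀, hΞ⟩ := hΞ
  obtain ⟨F₁, hF₁, hsyn⟩ := hsyn
  set F := F₁ * F₀ ∩ (Λ⁻¹ * (Λ * Λ))
  have hcover : Λ * Λ ⊆ Λ * F :=
    Set.subset_mul_inter_inv_mul (Set.mul_self_subset_of_subset_of_leftSyndetic hsub hΞ hsyn)
  have hfin : F.Finite := (hF₁.mul hF₀).subset (Set.inter_subset_left)
  have hpow : F ⊆ infPowers Ξ :=
    calc F ⊆ Λ⁻¹ * (Λ * Λ) := Set.inter_subset_right
      _ ⊆ Ξ * (Ξ * Ξ) := by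
        rw [hsym]
        exact Set.mul_subset_mul hsub (Set.mul_subset_mul hsub hsub)
      _ = Ξ ^ (2 + 1) := by rw [pow_succ, pow_two, mul_assoc]
      _ ⊆ infPowers Ξ := pow_succ_subset_infPowers Ξ 2
  exact ⟨⟨hsym, hone, F, hfin, hcover⟩, F, hfin, hpow, hcover⟩
end

section
/- Let H be a locally compact Hausdorff topological group, let W ⊆ H be a relatively compact symmetric identity neighborhood (W = W⁻¹, 1 lies in the interior of W, and the closure of W is compact), and let ρ : Γ → H be a group homomorphism from a group Γ. Then ρ⁻¹(W) is an approximate subgroup of Γ. -/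
/-!
Choose a symmetric identity neighbourhood `V` with `V * V ⊆ W` and cover the compact set
`closure W * closure W` by finitely many translates `x • V`. For each translate meeting `ρ(Γ)` fix
one `γₓ` with `ρ γₓ ∈ x • V`. If `ρ g ∈ x • V`, then `ρ (γₓ⁻¹ * g) ∈ V⁻¹ * V ⊆ W`, so
`ρ⁻¹(W) * ρ⁻¹(W)` lies in finitely many left translates of `ρ⁻¹(W)`; inverting turns these into
right translates.
-/

open Pointwise

/-- A subset `Λ` of a group `G` is an approximate subgroup if it is symmetric, contains the
identity and `Λ·Λ ⊆ Λ·F` for some finite set `F ⊆ G`. -/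
def IsApproximateSubgroupSet {G : Type*} [Group G] (Λ : Set G) : Prop :=
  Λ⁻¹ = Λ ∧ (1 : G) ∈ Λ ∧ ∃ F : Set G, F.Finite ∧ Λ * Λ ⊆ Λ * F

theorem IsApproximateSubgroupSet.of_mul_subset_finite_mul {G : Type*} [Group G] {Λ F : Set G}
    (hsym : Λ⁻¹ = Λ) (hone : (1 : G) ∈ Λ) (hF : F.Finite) (hΛ : Λ * Λ ⊆ F * Λ) :
    IsApproximateSubgroupSet Λ := by
  refine ⟨hsym, hone, F⁻¹, hF.inv, ?_⟩
  calc Λ * Λ = (Λ * Λ)⁻¹ := by rw [mul_inv_rev, hsym]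
    _ ⊆ (F * Λ)⁻¹ := Set.inv_subset_inv.2 hΛ
    _ = Λ * F⁻¹ := by rw [mul_inv_rev, hsym]

theorem IsCompact.exists_finite_subset_mul_of_mem_nhds_one {G : Type*} [Group G]
    [TopologicalSpace G] [ContinuousConstSMul G G] {K V : Set G} (hK : IsCompact K)
    (hV : V ∈ nhds (1 : G)) : ∃ t : Set G, t.Finite ∧ K ⊆ t * V := by
  obtain ⟨t, -, hKt⟩ := hK.elim_nhds_subcover (· • V) fun _ _ => smul_mem_nhds_self.2 hV
  exact ⟨t, t.finite_toSet, hKt.trans_eq Set.iUnion_mul_left_image⟩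

theorem MonoidHom.exists_finite_preimage_subset_mul_preimage_inv_mul {Γ H : Type*} [Group Γ]
    [Group H] (ρ : Γ →* H) {S t V : Set H} (ht : t.Finite) (hS : S ⊆ t * V) :
    ∃ F : Set Γ, F.Finite ∧ ρ ⁻¹' S ⊆ F * ρ ⁻¹' (V⁻¹ * V) := by
  have : Finite {x // x ∈ t ∧ ∃ γ, ρ γ ∈ x • V} := (ht.subset fun _ h => h.1).to_subtype
  choose γ hγ using fun x : {x // x ∈ t ∧ ∃ γ, ρ γ ∈ x • V} => x.2.2
  refine ⟨Set.range γ, Set.finite_range γ, fun g hg => ?_⟩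
  obtain ⟨x, hx, v, hv, hxv⟩ := hS hg
  have hx' : x ∈ t ∧ ∃ γ, ρ γ ∈ x • V := ⟨hx, g, v, hv, hxv⟩
  obtain ⟨u, hu, hxu⟩ := hγ ⟨x, hx'⟩
  refine ⟨γ ⟨x, hx'⟩, Set.mem_range_self _, (γ ⟨x, hx'⟩)⁻¹ * g, ?_, mul_inv_cancel_left _ g⟩
  refine ⟨u⁻¹, Set.inv_mem_inv.2 hu, v, hv, ?_⟩
  simp only [smul_eq_mul] at hxu hxv ⊢
  rw [map_mul, map_inv, ← hxu, ← hxv]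
  group

theorem preimage_of_relatively_compact_symmetric_nbhd_general {Γ H : Type*} [Group Γ] [Group H]
    [TopologicalSpace H] [IsTopologicalGroup H]
    (W : Set H) (hWsym : W⁻¹ = W) (hWnhd : W ∈ nhds (1 : H))
    (hWcpt : IsCompact (closure W)) (ρ : Γ →* H) :
    IsApproximateSubgroupSet (⇑ρ ⁻¹' W) := by
  obtain ⟨V, hV, -, hVsym, hVW⟩ := exists_closed_nhds_one_inv_eq_mul_subset hWnhd
  obtain ⟨t, ht, hWWt⟩ := (hWcpt.mul hWcpt).exists_finite_subset_mul_of_mem_nhds_one hV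
  obtain ⟨F, hF, hWWF⟩ := ρ.exists_finite_preimage_subset_mul_preimage_inv_mul ht
    ((Set.mul_subset_mul subset_closure subset_closure).trans hWWt)
  have hsym : (ρ ⁻¹' W)⁻¹ = ρ ⁻¹' W := by
    ext g
    rw [Set.mem_inv, Set.mem_preimage, Set.mem_preimage, map_inv, ← Set.mem_inv, hWsym]
  refine .of_mul_subset_finite_mul hsym (by simpa using mem_of_mem_nhds hWnhd) hF ?_
  calc ρ ⁻¹' W * ρ ⁻¹' W ⊆ ρ ⁻¹' (W * W) := Set.preimage_mul_preimage_subset ρ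
    _ ⊆ F * ρ ⁻¹' (V⁻¹ * V) := hWWF
    _ ⊆ F * ρ ⁻¹' W := by rw [hVsym]; gcongr

theorem preimage_of_relatively_compact_symmetric_nbhd {Γ H : Type*} [Group Γ] [Group H]
    [TopologicalSpace H] [IsTopologicalGroup H] [LocallyCompactSpace H] [T2Space H]
    (W : Set H) (hWsym : W⁻¹ = W) (hWnhd : W ∈ nhds (1 : H))
    (hWcpt : IsCompact (closure W)) (ρ : Γ →* H) :
    IsApproximateSubgroupSet (⇑ρ ⁻¹' W) :=
  preimage_of_relatively_compact_symmetric_nbhd_general W hWsym hWnhd hWcpt ρ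
end

section
/- Let Γ be a countable group, let Λ ⊆ Γ be an approximate subgroup, let d̂ be a proper left-invariant metric on Γ (left-invariant with all balls finite), and let d be the restriction of d̂ to Λ. Then (Λ, d) is coarsely connected if and only if there exists a proper metric d' on Λ such that the identity map (Λ, d) → (Λ, d') is a coarse equivalence and (Λ, d') is large-scale geodesic. -/
open Pointwise Filter

section CoarsePath

variable {α : Type*} {S T : Set α} {d : α → α → ℝ} {c D : ℝ} {x y z : α} {n m : ℕ}
  {p q : ℕ → α}

def IsCoarsePath (S : Set α) (d : α → α → ℝ) (c : ℝ) (x y : α) (n : ℕ) (p : ℕ → α) :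
    Prop :=
  p 0 = x ∧ p n = y ∧ (∀ i ≤ n, p i ∈ S) ∧ ∀ i < n, d (p i) (p (i + 1)) ≤ c

def IsCoarselyConnected (S : Set α) (d : α → α → ℝ) (c : ℝ) : Prop :=
  ∀ x ∈ S, ∀ y ∈ S, ∃ (n : ℕ) (p : ℕ → α), IsCoarsePath S d c x y n p

namespace IsCoarsePath

lemma refl (hx : x ∈ S) : IsCoarsePath S d c x x 0 fun _ => x :=
  ⟨rfl, rfl, fun _ _ => hx, fun _ h => absurd h (Nat.not_lt_zero _)⟩

lemma single (hx : x ∈ S) (hy : y ∈ S) (h : d x y ≤ c) :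
    IsCoarsePath S d c x y 1 fun i => if i = 0 then x else y := by
  refine ⟨rfl, rfl, fun i _ => ?_, fun i hi => ?_⟩
  · dsimp only
    split_ifs
    exacts [hx, hy]
  · obtain rfl : i = 0 := by omega
    simpa using h

lemma rev (hsymm : ∀ a b, d a b = d b a) (h : IsCoarsePath S d c x y n p) :
    IsCoarsePath S d c y x n fun i => p (n - i) := by
  obtain ⟨h0, hn, hmem, hstep⟩ := h
  refine ⟨by simpa using hn, by simpa using h0, fun i _ => hmem _ (Nat.sub_le _ _),
    fun i hi => ?_⟩
  have hi' : n - i = n - (i + 1) + 1 := by omega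
  dsimp only
  rw [hi', hsymm]
  exact hstep _ (by omega)

lemma append (h₁ : IsCoarsePath S d c x y n p) (h₂ : IsCoarsePath S d c y z m q) :
    IsCoarsePath S d c x z (n + m) fun i => if i ≤ n then p i else q (i - n) := by
  obtain ⟨hp0, hpn, hpmem, hpstep⟩ := h₁
  obtain ⟨hq0, hqm, hqmem, hqstep⟩ := h₂
  refine ⟨by simp [hp0], ?_, fun i hi => ?_, fun i hi => ?_⟩
  · rcases Nat.eq_zero_or_pos m with rfl | hm
    · simp [hpn, ← hq0, hqm]
    · simpa [hm.ne'] using hqm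
  · dsimp only
    split_ifs with hin
    · exact hpmem i hin
    · exact hqmem _ (by omega)
  · rcases lt_trichotomy i n with hin | rfl | hin
    · simpa [hin, hin.le] using hpstep i hin
    · simpa [hpn, ← hq0] using hqstep 0 (by omega)
    · have hi : i + 1 - n = i - n + 1 := by omega
      simpa [hin.not_ge, hin.not_gt, hi] using hqstep (i - n) (by omega)

lemma dist_le (hself : ∀ a, d a a = 0) (htri : ∀ a b e, d a e ≤ d a b + d b e)
    (h : IsCoarsePath S d c x y n p) : d x y ≤ n * c := by
  obtain ⟨rfl, rfl, -, hstep⟩ := h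
  suffices ∀ k ≤ n, d (p 0) (p k) ≤ k * c from this n le_rfl
  intro k hk
  induction k with
  | zero => simp [hself]
  | succ k ih =>
    calc d (p 0) (p (k + 1)) ≤ d (p 0) (p k) + d (p k) (p (k + 1)) := htri _ _ _
      _ ≤ k * c + c := add_le_add (ih (by omega)) (hstep _ (by omega))
      _ = (k + 1 : ℕ) * c := by push_cast; ring

end IsCoarsePath

/-- The least length of a `c`-path in `S` from `x` to `y`; it is `0` (as `sInf ∅`) when there is
no such path. -/
noncomputable def coarseDist (S : Set α) (d : α → α → ℝ) (c : ℝ) (x y : α) : ℕ :=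
  sInf {n | ∃ p, IsCoarsePath S d c x y n p}

lemma coarseDist_le (h : IsCoarsePath S d c x y n p) : coarseDist S d c x y ≤ n :=
  Nat.sInf_le ⟨p, h⟩

lemma IsCoarselyConnected.exists_isCoarsePath_coarseDist (h : IsCoarselyConnected S d c)
    (hx : x ∈ S) (hy : y ∈ S) : ∃ p, IsCoarsePath S d c x y (coarseDist S d c x y) p :=
  Nat.sInf_mem (h x hx y hy)

lemma coarseDist_self (hx : x ∈ S) : coarseDist S d c x x = 0 :=
  Nat.eq_zero_of_le_zero (coarseDist_le (IsCoarsePath.refl hx))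

lemma coarseDist_comm (hsymm : ∀ a b, d a b = d b a) (x y : α) :
    coarseDist S d c x y = coarseDist S d c y x := by
  have key : ∀ a b,
      {n | ∃ p, IsCoarsePath S d c a b n p} ⊆ {n | ∃ p, IsCoarsePath S d c b a n p} :=
    fun _ _ _ ⟨_, hp⟩ => ⟨_, hp.rev hsymm⟩
  rw [coarseDist, coarseDist, (key x y).antisymm (key y x)]

namespace IsCoarselyConnected

lemma eq_of_coarseDist_eq_zero (hS : IsCoarselyConnected S d c) (hx : x ∈ S) (hy : y ∈ S)
    (h : coarseDist S d c x y = 0) : x = y := by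
  obtain ⟨p, hp0, hpn, -⟩ := hS.exists_isCoarsePath_coarseDist hx hy
  rw [← hp0, ← hpn, h]

lemma coarseDist_triangle (hS : IsCoarselyConnected S d c) (hx : x ∈ S) (hy : y ∈ S)
    (hz : z ∈ S) : coarseDist S d c x z ≤ coarseDist S d c x y + coarseDist S d c y z := by
  obtain ⟨p, hp⟩ := hS.exists_isCoarsePath_coarseDist hx hy
  obtain ⟨q, hq⟩ := hS.exists_isCoarsePath_coarseDist hy hz
  exact coarseDist_le (hp.append hq)

lemma dist_le_coarseDist_mul (hS : IsCoarselyConnected S d c) (hself : ∀ a, d a a = 0)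
    (htri : ∀ a b e, d a e ≤ d a b + d b e) (hx : x ∈ S) (hy : y ∈ S) :
    d x y ≤ coarseDist S d c x y * c := by
  obtain ⟨p, hp⟩ := hS.exists_isCoarsePath_coarseDist hx hy
  exact hp.dist_le hself htri

lemma finite_setOf_coarseDist_le (hS : IsCoarselyConnected S d c) (hself : ∀ a, d a a = 0)
    (htri : ∀ a b e, d a e ≤ d a b + d b e) (hc : 0 < c)
    (hproper : ∀ r, {y | d x y ≤ r}.Finite) (hx : x ∈ S) (r : ℝ) :
    {y ∈ S | (coarseDist S d c x y : ℝ) ≤ r}.Finite := by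
  refine (hproper (r * c)).subset fun y ⟨hy, hr⟩ => ?_
  calc d x y ≤ coarseDist S d c x y * c := hS.dist_le_coarseDist_mul hself htri hx hy
    _ ≤ r * c := by gcongr

lemma exists_isCoarsePath_coarseDist_one (hS : IsCoarselyConnected S d c) (hx : x ∈ S)
    (hy : y ∈ S) :
    ∃ p, IsCoarsePath S (fun a b => (coarseDist S d c a b : ℝ)) 1 x y
      (coarseDist S d c x y) p := by
  obtain ⟨p, hp0, hpn, hpmem, hpstep⟩ := hS.exists_isCoarsePath_coarseDist hx hy
  refine ⟨p, hp0, hpn, hpmem, fun i hi => ?_⟩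
  dsimp only
  exact_mod_cast coarseDist_le (IsCoarsePath.single (hpmem i hi.le) (hpmem _ hi) (hpstep i hi))

lemma of_le_of_tendsto {d' : α → α → ℝ} {Φ : ℝ → ℝ} (hS : IsCoarselyConnected S d' c)
    (hΦ : Tendsto Φ atTop atTop) (hle : ∀ x ∈ S, ∀ y ∈ S, Φ (d x y) ≤ d' x y) :
    ∃ c' > 0, IsCoarselyConnected S d c' := by
  obtain ⟨R, hR⟩ := tendsto_atTop_atTop.mp hΦ (c + 1)
  refine ⟨max R 1, by positivity, fun x hx y hy => ?_⟩
  obtain ⟨n, p, hp0, hpn, hpmem, hpstep⟩ := hS x hx y hy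
  refine ⟨n, p, hp0, hpn, hpmem, fun i hi => le_max_of_le_left (not_lt.mp fun hlt => ?_)⟩
  have := hle _ (hpmem i hi.le) _ (hpmem _ hi)
  linarith [hR _ hlt.le, hpstep i hi]

end IsCoarselyConnected

lemma exists_retraction (hself : ∀ a, d a a = 0) (hD : 0 ≤ D)
    (hnear : ∀ a ∈ S, ∃ b ∈ T, d a b ≤ D) :
    ∃ r : α → α, (∀ b ∈ T, r b = b) ∧ ∀ a ∈ S, r a ∈ T ∧ d a (r a) ≤ D := by
  classical
  choose! σ hσT hσ using hnear
  refine ⟨fun a => if a ∈ T then a else σ a, fun b hb => if_pos hb, fun a ha => ?_⟩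
  dsimp only
  split_ifs with haT
  · exact ⟨haT, (hself a).trans_le hD⟩
  · exact ⟨hσT a ha, hσ a ha⟩

lemma IsCoarsePath.exists_of_near (hself : ∀ a, d a a = 0) (hsymm : ∀ a b, d a b = d b a)
    (htri : ∀ a b e, d a e ≤ d a b + d b e) (hD : 0 ≤ D)
    (hnear : ∀ a ∈ S, ∃ b ∈ T, d a b ≤ D) (h : IsCoarsePath S d c x y n p) (hx : x ∈ T)
    (hy : y ∈ T) : ∃ q, IsCoarsePath T d (c + 2 * D) x y n q := by
  obtain ⟨r, hrT, hr⟩ := exists_retraction hself hD hnear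
  obtain ⟨hp0, hpn, hpmem, hpstep⟩ := h
  refine ⟨r ∘ p, by simp [hp0, hrT x hx], by simp [hpn, hrT y hy],
    fun i hi => (hr _ (hpmem i hi)).1, fun i hi => ?_⟩
  have h₁ := (hr _ (hpmem i hi.le)).2
  have h₂ := (hr _ (hpmem _ hi)).2
  calc d (r (p i)) (r (p (i + 1)))
      ≤ d (r (p i)) (p i) + (d (p i) (p (i + 1)) + d (p (i + 1)) (r (p (i + 1)))) :=
        (htri _ _ _).trans (add_le_add_right (htri _ _ _) _)
    _ ≤ D + (c + D) := by rw [hsymm]; gcongr; exact hpstep i hi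
    _ = c + 2 * D := by ring

end CoarsePath

section Group

variable {G : Type*} [Group G] {Λ : Set G} {d : G → G → ℝ} {c : ℝ} {x y : G} {n : ℕ}
  {p : ℕ → G}

lemma IsCoarsePath.mul_left (hinv : ∀ g a b, d (g * a) (g * b) = d a b)
    (h : IsCoarsePath Λ d c x y n p) (g : G) :
    IsCoarsePath (g • Λ) d c (g * x) (g * y) n fun i => g * p i := by
  obtain ⟨hp0, hpn, hpmem, hpstep⟩ := h
  exact ⟨congrArg (g * ·) hp0, congrArg (g * ·) hpn,
    fun i hi => Set.smul_mem_smul_set (hpmem i hi), fun i hi => (hinv _ _ _).trans_le (hpstep i hi)⟩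

lemma exists_monotone_bound_inv_mul (hinv : ∀ g a b, d (g * a) (g * b) = d a b)
    (hproper : ∀ r, {g | d 1 g ≤ r}.Finite) (N : G → ℕ) :
    ∃ Φ : ℝ → ℝ, Monotone Φ ∧ ∀ x y, (N (x⁻¹ * y) : ℝ) ≤ Φ (d x y) := by
  refine ⟨fun r => ((hproper r).toFinset.sup N : ℕ), fun r s hrs => ?_, fun x y => ?_⟩
  · refine Nat.cast_le.mpr (Finset.sup_mono ?_)
    exact Set.Finite.toFinset_subset_toFinset.mpr fun g (hg : d 1 g ≤ r) => hg.trans hrs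
  · refine Nat.cast_le.mpr (Finset.le_sup ((Set.Finite.mem_toFinset _).mpr ?_))
    simpa using (hinv x 1 (x⁻¹ * y)).ge

namespace IsApproximateSubgroupFin

lemma inv_mem (hΛ : IsApproximateSubgroupFin Λ) (hx : x ∈ Λ) : x⁻¹ ∈ Λ :=
  hΛ.1 ▸ Set.inv_mem_inv.mpr hx

lemma exists_finite_mul_mul_subset (hΛ : IsApproximateSubgroupFin Λ) :
    ∃ F : Set G, F.Finite ∧ Λ * Λ * Λ ⊆ Λ * F := by
  obtain ⟨-, -, F, hF, hsub⟩ := hΛ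
  refine ⟨F * F, hF.mul hF, ?_⟩
  calc Λ * Λ * Λ = Λ * (Λ * Λ) := mul_assoc _ _ _
    _ ⊆ Λ * (Λ * F) := Set.mul_subset_mul_left hsub
    _ = Λ * Λ * F := (mul_assoc _ _ _).symm
    _ ⊆ Λ * F * F := Set.mul_subset_mul_right hsub
    _ = Λ * (F * F) := mul_assoc _ _ _

lemma exists_near_mul_mul (hΛ : IsApproximateSubgroupFin Λ)
    (hinv : ∀ g a b, d (g * a) (g * b) = d a b) :
    ∃ D, 0 ≤ D ∧ ∀ z ∈ Λ * Λ * Λ, ∃ l ∈ Λ, d z l ≤ D := by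
  obtain ⟨F, hF, hsub⟩ := hΛ.exists_finite_mul_mul_subset
  obtain ⟨D, hD⟩ := (hF.image fun f => d f 1).bddAbove
  refine ⟨max D 0, le_max_right _ _, fun z hz => ?_⟩
  obtain ⟨l, hl, f, hf, rfl⟩ := hsub hz
  refine ⟨l, hl, le_max_of_le_left ?_⟩
  calc d (l * f) l = d f 1 := by simpa using hinv l f 1
    _ ≤ D := hD ⟨f, hf, rfl⟩

lemma exists_isCoarsePath_length_inv_mul (hΛ : IsApproximateSubgroupFin Λ)
    (hself : ∀ a, d a a = 0) (hsymm : ∀ a b, d a b = d b a)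
    (htri : ∀ a b e, d a e ≤ d a b + d b e) (hinv : ∀ g a b, d (g * a) (g * b) = d a b)
    (hc : 0 < c) (hconn : IsCoarselyConnected Λ d c) :
    ∃ c' > 0, ∃ N : G → ℕ,
      ∀ x ∈ Λ, ∀ y ∈ Λ, ∃ p, IsCoarsePath Λ d c' x y (N (x⁻¹ * y)) p := by
  obtain ⟨D, hD, hnear⟩ := hΛ.exists_near_mul_mul hinv
  have hpaths : ∀ g ∈ Λ * Λ,
      ∃ n, ∃ l ∈ Λ, ∃ m ∈ Λ, l⁻¹ * m = g ∧ ∃ p, IsCoarsePath Λ d c l m n p := by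
    rintro _ ⟨a, ha, b, hb, rfl⟩
    obtain ⟨n, p, hp⟩ := hconn _ (hΛ.inv_mem ha) _ hb
    exact ⟨n, a⁻¹, hΛ.inv_mem ha, b, hb, by rw [inv_inv], p, hp⟩
  choose! N hN using hpaths
  refine ⟨c + 2 * D, by positivity, N, fun x hx y hy => ?_⟩
  obtain ⟨l, hl, m, hm, hlm, p, hp⟩ := hN _ (Set.mul_mem_mul (hΛ.inv_mem hx) hy)
  have hmove := hp.mul_left hinv (x * l⁻¹)
  rw [inv_mul_cancel_right, mul_assoc, hlm, mul_inv_cancel_left] at hmove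
  refine hmove.exists_of_near hself hsymm htri hD (fun z hz => hnear z ?_) hx hy
  obtain ⟨w, hw, rfl⟩ := hz
  exact Set.mul_mem_mul (Set.mul_mem_mul hx (hΛ.inv_mem hl)) hw

end IsApproximateSubgroupFin

end Group

theorem coarsely_connected_iff_large_scale_geodesic_representative_general {Γ : Type*} [Group Γ]
    (Λ : Set Γ) (hΛ : IsApproximateSubgroupFin Λ)
    (dh : Γ → Γ → ℝ)
    (dh_self : ∀ x : Γ, dh x x = 0)
    (dh_symm : ∀ x y : Γ, dh x y = dh y x)
    (dh_triangle : ∀ x y z : Γ, dh x z ≤ dh x y + dh y z)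
    (dh_leftinv : ∀ g x y : Γ, dh (g * x) (g * y) = dh x y)
    (dh_proper : ∀ (x : Γ) (r : ℝ), {y : Γ | dh x y ≤ r}.Finite) :
    -- (Λ, d) is coarsely connected
    (∃ c : ℝ, 0 < c ∧ ∀ x ∈ Λ, ∀ y ∈ Λ, ∃ (n : ℕ) (p : ℕ → Γ),
        p 0 = x ∧ p n = y ∧ (∀ i ≤ n, p i ∈ Λ) ∧ ∀ i < n, dh (p i) (p (i + 1)) ≤ c) ↔
    -- there is a proper metric d' on Λ, coarsely equivalent to d, which is large-scale geodesic
    (∃ d' : Γ → Γ → ℝ,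
        (∀ x ∈ Λ, d' x x = 0) ∧
        (∀ x ∈ Λ, ∀ y ∈ Λ, d' x y = 0 → x = y) ∧
        (∀ x ∈ Λ, ∀ y ∈ Λ, d' x y = d' y x) ∧
        (∀ x ∈ Λ, ∀ y ∈ Λ, ∀ z ∈ Λ, d' x z ≤ d' x y + d' y z) ∧
        -- d' is proper
        (∀ x ∈ Λ, ∀ r : ℝ, {y ∈ Λ | d' x y ≤ r}.Finite) ∧
        -- the identity map (Λ, d) → (Λ, d') is a coarse equivalence
        (∃ Φm Φp : ℝ → ℝ, Monotone Φm ∧ Monotone Φp ∧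
            Filter.Tendsto Φm Filter.atTop Filter.atTop ∧
            ∀ x ∈ Λ, ∀ y ∈ Λ, Φm (dh x y) ≤ d' x y ∧ d' x y ≤ Φp (dh x y)) ∧
        -- (Λ, d') is large-scale geodesic
        (∃ a b c : ℝ, 0 < a ∧ 0 < b ∧ 0 < c ∧ ∀ x ∈ Λ, ∀ y ∈ Λ, ∃ n : ℕ,
            (n : ℝ) ≤ a * d' x y + b ∧ ∃ p : ℕ → Γ,
              p 0 = x ∧ p n = y ∧ (∀ i ≤ n, p i ∈ Λ) ∧ ∀ i < n, d' (p i) (p (i + 1)) ≤ c)) := by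
  constructor
  · rintro ⟨c, hc, hconn⟩
    obtain ⟨c', hc', N, hN⟩ :=
      hΛ.exists_isCoarsePath_length_inv_mul dh_self dh_symm dh_triangle dh_leftinv hc hconn
    have hS : IsCoarselyConnected Λ dh c' := fun x hx y hy => ⟨_, hN x hx y hy⟩
    obtain ⟨Φ, hΦ, hNΦ⟩ := exists_monotone_bound_inv_mul dh_leftinv (dh_proper 1) N
    refine ⟨fun x y => coarseDist Λ dh c' x y, fun x hx => by simp [coarseDist_self hx],
      fun x hx y hy h => hS.eq_of_coarseDist_eq_zero hx hy (Nat.cast_eq_zero.mp h),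
      fun x _ y _ => congrArg Nat.cast (coarseDist_comm dh_symm x y),
      fun x hx y hy z hz =>
        (Nat.cast_le.mpr (hS.coarseDist_triangle hx hy hz)).trans_eq (Nat.cast_add _ _),
      fun x hx => hS.finite_setOf_coarseDist_le dh_self dh_triangle hc' (dh_proper x) hx,
      ⟨fun t => t / c', Φ, fun s t hst => div_le_div_of_nonneg_right hst hc'.le, hΦ,
        tendsto_id.atTop_div_const hc', fun x hx y hy => ⟨?_, ?_⟩⟩,
      ⟨1, 1, 1, one_pos, one_pos, one_pos, fun x hx y hy =>
        ⟨_, by linarith, hS.exists_isCoarsePath_coarseDist_one hx hy⟩⟩⟩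
    · exact (div_le_iff₀ hc').mpr (hS.dist_le_coarseDist_mul dh_self dh_triangle hx hy)
    · obtain ⟨p, hp⟩ := hN x hx y hy
      exact (Nat.cast_le.mpr (coarseDist_le hp)).trans (hNΦ x y)
  · rintro ⟨d', -, -, -, -, -, ⟨Φm, _, -, -, hΦm, hle⟩, _, _, c, -, -, -, hgeod⟩
    have hS : IsCoarselyConnected Λ d' c := fun x hx y hy => by
      obtain ⟨n, -, p, hp⟩ := hgeod x hx y hy
      exact ⟨n, p, hp⟩
    exact hS.of_le_of_tendsto hΦm fun x hx y hy => (hle x hx y hy).1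

/-- `dh` is a proper left-invariant metric on the countable group `Γ`, `d = dh|_{Λ×Λ}`.
The statement: `(Λ, d)` is coarsely connected iff there is a proper metric `d'` on `Λ`,
coarsely equivalent to `d` via the identity, such that `(Λ, d')` is large-scale geodesic. -/
theorem coarsely_connected_iff_large_scale_geodesic_representative {Γ : Type*} [Group Γ]
    [Countable Γ] (Λ : Set Γ) (hΛ : IsApproximateSubgroupFin Λ)
    (dh : Γ → Γ → ℝ)
    (dh_self : ∀ x : Γ, dh x x = 0)
    (dh_eq : ∀ x y : Γ, dh x y = 0 → x = y)
    (dh_symm : ∀ x y : Γ, dh x y = dh y x)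
    (dh_triangle : ∀ x y z : Γ, dh x z ≤ dh x y + dh y z)
    (dh_leftinv : ∀ g x y : Γ, dh (g * x) (g * y) = dh x y)
    (dh_proper : ∀ (x : Γ) (r : ℝ), {y : Γ | dh x y ≤ r}.Finite) :
    -- (Λ, d) is coarsely connected
    (∃ c : ℝ, 0 < c ∧ ∀ x ∈ Λ, ∀ y ∈ Λ, ∃ (n : ℕ) (p : ℕ → Γ),
        p 0 = x ∧ p n = y ∧ (∀ i ≤ n, p i ∈ Λ) ∧ ∀ i < n, dh (p i) (p (i + 1)) ≤ c) ↔
    -- there is a proper metric d' on Λ, coarsely equivalent to d, which is large-scale geodesic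
    (∃ d' : Γ → Γ → ℝ,
        (∀ x ∈ Λ, d' x x = 0) ∧
        (∀ x ∈ Λ, ∀ y ∈ Λ, d' x y = 0 → x = y) ∧
        (∀ x ∈ Λ, ∀ y ∈ Λ, d' x y = d' y x) ∧
        (∀ x ∈ Λ, ∀ y ∈ Λ, ∀ z ∈ Λ, d' x z ≤ d' x y + d' y z) ∧
        -- d' is proper
        (∀ x ∈ Λ, ∀ r : ℝ, {y ∈ Λ | d' x y ≤ r}.Finite) ∧
        -- the identity map (Λ, d) → (Λ, d') is a coarse equivalence
        (∃ Φm Φp : ℝ → ℝ, Monotone Φm ∧ Monotone Φp ∧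
            Filter.Tendsto Φm Filter.atTop Filter.atTop ∧
            ∀ x ∈ Λ, ∀ y ∈ Λ, Φm (dh x y) ≤ d' x y ∧ d' x y ≤ Φp (dh x y)) ∧
        -- (Λ, d') is large-scale geodesic
        (∃ a b c : ℝ, 0 < a ∧ 0 < b ∧ 0 < c ∧ ∀ x ∈ Λ, ∀ y ∈ Λ, ∃ n : ℕ,
            (n : ℝ) ≤ a * d' x y + b ∧ ∃ p : ℕ → Γ,
              p 0 = x ∧ p n = y ∧ (∀ i ≤ n, p i ∈ Λ) ∧ ∀ i < n, d' (p i) (p (i + 1)) ≤ c)) :=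
  coarsely_connected_iff_large_scale_geodesic_representative_general Λ hΛ dh dh_self dh_symm
    dh_triangle dh_leftinv dh_proper
end

section
/- Let (Λ, Λ^∞) be an approximate group, let (X, d) be a coarsely connected proper pseudo-metric space with basepoint x₀, and let ρ : Λ^∞ → (X → X) be a quasi-isometric quasi-action of (Λ, Λ^∞) on X. (i) If ρ is cobounded, i.e. the quasi-orbit {ρ(λ)(x₀) : λ ∈ Λ} is relatively dense in X, then there exists R > 0 such that the set F := {μ ∈ Λ² : B(x₀, R) ∩ ρ(μ)(B(x₀, R)) ≠ ∅} generates the group Λ^∞. (ii) If moreover ρ is proper, i.e. for every R > 0 the set {λ ∈ Λ : B(x₀, R) ∩ ρ(λ)(B(x₀, R)) ≠ ∅} is finite, then Λ^∞ is a finitely generated group. -/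
/-!
Cover `X` by the `D`-neighbourhoods of the quasi-orbit `ρ(Λ) x₀` and walk along a `c`-chain from
`x₀` to `ρ(λ) x₀`: the orbit points `ρ(g) x₀`, `ρ(h) x₀` approximating consecutive points of the
chain are uniformly close, so `ρ(g⁻¹h)` moves `x₀` a bounded amount and `g⁻¹h` lies in `F`.
Hence `λ` is a product of elements of `F`. For (ii), write `μ ∈ F ⊆ Λ²` as `μ = b f` with `b ∈ Λ`
and `f` in the finite set given by `Λ² ⊆ ΛF`; for `y ∈ B(x₀, R)` with `ρ(μ) y ∈ B(x₀, R)`, the point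
`ρ(f) y` lies near `x₀` and `b` maps it near `ρ(μ) y`, so `b` ranges over a finite set by properness.
-/

open Pointwise

section QuasiAction

variable {G X : Type*} [Group G] [PseudoMetricSpace X]

def returnSet (ρ : G → X → X) (x₀ : X) (S : Set G) (R : ℝ) : Set G :=
  {g | g ∈ S ∧ ∃ y : X, dist y x₀ < R ∧ dist (ρ g y) x₀ < R}

theorem coarse_chain_induction {c : ℝ}
    (hcc : ∀ x y : X, ∃ (n : ℕ) (p : ℕ → X),
      p 0 = x ∧ p n = y ∧ ∀ i < n, dist (p i) (p (i + 1)) ≤ c)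
    {P : X → Prop} {x₀ : X} (h₀ : P x₀) (hstep : ∀ x y, dist x y ≤ c → P x → P y) (y : X) :
    P y := by
  obtain ⟨n, p, rfl, rfl, hp⟩ := hcc x₀ y
  suffices ∀ i ≤ n, P (p i) from this n le_rfl
  intro i
  induction i with
  | zero => exact fun _ => h₀
  | succ i ih => exact fun hi => hstep _ _ (hp i hi) (ih (by omega))

theorem dist_apply_inv_mul_le (ρ : G → X → X) {S : Set G} {K C C' : ℝ}
    (hup : ∀ g ∈ S, ∀ x y, dist (ρ g x) (ρ g y) ≤ K * dist x y + C)
    (hmul : ∀ g ∈ S, ∀ h ∈ S, ∀ x, dist (ρ g (ρ h x)) (ρ (g * h) x) < C')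
    {g h : G} (hg : g ∈ S) (hg' : g⁻¹ ∈ S) (hh : h ∈ S) (x : X) :
    dist (ρ (g⁻¹ * h) x) (ρ 1 x) ≤ K * dist (ρ h x) (ρ g x) + C + 2 * C' := by
  have h₁ := hmul _ hg' _ hh x
  have h₂ := hup _ hg' (ρ h x) (ρ g x)
  have h₃ := hmul _ hg' _ hg x
  rw [inv_mul_cancel] at h₃
  have := dist_triangle4 (ρ (g⁻¹ * h) x) (ρ g⁻¹ (ρ h x)) (ρ g⁻¹ (ρ g x)) (ρ 1 x)
  rw [dist_comm (ρ (g⁻¹ * h) x) (ρ g⁻¹ _)] at this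
  linarith

theorem closure_returnSet_sq_eq (ρ : G → X → X) (x₀ : X) {Λ : Set G} {c D K C C' R : ℝ}
    (hcc : ∀ x y : X, ∃ (n : ℕ) (p : ℕ → X),
      p 0 = x ∧ p n = y ∧ ∀ i < n, dist (p i) (p (i + 1)) ≤ c)
    (hc : 0 ≤ c) (hinv : Λ⁻¹ = Λ) (hone : 1 ∈ Λ)
    (hcob : ∀ x : X, ∃ g ∈ Λ, dist x (ρ g x₀) ≤ D) (hK : 0 ≤ K)
    (hup : ∀ g ∈ Λ, ∀ x y, dist (ρ g x) (ρ g y) ≤ K * dist x y + C)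
    (hmul : ∀ g ∈ Λ, ∀ h ∈ Λ, ∀ x, dist (ρ g (ρ h x)) (ρ (g * h) x) < C')
    (hR₀ : 0 < R) (hR : K * (2 * D + c) + C + 2 * C' + dist (ρ 1 x₀) x₀ < R) :
    Subgroup.closure (returnSet ρ x₀ (Λ ^ 2) R) = Subgroup.closure Λ := by
  set H := Subgroup.closure (returnSet ρ x₀ (Λ ^ 2) R)
  have hD : 0 ≤ D := dist_nonneg.trans (hcob x₀).choose_spec.2
  have hstep : ∀ g ∈ Λ, ∀ h ∈ Λ, dist (ρ h x₀) (ρ g x₀) ≤ 2 * D + c →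
      g⁻¹ * h ∈ returnSet ρ x₀ (Λ ^ 2) R := by
    intro g hg h hh hgh
    have hg' : g⁻¹ ∈ Λ := Set.mem_inv.mp (hinv.symm ▸ hg)
    refine ⟨sq Λ ▸ Set.mul_mem_mul hg' hh, x₀, by simpa using hR₀, ?_⟩
    have h₁ := dist_apply_inv_mul_le ρ hup hmul hg hg' hh x₀
    have h₂ := dist_triangle (ρ (g⁻¹ * h) x₀) (ρ 1 x₀) x₀
    have h₃ := mul_le_mul_of_nonneg_left hgh hK
    linarith
  -- start the chains at `ρ 1 x₀`, which is approximated by `1 ∈ H`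
  have horbit : ∀ x : X, ∀ h ∈ Λ, dist x (ρ h x₀) ≤ D → h ∈ H := by
    refine coarse_chain_induction hcc (x₀ := ρ 1 x₀) ?_ ?_
    · intro h hh hdist
      have := hstep 1 hone h hh (by rw [dist_comm]; linarith)
      simpa using Subgroup.subset_closure this
    · intro x y hxy hx h hh hy
      obtain ⟨g, hg, hgx⟩ := hcob x
      have hgh : dist (ρ h x₀) (ρ g x₀) ≤ 2 * D + c := by
        have := dist_triangle4 (ρ h x₀) y x (ρ g x₀)
        rw [dist_comm (ρ h x₀) y, dist_comm y x] at this
        linarith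
      simpa using H.mul_mem (hx g hg hgx) (Subgroup.subset_closure (hstep g hg h hh hgh))
  refine le_antisymm ?_ <|
    (Subgroup.closure_le _).mpr fun h hh => horbit (ρ h x₀) h hh (by simpa using hD)
  calc H ≤ Subgroup.closure (Λ ^ 2) := Subgroup.closure_mono fun _ hμ => hμ.1
    _ = Subgroup.closure Λ := Subgroup.closure_pow hone two_ne_zero

theorem returnSet_sq_subset_mul (ρ : G → X → X) (x₀ : X) {Λ F : Set G} {K C C' M R R' : ℝ}
    (hinv : Λ⁻¹ = Λ) (hone : 1 ∈ Λ) (hF : Λ * Λ ⊆ Λ * F) (hK : 0 ≤ K)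
    (hup : ∀ g ∈ Λ ^ 3, ∀ x y, dist (ρ g x) (ρ g y) ≤ K * dist x y + C)
    (hmul : ∀ g ∈ Λ ^ 3, ∀ h ∈ Λ ^ 3, ∀ x, dist (ρ g (ρ h x)) (ρ (g * h) x) < C')
    (hM : ∀ f ∈ F, dist (ρ f x₀) x₀ ≤ M) (hR₁ : K * R + C + M < R') (hR₂ : C' + R ≤ R') :
    returnSet ρ x₀ (Λ ^ 2) R ⊆ returnSet ρ x₀ Λ R' * F := by
  rintro μ ⟨hμ, y, hy, hμy⟩
  obtain ⟨b, hb, f, hf, rfl⟩ := hF (sq Λ ▸ hμ)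
  have hb₃ : b ∈ Λ ^ 3 := Set.subset_pow hone (by norm_num) hb
  have hf₃ : f ∈ Λ ^ 3 := by
    rw [show f = b⁻¹ * (b * f) by group, pow_succ']
    exact Set.mul_mem_mul (Set.mem_inv.mp (hinv.symm ▸ hb)) hμ
  -- `b` brings `ρ(f) y`, a point near `x₀`, back near `ρ(b f) y = ρ(μ) y`
  refine Set.mul_mem_mul ⟨hb, ρ f y, ?_, ?_⟩ hf
  · have h₁ := hup f hf₃ y x₀
    have h₂ := dist_triangle (ρ f y) (ρ f x₀) x₀
    have h₃ := mul_le_mul_of_nonneg_left hy.le hK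
    linarith [hM f hf]
  · have h₁ := hmul b hb₃ f hf₃ y
    have h₂ := dist_triangle (ρ b (ρ f y)) (ρ (b * f) y) x₀
    linarith

theorem finite_returnSet_sq (ρ : G → X → X) (x₀ : X) {Λ : Set G} {K C C' : ℝ}
    (hΛ : IsApproximateSubgroup' Λ) (hK : 0 ≤ K)
    (hup : ∀ g ∈ Λ ^ 3, ∀ x y, dist (ρ g x) (ρ g y) ≤ K * dist x y + C)
    (hmul : ∀ g ∈ Λ ^ 3, ∀ h ∈ Λ ^ 3, ∀ x, dist (ρ g (ρ h x)) (ρ (g * h) x) < C')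
    (hproper : ∀ R, 0 < R → (returnSet ρ x₀ Λ R).Finite) (R : ℝ) :
    (returnSet ρ x₀ (Λ ^ 2) R).Finite := by
  obtain ⟨hinv, hone, F, hFfin, hF⟩ := hΛ
  obtain ⟨M, hM⟩ := (hFfin.image fun f => dist (ρ f x₀) x₀).bddAbove
  obtain ⟨R', hR'⟩ := exists_gt (max (max (K * R + C + M) (C' + R)) 0)
  simp only [max_lt_iff] at hR'
  exact ((hproper R' hR'.2).mul hFfin).subset <| returnSet_sq_subset_mul ρ x₀ hinv hone hF hK
    hup hmul (fun f hf => hM (Set.mem_image_of_mem _ hf)) hR'.1.1 hR'.1.2.le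

end QuasiAction

theorem milnor_schwarz_finite_generation_general {G X : Type*} [Group G] [PseudoMetricSpace X]
    (hcc : ∃ c : ℝ, 0 < c ∧ ∀ x y : X, ∃ (n : ℕ) (p : ℕ → X),
        p 0 = x ∧ p n = y ∧ ∀ i < n, dist (p i) (p (i + 1)) ≤ c)
    (Λ : Set G) (hΛ : IsApproximateSubgroup' Λ)
    (x₀ : X) (ρ : G → X → X) (K C C' : ℕ → ℝ)
    (hK : ∀ k : ℕ, 1 ≤ K k)
    -- each ρ(λ), λ ∈ Λ^k, is a (K_k, C_k, C_k')-quasi-isometry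
    (hqi : ∀ k : ℕ, 1 ≤ k → ∀ g ∈ Λ ^ k,
        (∀ x y : X, (K k)⁻¹ * dist x y - C k ≤ dist (ρ g x) (ρ g y) ∧
            dist (ρ g x) (ρ g y) ≤ K k * dist x y + C k) ∧
        ∀ y : X, ∃ x : X, dist y (ρ g x) ≤ C' k)
    -- ρ is multiplicative up to error C_k' on Λ^k
    (hcomp : ∀ k : ℕ, 1 ≤ k → ∀ g ∈ Λ ^ k, ∀ h ∈ Λ ^ k, ∀ x : X,
        dist (ρ g (ρ h x)) (ρ (g * h) x) < C' k)
    -- ρ is cobounded: the quasi-orbit of x₀ is relatively dense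
    (hcob : ∃ D : ℝ, ∀ x : X, ∃ g ∈ Λ, dist x (ρ g x₀) ≤ D) :
    (∃ R : ℝ, 0 < R ∧
        Subgroup.closure {μ : G | μ ∈ Λ ^ 2 ∧ ∃ y : X, dist y x₀ < R ∧ dist (ρ μ y) x₀ < R} =
          Subgroup.closure Λ) ∧
    ((∀ R : ℝ, 0 < R →
        {g : G | g ∈ Λ ∧ ∃ y : X, dist y x₀ < R ∧ dist (ρ g y) x₀ < R}.Finite) →
      (Subgroup.closure Λ).FG) := by
  obtain ⟨c, hc, hcc⟩ := hcc
  obtain ⟨D, hcob⟩ := hcob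
  have hK₀ : ∀ k, 0 ≤ K k := fun k => zero_le_one.trans (hK k)
  have hup : ∀ k, 1 ≤ k → ∀ g ∈ Λ ^ k, ∀ x y, dist (ρ g x) (ρ g y) ≤ K k * dist x y + C k :=
    fun k hk g hg x y => ((hqi k hk g hg).1 x y).2
  obtain ⟨R, hR⟩ := exists_gt (max (K 1 * (2 * D + c) + C 1 + 2 * C' 1 + dist (ρ 1 x₀) x₀) 0)
  rw [max_lt_iff] at hR
  have hgen := closure_returnSet_sq_eq ρ x₀ hcc hc.le hΛ.1 hΛ.2.1 hcob (hK₀ 1)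
    (by simpa using hup 1 le_rfl) (by simpa using hcomp 1 le_rfl) hR.2 hR.1
  refine ⟨⟨R, hR.2, hgen⟩, fun hproper => ?_⟩
  rw [← hgen]
  exact (Subgroup.fg_iff _).mpr ⟨_, rfl, finite_returnSet_sq ρ x₀ hΛ (hK₀ 3)
    (hup 3 (by norm_num)) (hcomp 3 (by norm_num)) hproper R⟩

/-- Milnor–Schwarz lemma for approximate groups, parts (i) and (ii).

`X` is a coarsely connected proper pseudo-metric space with basepoint `x₀`, and
`ρ` is a `(K_k, C_k, C_k')`-quasi-isometric quasi-action of the approximate group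
`(Λ, Λ^∞)` on `X` (hypotheses `hqi`, `hcomp`) which is cobounded (`hcob`).

Conclusion (i): there is `R > 0` such that
`F = {μ ∈ Λ² : B(x₀,R) ∩ ρ(μ)(B(x₀,R)) ≠ ∅}` generates the group `Λ^∞`.
Conclusion (ii): if moreover `ρ` is proper then `Λ^∞` is finitely generated. -/
theorem milnor_schwarz_finite_generation {G X : Type*} [Group G] [PseudoMetricSpace X]
    [ProperSpace X]
    (hcc : ∃ c : ℝ, 0 < c ∧ ∀ x y : X, ∃ (n : ℕ) (p : ℕ → X),
        p 0 = x ∧ p n = y ∧ ∀ i < n, dist (p i) (p (i + 1)) ≤ c)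
    (Λ : Set G) (hΛ : IsApproximateSubgroup' Λ)
    (x₀ : X) (ρ : G → X → X) (K C C' : ℕ → ℝ)
    (hK : ∀ k : ℕ, 1 ≤ K k) (hC : ∀ k : ℕ, 0 ≤ C k) (hC' : ∀ k : ℕ, 0 ≤ C' k)
    -- each ρ(λ), λ ∈ Λ^k, is a (K_k, C_k, C_k')-quasi-isometry
    (hqi : ∀ k : ℕ, 1 ≤ k → ∀ g ∈ Λ ^ k,
        (∀ x y : X, (K k)⁻¹ * dist x y - C k ≤ dist (ρ g x) (ρ g y) ∧
            dist (ρ g x) (ρ g y) ≤ K k * dist x y + C k) ∧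
        ∀ y : X, ∃ x : X, dist y (ρ g x) ≤ C' k)
    -- ρ is multiplicative up to error C_k' on Λ^k
    (hcomp : ∀ k : ℕ, 1 ≤ k → ∀ g ∈ Λ ^ k, ∀ h ∈ Λ ^ k, ∀ x : X,
        dist (ρ g (ρ h x)) (ρ (g * h) x) < C' k)
    -- ρ is cobounded: the quasi-orbit of x₀ is relatively dense
    (hcob : ∃ D : ℝ, ∀ x : X, ∃ g ∈ Λ, dist x (ρ g x₀) ≤ D) :
    (∃ R : ℝ, 0 < R ∧
        Subgroup.closure {μ : G | μ ∈ Λ ^ 2 ∧ ∃ y : X, dist y x₀ < R ∧ dist (ρ μ y) x₀ < R} =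
          Subgroup.closure Λ) ∧
    ((∀ R : ℝ, 0 < R →
        {g : G | g ∈ Λ ∧ ∃ y : X, dist y x₀ < R ∧ dist (ρ g y) x₀ < R}.Finite) →
      (Subgroup.closure Λ).FG) :=
  milnor_schwarz_finite_generation_general hcc Λ hΛ x₀ ρ K C C' hK hqi hcomp hcob
end

section
/- Every unbounded, proper, geodesic, Gromov hyperbolic, quasi-cobounded metric space X is visual: for every basepoint o ∈ X there exists a constant D > 0 such that every point x ∈ X has distance at most D from the image of some geodesic ray emanating from o. -/
/-!
By quasi-coboundedness, every point `x` lies within `r` of the middle point of an arbitrarily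
long quasi-geodesic chain whose endpoints are far from `x`. By the Morse lemma such a chain stays
uniformly close to a geodesic, so the Gromov product at `x` of its endpoints is bounded, and
hyperbolicity at `x` turns one of the endpoints into a point `y` with `d(o, y) ≥ R` and
`(x|y)_o ≥ d(o, x) - c`, for every `R` and a uniform `c`. The geodesic from `o` to such a `y`
passes within `c + 2δ` of `x`; letting `R → ∞`, these geodesics subconverge, by properness, to
a geodesic ray from `o` that still passes within `c + 2δ` of `x`.
-/

open Filter Metric Set Topology

section

variable {X : Type*} [MetricSpace X]

noncomputable def gromovProduct (w x y : X) : ℝ := (dist w x + dist w y - dist x y) / 2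

def IsGromovHyperbolic (X : Type*) [MetricSpace X] (δ : ℝ) : Prop :=
  ∀ x y z w : X, min (gromovProduct w x z) (gromovProduct w y z) - δ ≤ gromovProduct w x y

def IsGeodesicSegment (γ : ℝ → X) (x y : X) : Prop :=
  γ 0 = x ∧ γ (dist x y) = y ∧
    ∀ s ∈ Icc (0 : ℝ) (dist x y), ∀ t ∈ Icc (0 : ℝ) (dist x y), dist (γ s) (γ t) = |s - t|

def IsGeodesicRay (γ : ℝ → X) (o : X) : Prop :=
  γ 0 = o ∧ ∀ s t : ℝ, 0 ≤ s → 0 ≤ t → dist (γ s) (γ t) = |s - t|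

def IsQuasiIsometricEmbedding {Y : Type*} [MetricSpace Y] (K C : ℝ) (f : X → Y) : Prop :=
  ∀ z w : X, K⁻¹ * dist z w - C ≤ dist (f z) (f w) ∧ dist (f z) (f w) ≤ K * dist z w + C

def IsQuasiGeodesicChain (K C : ℝ) (z : ℕ → X) (N : ℕ) : Prop :=
  ∀ i ≤ N, ∀ j ≤ N, K⁻¹ * |(i : ℝ) - j| - C ≤ dist (z i) (z j) ∧
    dist (z i) (z j) ≤ K * |(i : ℝ) - j| + C

theorem gromovProduct_comm (w x y : X) : gromovProduct w x y = gromovProduct w y x := by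
  rw [gromovProduct, gromovProduct, dist_comm x y, add_comm (dist w x)]

theorem gromovProduct_self (w x : X) : gromovProduct w x x = dist w x := by
  rw [gromovProduct, dist_self]; ring

theorem gromovProduct_nonneg (w x y : X) : 0 ≤ gromovProduct w x y := by
  have := dist_triangle_left x y w
  unfold gromovProduct; linarith

theorem gromovProduct_le_dist_left (w x y : X) : gromovProduct w x y ≤ dist w x := by
  have := dist_triangle w x y
  unfold gromovProduct; linarith

theorem gromovProduct_le_dist_right (w x y : X) : gromovProduct w x y ≤ dist w y :=
  gromovProduct_comm w x y ▸ gromovProduct_le_dist_left w y x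

theorem gromovProduct_le_add_dist (w w' x y : X) :
    gromovProduct w x y ≤ gromovProduct w' x y + dist w w' := by
  have := dist_triangle w w' x
  have := dist_triangle w w' y
  unfold gromovProduct; linarith

theorem gromovProduct_add_gromovProduct (o x y : X) :
    gromovProduct o x y + gromovProduct x o y = dist o x := by
  unfold gromovProduct; rw [dist_comm x o]; ring

theorem min_dist_le_gromovProduct_add (w x y : X) :
    min (dist w x) (dist w y) ≤ gromovProduct w x y + dist x y / 2 := by
  have := min_le_left (dist w x) (dist w y)
  have := min_le_right (dist w x) (dist w y)
  unfold gromovProduct; linarith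

theorem exists_forall_two_pow_le_imp_le (a b : ℝ) :
    ∃ k₀ : ℕ, ∀ k : ℕ, (2 : ℝ) ^ k ≤ a * k + b → k ≤ k₀ := by
  have hlim : Tendsto (fun k : ℕ => (a * k + b) / 2 ^ k) atTop (𝓝 0) := by
    have hk := (tendsto_pow_const_div_const_pow_of_one_lt 1 one_lt_two).const_mul a
    have hb := tendsto_const_nhds (x := b).div_atTop
      (tendsto_pow_atTop_atTop_of_one_lt (one_lt_two : (1 : ℝ) < 2))
    simpa [add_div, mul_div_assoc] using hk.add hb
  obtain ⟨k₀, hk₀⟩ := eventually_atTop.1 (hlim.eventually (gt_mem_nhds one_pos))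
  refine ⟨k₀, fun k hk => ?_⟩
  by_contra! hlt
  have := hk₀ k hlt.le
  rw [div_lt_one (by positivity)] at this
  linarith

namespace IsGeodesicSegment

variable {γ : ℝ → X} {x y : X}

theorem dist_eq (hγ : IsGeodesicSegment γ x y) {s t : ℝ} (hs : s ∈ Icc 0 (dist x y))
    (ht : t ∈ Icc 0 (dist x y)) : dist (γ s) (γ t) = |s - t| :=
  hγ.2.2 s hs t ht

theorem continuousOn (hγ : IsGeodesicSegment γ x y) : ContinuousOn γ (Icc 0 (dist x y)) :=
  (LipschitzOnWith.mk_one fun s hs t ht => by rw [hγ.dist_eq hs ht, Real.dist_eq]).continuousOn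

theorem gromovProduct_eq_zero (hγ : IsGeodesicSegment γ x y) {s₁ s s₂ : ℝ} (h₁ : 0 ≤ s₁)
    (h₁s : s₁ ≤ s) (hs₂ : s ≤ s₂) (h₂ : s₂ ≤ dist x y) :
    gromovProduct (γ s) (γ s₁) (γ s₂) = 0 := by
  have mem : ∀ t, s₁ ≤ t → t ≤ s₂ → t ∈ Icc 0 (dist x y) := fun t ht₁ ht₂ =>
    ⟨h₁.trans ht₁, ht₂.trans h₂⟩
  rw [gromovProduct, hγ.dist_eq (mem s h₁s hs₂) (mem s₁ le_rfl (h₁s.trans hs₂)),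
    hγ.dist_eq (mem s h₁s hs₂) (mem s₂ (h₁s.trans hs₂) le_rfl),
    hγ.dist_eq (mem s₁ le_rfl (h₁s.trans hs₂)) (mem s₂ (h₁s.trans hs₂) le_rfl),
    abs_of_nonneg (sub_nonneg.2 h₁s), abs_of_nonpos (sub_nonpos.2 hs₂),
    abs_of_nonpos (sub_nonpos.2 (h₁s.trans hs₂))]
  ring

theorem gromovProduct_endpoints_eq_zero (hγ : IsGeodesicSegment γ x y) {s : ℝ}
    (hs : s ∈ Icc 0 (dist x y)) : gromovProduct (γ s) x y = 0 := by
  simpa only [hγ.1, hγ.2.1] using hγ.gromovProduct_eq_zero le_rfl hs.1 hs.2 le_rfl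

end IsGeodesicSegment

namespace IsQuasiGeodesicChain

variable {K C : ℝ} {z : ℕ → X} {N : ℕ}

theorem const_nonneg (hz : IsQuasiGeodesicChain K C z N) : 0 ≤ C := by
  simpa using (hz 0 (Nat.zero_le N) 0 (Nat.zero_le N)).2

theorem dist_succ_le (hz : IsQuasiGeodesicChain K C z N) {i : ℕ} (hi : i < N) :
    dist (z i) (z (i + 1)) ≤ K + C := by
  simpa using (hz i hi.le (i + 1) hi).2

theorem sub_le (hz : IsQuasiGeodesicChain K C z N) (hK : 0 < K) {i j : ℕ} (hij : i ≤ j)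
    (hj : j ≤ N) {E : ℝ} (hE : dist (z i) (z j) ≤ E) : (j : ℝ) - i ≤ K * (E + C) := by
  have hlow := (hz i (hij.trans hj) j hj).1
  rw [abs_sub_comm, abs_of_nonneg (sub_nonneg.2 (Nat.cast_le.2 hij))] at hlow
  have hKi : K⁻¹ * ((j : ℝ) - i) ≤ E + C := by linarith
  calc (j : ℝ) - i = K * (K⁻¹ * ((j : ℝ) - i)) := by field_simp
    _ ≤ K * (E + C) := by gcongr

theorem dist_le_of_le_of_le (hz : IsQuasiGeodesicChain K C z N) (hK : 0 < K) {i M j : ℕ}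
    (hiM : i ≤ M) (hMj : M ≤ j) (hj : j ≤ N) {E : ℝ} (hE : dist (z i) (z j) ≤ E) :
    dist (z M) (z i) ≤ K * (K * (E + C)) + C := by
  have hji := hz.sub_le hK (hiM.trans hMj) hj hE
  have hMi : (M : ℝ) - i ≤ j - i := by gcongr
  calc dist (z M) (z i) ≤ K * |(M : ℝ) - i| + C := (hz M (hMj.trans hj) i (by omega)).2
    _ ≤ K * (K * (E + C)) + C := by
      rw [abs_of_nonneg (sub_nonneg.2 (Nat.cast_le.2 hiM))]
      gcongr
      linarith

/-- The parameters of the geodesic close to `z 0, …, z M` and those close to `z M, …, z N`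
form two closed sets covering the segment, so by connectedness some `γ s` is close to both a
`z i` with `i ≤ M` and a `z j` with `M ≤ j`, hence to `z M`. -/
theorem gromovProduct_le (hz : IsQuasiGeodesicChain K C z N) (hK : 0 < K) {γ : ℝ → X}
    (hγ : IsGeodesicSegment γ (z 0) (z N)) {R : ℝ}
    (hR : ∀ s ∈ Icc 0 (dist (z 0) (z N)), ∃ i ≤ N, dist (γ s) (z i) ≤ R) {M : ℕ}
    (hM : M ≤ N) : gromovProduct (z M) (z 0) (z N) ≤ K * (K * (2 * R + C)) + C + R := by
  set L := dist (z 0) (z N)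
  set near : Set ℕ → Set ℝ := fun I => Icc 0 L ∩ γ ⁻¹' ⋃ i ∈ I, closedBall (z i) R
  have hclosed : ∀ I : Set ℕ, I.Finite → IsClosed (near I) := fun I hI =>
    hγ.continuousOn.preimage_isClosed_of_isClosed isClosed_Icc
      (hI.isClosed_biUnion fun i _ => isClosed_closedBall)
  have hmem : ∀ s ∈ Icc 0 L, ∀ I : Set ℕ, s ∈ near I ↔ ∃ i ∈ I, dist (γ s) (z i) ≤ R :=
    fun s hs I => by simp [near, hs]
  have hR0 : 0 ≤ R := by
    obtain ⟨i, -, hi⟩ := hR 0 (left_mem_Icc.2 dist_nonneg)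
    exact dist_nonneg.trans hi
  obtain ⟨s, hs, hsA, hsB⟩ := isPreconnected_closed_iff.1 isPreconnected_Icc (near (Iic M))
    (near (Icc M N)) (hclosed _ (finite_Iic M)) (hclosed _ (finite_Icc M N))
    (fun s hs => by
      obtain ⟨i, hi, hd⟩ := hR s hs
      rcases le_total i M with hiM | hiM
      · exact Or.inl ((hmem s hs _).2 ⟨i, hiM, hd⟩)
      · exact Or.inr ((hmem s hs _).2 ⟨i, ⟨hiM, hi⟩, hd⟩))
    ⟨0, left_mem_Icc.2 dist_nonneg, (hmem 0 (left_mem_Icc.2 dist_nonneg) _).2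
      ⟨0, Nat.zero_le M, by rwa [hγ.1, dist_self]⟩⟩
    ⟨L, right_mem_Icc.2 dist_nonneg, (hmem L (right_mem_Icc.2 dist_nonneg) _).2
      ⟨N, ⟨hM, le_rfl⟩, by rwa [hγ.2.1, dist_self]⟩⟩
  obtain ⟨i, hiM, hi⟩ := (hmem s hs _).1 hsA
  obtain ⟨j, ⟨hMj, hjN⟩, hj⟩ := (hmem s hs _).1 hsB
  have hMi := hz.dist_le_of_le_of_le hK hiM hMj hjN (E := 2 * R)
    (by linarith [dist_triangle_left (z i) (z j) (γ s)])
  calc gromovProduct (z M) (z 0) (z N)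
      ≤ gromovProduct (γ s) (z 0) (z N) + dist (z M) (γ s) := gromovProduct_le_add_dist _ _ _ _
    _ ≤ K * (K * (2 * R + C)) + C + R := by
      rw [hγ.gromovProduct_endpoints_eq_zero hs]
      linarith [dist_triangle (z M) (z i) (γ s), dist_comm (z i) (γ s)]

end IsQuasiGeodesicChain

namespace IsGromovHyperbolic

variable {δ : ℝ}

theorem nonneg (h : IsGromovHyperbolic X δ) (p : X) : 0 ≤ δ := by
  have := h p p p p
  rw [gromovProduct_self, dist_self, min_self] at this
  linarith

theorem min_sub_le (h : IsGromovHyperbolic X δ) (p x y z : X) :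
    min (gromovProduct p x y) (gromovProduct p y z) - δ ≤ gromovProduct p x z := by
  simpa only [gromovProduct_comm p z y] using h x z y p

theorem min_min_sub_two_mul_le (h : IsGromovHyperbolic X δ) (p a b c d : X) :
    min (min (gromovProduct p a b) (gromovProduct p b c)) (gromovProduct p c d) - 2 * δ ≤
      gromovProduct p a d := by
  have hδ := h.nonneg p
  have habd := min_le_iff.1 (sub_le_iff_le_add.1 (h.min_sub_le p a b d))
  have hbcd := min_le_iff.1 (sub_le_iff_le_add.1 (h.min_sub_le p b c d))
  have := min_le_left (min (gromovProduct p a b) (gromovProduct p b c)) (gromovProduct p c d)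
  have := min_le_right (min (gromovProduct p a b) (gromovProduct p b c)) (gromovProduct p c d)
  have := min_le_left (gromovProduct p a b) (gromovProduct p b c)
  have := min_le_right (gromovProduct p a b) (gromovProduct p b c)
  rcases habd with habd | habd <;> rcases hbcd with hbcd | hbcd <;> linarith

theorem exists_gromovProduct_succ_le (h : IsGromovHyperbolic X δ) (p : X) (k : ℕ) :
    ∀ (w : ℕ → X) (n : ℕ), 0 < n → n ≤ 2 ^ k →
      ∃ i < n, gromovProduct p (w i) (w (i + 1)) ≤ gromovProduct p (w 0) (w n) + k * δ := by
  induction k with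
  | zero =>
    intro w n hn hnk
    obtain rfl : n = 1 := by rw [pow_zero] at hnk; omega
    exact ⟨0, one_pos, by simp⟩
  | succ k ih =>
    intro w n hn hnk
    have hδ := h.nonneg p
    rcases eq_or_lt_of_le (Nat.one_le_iff_ne_zero.2 hn.ne') with rfl | hn1
    · exact ⟨0, one_pos, by simp only [zero_add, le_add_iff_nonneg_right]; positivity⟩
    set m := n / 2
    have hm : 0 < m := by omega
    have hmn : m < n := by omega
    have hmk : m ≤ 2 ^ k := by rw [pow_succ] at hnk; omega
    have hnmk : n - m ≤ 2 ^ k := by rw [pow_succ] at hnk; omega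
    rcases min_le_iff.1 (sub_le_iff_le_add.1 (h.min_sub_le p (w 0) (w m) (w n))) with hc | hc
    · obtain ⟨i, hi, hw⟩ := ih w m hm hmk
      exact ⟨i, hi.trans hmn, by push_cast; linarith⟩
    · obtain ⟨i, hi, hw⟩ := ih (fun i => w (m + i)) (n - m) (by omega) hnmk
      simp only [add_zero, Nat.add_sub_cancel' hmn.le, ← add_assoc] at hw
      exact ⟨m + i, by omega, by push_cast; linarith⟩

theorem le_gromovProduct_of_forall_le_dist (h : IsGromovHyperbolic X δ) (p : X) {w : ℕ → X}
    {n k : ℕ} {ℓ D : ℝ} (hnk : n ≤ 2 ^ k) (hℓ : 0 ≤ ℓ)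
    (hstep : ∀ i < n, dist (w i) (w (i + 1)) ≤ ℓ) (hfar : ∀ i ≤ n, D ≤ dist p (w i)) :
    D - ℓ / 2 - k * δ ≤ gromovProduct p (w 0) (w n) := by
  have hkδ : 0 ≤ (k : ℝ) * δ := mul_nonneg k.cast_nonneg (h.nonneg p)
  rcases Nat.eq_zero_or_pos n with rfl | hn
  · rw [gromovProduct_self]; linarith [hfar 0 le_rfl]
  obtain ⟨i, hi, hgp⟩ := h.exists_gromovProduct_succ_le p k w n hn hnk
  have := min_dist_le_gromovProduct_add p (w i) (w (i + 1))
  have := le_min (hfar i hi.le) (hfar (i + 1) hi)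
  linarith [hstep i hi]

theorem le_of_chain_avoids_ball (h : IsGromovHyperbolic X δ) {p a b : X} {w : ℕ → X}
    {n k : ℕ} {ℓ D : ℝ} (hnk : n ≤ 2 ^ k) (hℓ : 0 ≤ ℓ)
    (hstep : ∀ i < n, dist (w i) (w (i + 1)) ≤ ℓ) (hfar : ∀ i ≤ n, D ≤ dist p (w i))
    (ha : D ≤ dist p a) (hb : D ≤ dist p b) (hab : gromovProduct p a b ≤ 0)
    (haw : dist a (w 0) ≤ D) (hwb : dist (w n) b ≤ D) :
    D ≤ (k + 4) * δ + ℓ / 2 := by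
  have hδ := h.nonneg p
  have hkδ : 0 ≤ (k : ℝ) * δ := mul_nonneg k.cast_nonneg hδ
  have hchain := h.le_gromovProduct_of_forall_le_dist p hnk hℓ hstep hfar
  have hstart : D / 2 ≤ gromovProduct p a (w 0) := by
    linarith [min_dist_le_gromovProduct_add p a (w 0), le_min ha (hfar 0 (Nat.zero_le n))]
  have hend : D / 2 ≤ gromovProduct p (w n) b := by
    linarith [min_dist_le_gromovProduct_add p (w n) b, le_min (hfar n le_rfl) hb]
  have hmin : min (min (D / 2) (D - ℓ / 2 - k * δ)) (D / 2) ≤ 2 * δ := by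
    linarith [min_le_min (min_le_min hstart hchain) hend,
      h.min_min_sub_two_mul_le p a (w 0) (w n) b]
  rcases min_le_iff.1 hmin with hmin | hmin
  · rcases min_le_iff.1 hmin with hmin | hmin <;> linarith
  · linarith

theorem exists_two_pow_le_of_chain_avoids_ball (h : IsGromovHyperbolic X δ) {K C D : ℝ}
    {z : ℕ → X} {N j₁ j₂ : ℕ} {p a b : X} (hK : 0 < K) (hz : IsQuasiGeodesicChain K C z N)
    (hj : j₁ ≤ j₂) (hj₂ : j₂ ≤ N) (hfar : ∀ i ≤ N, D ≤ dist p (z i)) (ha : D ≤ dist p a)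
    (hb : D ≤ dist p b) (hab : gromovProduct p a b ≤ 0) (habD : dist a b ≤ 2 * D)
    (ha₁ : dist a (z j₁) ≤ D) (hb₂ : dist (z j₂) b ≤ D) :
    ∃ k : ℕ, (2 : ℝ) ^ k ≤ 2 * K * (4 * D + C) + 2 ∧ D ≤ (k + 4) * δ + (K + C) / 2 := by
  have hC := hz.const_nonneg
  set n := j₂ - j₁
  refine ⟨Nat.log 2 n + 1, ?_, ?_⟩
  · have hpow : 2 ^ (Nat.log 2 n + 1) ≤ 2 * n + 2 := by
      rcases Nat.eq_zero_or_pos n with hn | hn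
      · simp [hn]
      · rw [pow_succ]; linarith [Nat.pow_log_le_self 2 hn.ne']
    have hn : (n : ℝ) ≤ K * (4 * D + C) := by
      rw [Nat.cast_sub hj]
      refine hz.sub_le hK hj hj₂ ?_
      linarith [dist_triangle4 (z j₁) a b (z j₂), dist_comm a (z j₁), dist_comm b (z j₂)]
    calc (2 : ℝ) ^ (Nat.log 2 n + 1) ≤ 2 * n + 2 := by exact_mod_cast hpow
      _ ≤ 2 * K * (4 * D + C) + 2 := by linarith
  · have hend : j₁ + n = j₂ := by omega
    refine h.le_of_chain_avoids_ball (w := fun i => z (j₁ + i))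
      (Nat.lt_pow_succ_log_self one_lt_two n).le (by linarith) (fun i hi => ?_)
      (fun i hi => hfar _ (by omega)) ha hb hab (by simpa using ha₁) (by simpa [hend] using hb₂)
    simpa only [← add_assoc] using hz.dist_succ_le (i := j₁ + i) (by omega)

theorem exists_two_pow_le_of_farthest_point (h : IsGromovHyperbolic X δ) {K C D : ℝ}
    {z : ℕ → X} {N : ℕ} {γ : ℝ → X} {s₀ : ℝ} (hK : 0 < K) (hz : IsQuasiGeodesicChain K C z N)
    (hγ : IsGeodesicSegment γ (z 0) (z N)) (hs₀ : s₀ ∈ Icc 0 (dist (z 0) (z N)))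
    (hD : 0 ≤ D) (hfar : ∀ i ≤ N, D ≤ dist (γ s₀) (z i))
    (hnear : ∀ s ∈ Icc 0 (dist (z 0) (z N)), ∃ i ≤ N, dist (γ s) (z i) ≤ D) :
    ∃ k : ℕ, (2 : ℝ) ^ k ≤ 2 * K * (4 * D + C) + 2 ∧ D ≤ (k + 4) * δ + (K + C) / 2 := by
  set L := dist (z 0) (z N)
  have hL : ∀ s ∈ Icc 0 L, dist (γ s₀) (γ s) = |s₀ - s| := fun s hs => hγ.dist_eq hs₀ hs
  have hD₀ : D ≤ s₀ := by
    simpa [← hγ.1, hL 0 (left_mem_Icc.2 dist_nonneg), abs_of_nonneg hs₀.1]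
      using hfar 0 (Nat.zero_le N)
  have hDL : D ≤ L - s₀ := by
    have := hfar N le_rfl
    rwa [← hγ.2.1, hL L (right_mem_Icc.2 dist_nonneg), abs_of_nonpos (by linarith [hs₀.2]),
      neg_sub] at this
  have hmem₁ : s₀ - D ∈ Icc 0 L := ⟨by linarith, by linarith [hs₀.2]⟩
  have hmem₂ : s₀ + D ∈ Icc 0 L := ⟨by linarith [hs₀.1], by linarith⟩
  have hpa : dist (γ s₀) (γ (s₀ - D)) = D := by rw [hL _ hmem₁]; simp [abs_of_nonneg hD]
  have hpb : dist (γ s₀) (γ (s₀ + D)) = D := by rw [hL _ hmem₂]; simp [abs_of_nonneg hD]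
  have hab : dist (γ (s₀ - D)) (γ (s₀ + D)) = 2 * D := by
    rw [hγ.dist_eq hmem₁ hmem₂, abs_of_nonpos (by linarith)]; ring
  have hgp := hγ.gromovProduct_eq_zero (s := s₀) hmem₁.1 (by linarith) (by linarith) hmem₂.2
  obtain ⟨j₁, hj₁, hd₁⟩ := hnear _ hmem₁
  obtain ⟨j₂, hj₂, hd₂⟩ := hnear _ hmem₂
  rcases le_total j₁ j₂ with hj | hj
  · exact h.exists_two_pow_le_of_chain_avoids_ball hK hz hj hj₂ hfar hpa.ge hpb.ge hgp.le
      hab.le hd₁ (by rwa [dist_comm])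
  · exact h.exists_two_pow_le_of_chain_avoids_ball hK hz hj hj₁ hfar hpb.ge hpa.ge
      (by rw [gromovProduct_comm, hgp]) (by rw [dist_comm, hab]) hd₂ (by rwa [dist_comm])

/-- At a point `γ s₀` of the geodesic at maximal distance `D` from the chain, the chain runs
from near `γ (s₀ - D)` to near `γ (s₀ + D)` outside the `D`-ball around `γ s₀`; in a hyperbolic
space this takes a number of steps exponential in `D`, whereas the quasi-geodesic bounds allow
only linearly many. -/
theorem exists_geodesic_near_quasiGeodesicChain (h : IsGromovHyperbolic X δ) {K C : ℝ}
    (hK : 0 < K) :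
    ∃ R, ∀ (z : ℕ → X) (N : ℕ) (γ : ℝ → X), IsQuasiGeodesicChain K C z N →
      IsGeodesicSegment γ (z 0) (z N) →
        ∀ s ∈ Icc 0 (dist (z 0) (z N)), ∃ i ≤ N, dist (γ s) (z i) ≤ R := by
  obtain ⟨k₀, hk₀⟩ :=
    exists_forall_two_pow_le_imp_le (8 * K * δ) (2 * K * (4 * (4 * δ + (K + C) / 2) + C) + 2)
  refine ⟨(k₀ + 4) * δ + (K + C) / 2, fun z N γ hz hγ => ?_⟩
  set S := z '' Iic N
  have hnearest : ∀ q : X, ∃ i ≤ N, dist q (z i) = infDist q S := fun q => by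
    obtain ⟨_, ⟨i, hi, rfl⟩, hq⟩ :=
      ((finite_Iic N).image z).isCompact.exists_infDist_eq_dist ⟨z 0, 0, Nat.zero_le N, rfl⟩ q
    exact ⟨i, hi, hq.symm⟩
  obtain ⟨s₀, hs₀, hmax⟩ := isCompact_Icc.exists_isMaxOn (nonempty_Icc.2 dist_nonneg)
    ((continuous_infDist_pt S).comp_continuousOn hγ.continuousOn)
  have hnear : ∀ s ∈ Icc 0 (dist (z 0) (z N)), ∃ i ≤ N, dist (γ s) (z i) ≤ infDist (γ s₀) S :=
    fun s hs => by
      obtain ⟨i, hi, hd⟩ := hnearest (γ s)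
      exact ⟨i, hi, hd.trans_le (hmax hs)⟩
  obtain ⟨k, hk2, hkD⟩ := h.exists_two_pow_le_of_farthest_point hK hz hγ hs₀ infDist_nonneg
    (fun i hi => infDist_le_dist_of_mem (mem_image_of_mem z hi)) hnear
  have hδ := h.nonneg (z 0)
  have hk : k ≤ k₀ := hk₀ k <| by
    have : 0 ≤ K * δ := mul_nonneg hK.le hδ
    nlinarith
  intro s hs
  obtain ⟨i, hi, hd⟩ := hnear s hs
  refine ⟨i, hi, hd.trans (hkD.trans ?_)⟩
  gcongr

theorem exists_gromovProduct_le_of_isQuasiGeodesicChain (h : IsGromovHyperbolic X δ)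
    (hgeo : ∀ x y : X, ∃ γ, IsGeodesicSegment γ x y) {K C : ℝ} (hK : 0 < K) :
    ∃ B, ∀ (z : ℕ → X) (N M : ℕ), IsQuasiGeodesicChain K C z N → M ≤ N →
      gromovProduct (z M) (z 0) (z N) ≤ B := by
  obtain ⟨R, hR⟩ := h.exists_geodesic_near_quasiGeodesicChain (C := C) hK
  refine ⟨K * (K * (2 * R + C)) + C + R, fun z N M hz hM => ?_⟩
  obtain ⟨γ, hγ⟩ := hgeo (z 0) (z N)
  exact hz.gromovProduct_le hK hγ (hR z N γ hz hγ) hM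

end IsGromovHyperbolic

theorem exists_isometric_nat_chain (hgeo : ∀ x y : X, ∃ γ, IsGeodesicSegment γ x y)
    (hunb : ∀ R : ℝ, ∃ x y : X, R < dist x y) (N : ℕ) :
    ∃ w : ℕ → X, ∀ i ≤ N, ∀ j ≤ N, dist (w i) (w j) = |(i : ℝ) - j| := by
  obtain ⟨x, y, hxy⟩ := hunb N
  obtain ⟨γ, hγ⟩ := hgeo x y
  have hmem : ∀ i ≤ N, (i : ℝ) ∈ Icc 0 (dist x y) := fun i hi =>
    ⟨i.cast_nonneg, le_trans (by exact_mod_cast hi) hxy.le⟩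
  exact ⟨fun i => γ i, fun i hi j hj => hγ.dist_eq (hmem i hi) (hmem j hj)⟩

theorem exists_isQuasiGeodesicChain_far (hgeo : ∀ x y : X, ∃ γ, IsGeodesicSegment γ x y)
    (hunb : ∀ R : ℝ, ∃ x y : X, R < dist x y) {K C r : ℝ} (hK : 0 < K)
    (hqc : ∀ x y : X, ∃ f : X → X, IsQuasiIsometricEmbedding K C f ∧ dist (f x) y < r)
    (x : X) (R : ℝ) :
    ∃ (z : ℕ → X) (N M : ℕ), IsQuasiGeodesicChain K C z N ∧ M ≤ N ∧ dist (z M) x < r ∧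
      R ≤ dist x (z 0) ∧ R ≤ dist x (z N) := by
  set M := ⌈K * (R + C + r)⌉₊
  obtain ⟨w, hw⟩ := exists_isometric_nat_chain hgeo hunb (2 * M)
  obtain ⟨f, hf, hfx⟩ := hqc (w M) x
  have hz : IsQuasiGeodesicChain K C (f ∘ w) (2 * M) := fun i hi j hj => by
    simpa only [Function.comp_apply, hw i hi j hj] using hf (w i) (w j)
  have hKM : R + C + r ≤ K⁻¹ * M := (le_inv_mul_iff₀ hK).2 (Nat.le_ceil _)
  have hfar : ∀ i ≤ 2 * M, (M : ℝ) ≤ |(M : ℝ) - i| → R ≤ dist x (f (w i)) :=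
    fun i hi hMi => by
      have hlow := (hz M (by omega) i hi).1
      have : K⁻¹ * M ≤ K⁻¹ * |(M : ℝ) - i| := by gcongr
      simp only [Function.comp_apply] at hlow
      linarith [dist_triangle (f (w M)) x (f (w i))]
  refine ⟨f ∘ w, 2 * M, M, hz, by omega, hfx, hfar 0 (Nat.zero_le _) (by simp),
    hfar _ le_rfl ?_⟩
  rw [abs_sub_comm]
  push_cast
  exact le_abs.2 (Or.inl (by linarith))

namespace IsGromovHyperbolic

variable {δ : ℝ}

theorem exists_far_gromovProduct_ge (h : IsGromovHyperbolic X δ)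
    (hgeo : ∀ x y : X, ∃ γ, IsGeodesicSegment γ x y) (hunb : ∀ R : ℝ, ∃ x y : X, R < dist x y)
    {K C r : ℝ} (hK : 0 < K)
    (hqc : ∀ x y : X, ∃ f : X → X, IsQuasiIsometricEmbedding K C f ∧ dist (f x) y < r)
    (o : X) :
    ∃ c, ∀ (x : X) (R : ℝ), ∃ y, R ≤ dist o y ∧ dist o x - c ≤ gromovProduct o x y := by
  obtain ⟨B, hB⟩ := h.exists_gromovProduct_le_of_isQuasiGeodesicChain hgeo (C := C) hK
  refine ⟨B + r + δ, fun x R => ?_⟩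
  obtain ⟨z, N, M, hz, hMN, hzx, h0, hN⟩ :=
    exists_isQuasiGeodesicChain_far hgeo hunb hK hqc x (R + dist o x)
  have hx : gromovProduct x (z 0) (z N) ≤ B + r := by
    linarith [hB z N M hz hMN, gromovProduct_le_add_dist x (z M) (z 0) (z N), dist_comm x (z M)]
  have hy : ∀ y, R + dist o x ≤ dist x y → gromovProduct x o y ≤ B + r + δ →
      R ≤ dist o y ∧ dist o x - (B + r + δ) ≤ gromovProduct o x y := fun y hxy hgp =>
    ⟨by linarith [dist_triangle x o y, dist_comm x o],
      by linarith [gromovProduct_add_gromovProduct o x y]⟩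
  rcases min_le_iff.1 (sub_le_iff_le_add.1 (h.min_sub_le x (z 0) o (z N))) with hc | hc
  · exact ⟨z 0, hy (z 0) h0 (by rw [gromovProduct_comm]; linarith)⟩
  · exact ⟨z N, hy (z N) hN (by linarith)⟩

theorem dist_le_of_isGeodesicSegment (h : IsGromovHyperbolic X δ) {σ : ℝ → X} {o y : X}
    (hσ : IsGeodesicSegment σ o y) (x : X) :
    dist x (σ (gromovProduct o x y)) ≤ dist o x - gromovProduct o x y + 2 * δ := by
  set t := gromovProduct o x y
  have ht : t ∈ Icc 0 (dist o y) :=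
    ⟨gromovProduct_nonneg o x y, gromovProduct_le_dist_right o x y⟩
  have hot : dist o (σ t) = t := by
    rw [← hσ.1, hσ.dist_eq (left_mem_Icc.2 dist_nonneg) ht, zero_sub, abs_neg,
      abs_of_nonneg ht.1]
  have hyt : dist (σ t) y = dist o y - t := by
    have := hσ.dist_eq ht (right_mem_Icc.2 dist_nonneg)
    rw [hσ.2.1, abs_of_nonpos (by linarith [ht.2])] at this
    linarith
  have hxy : dist x y = dist o x + dist o y - 2 * t := by
    simp only [t, gromovProduct]; ring
  have hleft : gromovProduct x o (σ t) = (dist o x + dist x (σ t) - t) / 2 := by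
    rw [gromovProduct, dist_comm x o, hot]
  have hright : gromovProduct x (σ t) y = (dist o x + dist x (σ t) - t) / 2 := by
    rw [gromovProduct, hyt, hxy]; ring
  have key := h.min_sub_le x o (σ t) y
  rw [hleft, hright, min_self] at key
  linarith [gromovProduct_add_gromovProduct o x y]

end IsGromovHyperbolic

theorem IsCompact.exists_tendsto_ultrafilter {Y ι : Type*} [TopologicalSpace Y] {s : Set Y}
    (hs : IsCompact s) (U : Ultrafilter ι) {g : ι → Y}
    (hg : ∀ᶠ i in (U : Filter ι), g i ∈ s) : ∃ y ∈ s, Tendsto g U (𝓝 y) :=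
  hs.ultrafilter_le_nhds' (U.map g) hg

/-- The ray is the pointwise limit of the segments along an ultrafilter on `ℕ`; properness
provides the limits. -/
theorem exists_isGeodesicRay_dist_le [ProperSpace X] {o x : X} {y : ℕ → X} {Γ : ℕ → ℝ → X}
    {t : ℕ → ℝ} {A D : ℝ} (hΓ : ∀ n, IsGeodesicSegment (Γ n) o (y n))
    (hy : Tendsto (fun n => dist o (y n)) atTop atTop) (ht : ∀ n, t n ∈ Icc 0 A)
    (hx : ∀ n, dist x (Γ n (t n)) ≤ D) :
    ∃ γ, IsGeodesicRay γ o ∧ ∃ T, 0 ≤ T ∧ dist x (γ T) ≤ D := by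
  set U : Ultrafilter ℕ := Ultrafilter.of atTop
  have hdist : ∀ s s', 0 ≤ s → 0 ≤ s' →
      ∀ᶠ n in (U : Filter ℕ), dist (Γ n s) (Γ n s') = |s - s'| := fun s s' hs hs' =>
    Ultrafilter.of_le atTop <| (hy.eventually_ge_atTop (max s s')).mono fun n hn =>
      (hΓ n).dist_eq ⟨hs, (le_max_left s s').trans hn⟩ ⟨hs', (le_max_right s s').trans hn⟩
  have hlim : ∀ s : ℝ, ∃ p, 0 ≤ s → Tendsto (fun n => Γ n s) U (𝓝 p) := fun s => by
    by_cases hs : 0 ≤ s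
    · obtain ⟨p, -, hp⟩ := (isCompact_closedBall o s).exists_tendsto_ultrafilter U <|
        (hdist 0 s le_rfl hs).mono fun n hn => by
          rw [mem_closedBall, dist_comm, ← (hΓ n).1, hn, zero_sub, abs_neg, abs_of_nonneg hs]
      exact ⟨p, fun _ => hp⟩
    · exact ⟨o, fun h => absurd h hs⟩
  choose γ hγ using hlim
  have hγ_iso : ∀ s s', 0 ≤ s → 0 ≤ s' → dist (γ s) (γ s') = |s - s'| := fun s s' hs hs' =>
    tendsto_nhds_unique ((hγ s hs).dist (hγ s' hs'))
      (tendsto_const_nhds.congr' ((hdist s s' hs hs').mono fun _ hn => hn.symm))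
  have hγ0 : γ 0 = o := tendsto_nhds_unique (hγ 0 le_rfl) <| by
    simp only [(hΓ _).1]; exact tendsto_const_nhds
  obtain ⟨T, hT, htT⟩ := isCompact_Icc.exists_tendsto_ultrafilter U (Eventually.of_forall ht)
  refine ⟨γ, ⟨hγ0, hγ_iso⟩, T, hT.1, le_of_tendsto_of_tendsto
    (tendsto_const_nhds.dist (hγ T hT.1)) (?_ : Tendsto (fun n => D + |t n - T|) U (𝓝 D)) ?_⟩
  · simpa using tendsto_const_nhds.add ((htT.sub_const T).abs)
  · filter_upwards [Ultrafilter.of_le atTop (hy.eventually_ge_atTop A)] with n hn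
    have := (hΓ n).dist_eq ⟨(ht n).1, (ht n).2.trans hn⟩ ⟨hT.1, hT.2.trans hn⟩
    linarith [dist_triangle x (Γ n (t n)) (Γ n T), hx n]

end

/-- Every unbounded, proper, geodesic, Gromov hyperbolic, quasi-cobounded metric space is
visual: for every basepoint `o` there is `D > 0` such that every point is within distance `D`
of some geodesic ray emanating from `o`. -/
theorem quasi_cobounded_hyperbolic_is_visual {X : Type*} [MetricSpace X] [ProperSpace X]
    -- X is geodesic
    (hgeo : ∀ x y : X, ∃ γ : ℝ → X, γ 0 = x ∧ γ (dist x y) = y ∧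
        ∀ s ∈ Set.Icc (0 : ℝ) (dist x y), ∀ t ∈ Set.Icc (0 : ℝ) (dist x y),
          dist (γ s) (γ t) = |s - t|)
    -- X is unbounded
    (hunb : ∀ R : ℝ, ∃ x y : X, R < dist x y)
    -- X is Gromov hyperbolic
    (hhyp : ∃ δ : ℝ, 0 ≤ δ ∧ ∀ x y z w : X,
        min ((dist w x + dist w z - dist x z) / 2) ((dist w y + dist w z - dist y z) / 2) - δ ≤
          (dist w x + dist w y - dist x y) / 2)
    -- X is quasi-cobounded
    (hqc : ∃ K C r : ℝ, 1 ≤ K ∧ 0 ≤ C ∧ 0 < r ∧ ∀ x y : X, ∃ f : X → X,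
        (∀ z w : X, K⁻¹ * dist z w - C ≤ dist (f z) (f w) ∧
            dist (f z) (f w) ≤ K * dist z w + C) ∧
        (∀ w : X, ∃ z : X, dist w (f z) ≤ C) ∧
        dist (f x) y < r)
    (o : X) :
    ∃ D : ℝ, 0 < D ∧ ∀ x : X, ∃ γ : ℝ → X, γ 0 = o ∧
      (∀ s t : ℝ, 0 ≤ s → 0 ≤ t → dist (γ s) (γ t) = |s - t|) ∧
      ∃ t : ℝ, 0 ≤ t ∧ dist x (γ t) ≤ D := by
  obtain ⟨δ, -, hδ : IsGromovHyperbolic X δ⟩ := hhyp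
  obtain ⟨K, C, r, hK, -, -, hqc⟩ := hqc
  obtain ⟨c, hc⟩ := hδ.exists_far_gromovProduct_ge hgeo hunb (zero_lt_one.trans_le hK)
    (fun x y => (hqc x y).imp fun _ hf => ⟨hf.1, hf.2.2⟩) o
  refine ⟨max (c + 2 * δ) 1, by positivity, fun x => ?_⟩
  choose y hy hxy using fun n : ℕ => hc x n
  choose Γ hΓ using fun n => hgeo o (y n)
  obtain ⟨γ, hγ, T, hT, hxT⟩ := exists_isGeodesicRay_dist_le (D := c + 2 * δ)
    (t := fun n => gromovProduct o x (y n)) hΓ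
    (tendsto_atTop_mono hy tendsto_natCast_atTop_atTop)
    (fun n => ⟨gromovProduct_nonneg o x (y n), gromovProduct_le_dist_left o x (y n)⟩)
    (fun n => (hδ.dist_le_of_isGeodesicSegment (hΓ n) x).trans (by linarith [hxy n]))
  exact ⟨γ, hγ.1, hγ.2, T, hT, hxT.trans (le_max_left _ _)⟩
end

section
/- Let (X, d_X) be a metric space and (Y, d_Y) a nonempty compact metric space, and suppose X is locally quasi-similar to Y: there exist constants λ ≥ 1, K ≥ 1, R₀ > 1 such that for every R > R₀ and every subset C ⊆ X of diameter at most 1/R there is a map f : C → Y with (1/λ)·R^K·(d_X(x₁,x₂))^K ≤ d_Y(f(x₁), f(x₂)) ≤ λ·R^{1/K}·(d_X(x₁,x₂))^{1/K} for all x₁, x₂ ∈ C. If ℓ-dim X ≤ N for some natural number N, and dim Y ≤ n, then ℓ-dim X ≤ n. -/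
/-- The multiplicity of a family of sets is at most `m`: every point lies in at most `m`
members of the family. -/
def MultiplicityLE {Z : Type*} (U : Set (Set Z)) (m : ℕ) : Prop :=
  ∀ z : Z, {V | V ∈ U ∧ z ∈ V}.encard ≤ (m : ℕ∞)

/-- `ℓ-dim X ≤ n`: there is `δ ∈ (0,1)` such that for all sufficiently small `r > 0` there is
an open cover of `X` of multiplicity at most `n + 1`, mesh at most `r` and Lebesgue number at
least `δ·r` (every `δ·r`-ball lies in some member). -/
def LDimLE (X : Type*) [MetricSpace X] (n : ℕ) : Prop :=
  ∃ δ : ℝ, 0 < δ ∧ δ < 1 ∧ ∃ r₀ : ℝ, 0 < r₀ ∧ ∀ r : ℝ, 0 < r → r < r₀ →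
    ∃ U : Set (Set X), (∀ V ∈ U, IsOpen V) ∧ (∀ z : X, ∃ V ∈ U, z ∈ V) ∧
      MultiplicityLE U (n + 1) ∧
      (∀ V ∈ U, ∀ x ∈ V, ∀ y ∈ V, dist x y ≤ r) ∧
      ∀ z : X, ∃ V ∈ U, Metric.ball z (δ * r) ⊆ V

/-- `dim Y ≤ n` for a compact metric space: for every `ε > 0` there is an open cover of
multiplicity at most `n + 1` and mesh at most `ε`. -/
def DimLE (Y : Type*) [MetricSpace Y] (n : ℕ) : Prop :=
  ∀ ε : ℝ, 0 < ε → ∃ U : Set (Set Y), (∀ V ∈ U, IsOpen V) ∧ (∀ y : Y, ∃ V ∈ U, y ∈ V) ∧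
    MultiplicityLE U (n + 1) ∧ ∀ V ∈ U, ∀ x ∈ V, ∀ y ∈ V, dist x y ≤ ε

/-!
By Ostrand's coloring lemma, an open cover of multiplicity at most `m` and Lebesgue number `L`
can be redistributed into `m` colors, each a family of pairwise separated open sets, with
separation and Lebesgue number proportional to `L`. Hence `ℓ-dim X ≤ N` gives `(N + 1)`-colored
covers of `X` at every small scale `s` with constants linear in `s`, and `dim Y ≤ n` gives
`(n + 1)`-colored covers of `Y` at every scale.

The number of colors of `X` is lowered one at a time. A member `B` of the last color has
diameter at most `s`, so a quasi-similar map at scale `1 / s` sends it into `Y`; cutting `B` along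
the preimages of a fine colored cover of `Y` yields pieces much smaller than `s`, separated and
with Lebesgue number comparable to `s`, each carrying one of the remaining colors. A piece close
to a member of its new color is merged into that member, the others stay on their own; this keeps
every color separated at the cost of a constant factor. Once `n + 1` colors are left, their union
is the required cover.
-/

open Metric Set

structure IsColoredCover {Z ι : Type*} [MetricSpace Z] (A : ι → Set (Set Z)) (M sep leb : ℝ) :
    Prop where
  isOpen : ∀ i, ∀ V ∈ A i, IsOpen V
  dist_le : ∀ i, ∀ V ∈ A i, ∀ x ∈ V, ∀ y ∈ V, dist x y ≤ M
  le_dist : ∀ i, ∀ V ∈ A i, ∀ W ∈ A i, V ≠ W → ∀ x ∈ V, ∀ y ∈ W, sep ≤ dist x y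
  exists_ball_subset : ∀ z, ∃ i, ∃ V ∈ A i, ball z leb ⊆ V

theorem IsColoredCover.mono {Z ι : Type*} [MetricSpace Z] {A : ι → Set (Set Z)}
    {M sep leb M' : ℝ} (h : IsColoredCover A M sep leb) (hM : M ≤ M') :
    IsColoredCover A M' sep leb :=
  ⟨h.isOpen, fun i V hV x hx y hy => (h.dist_le i V hV x hx y hy).trans hM, h.le_dist,
    h.exists_ball_subset⟩

theorem MultiplicityLE.mono {Z : Type*} {U : Set (Set Z)} {m m' : ℕ} (h : MultiplicityLE U m)
    (hm : m ≤ m') : MultiplicityLE U m' :=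
  fun z => (h z).trans (by exact_mod_cast hm)

theorem exists_succ_subset_of_monotone {α : Type*} {S : ℕ → Set α} (hS : Monotone S) {m : ℕ}
    (hfin : (S (m + 1)).Finite) (hcard : (S (m + 1)).ncard ≤ m) (hne : (S 1).Nonempty) :
    ∃ k, 1 ≤ k ∧ k ≤ m ∧ S (k + 1) ⊆ S k := by
  by_contra! hgrow
  have hgrowth : ∀ j ≤ m, j + 1 ≤ (S (j + 1)).ncard := by
    intro j hj
    induction j with
    | zero => exact (ncard_pos (hfin.subset (hS (by omega)))).2 hne
    | succ j ih =>
      have hlt := ncard_lt_ncard ((hS (by omega : j + 1 ≤ j + 1 + 1)).ssubset_of_not_subset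
        (hgrow (j + 1) (by omega) hj)) (hfin.subset (hS (by omega)))
      have := ih (by omega)
      omega
  have := hgrowth m le_rfl
  omega

section Coloring

variable {Z : Type*} [MetricSpace Z]

/-- The distance to `Vᶜ` capped at `L`, computed in `ℝ≥0∞` so that `V = univ` gets the value `L`
rather than the junk value `infDist x ∅ = 0`. -/
noncomputable def capInfDist (L : ℝ) (V : Set Z) (x : Z) : ℝ :=
  (min (ENNReal.ofReal L) (infEDist x Vᶜ)).toReal

theorem capInfDist_nonneg (L : ℝ) (V : Set Z) (x : Z) : 0 ≤ capInfDist L V x :=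
  ENNReal.toReal_nonneg

theorem capInfDist_le {L : ℝ} (hL : 0 ≤ L) (V : Set Z) (x : Z) : capInfDist L V x ≤ L := by
  unfold capInfDist
  exact (ENNReal.toReal_mono ENNReal.ofReal_ne_top (min_le_left _ _)).trans_eq
    (ENNReal.toReal_ofReal hL)

theorem capInfDist_le_add_dist (L : ℝ) (V : Set Z) (x y : Z) :
    capInfDist L V x ≤ capInfDist L V y + dist x y := by
  have h : min (ENNReal.ofReal L) (infEDist x Vᶜ) ≤
      min (ENNReal.ofReal L) (infEDist y Vᶜ) + edist x y :=
    calc _ ≤ min (ENNReal.ofReal L + edist x y) (infEDist y Vᶜ + edist x y) :=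
          min_le_min le_self_add infEDist_le_infEDist_add_edist
      _ = _ := min_add_add_right _ _ _
  have hfin : min (ENNReal.ofReal L) (infEDist y Vᶜ) ≠ ⊤ :=
    ne_top_of_le_ne_top ENNReal.ofReal_ne_top (min_le_left _ _)
  rw [capInfDist, capInfDist, dist_edist, ← ENNReal.toReal_add hfin (edist_ne_top x y)]
  exact ENNReal.toReal_mono (ENNReal.add_ne_top.2 ⟨hfin, edist_ne_top x y⟩) h

theorem continuous_capInfDist (L : ℝ) (V : Set Z) : Continuous (capInfDist L V) :=
  (LipschitzWith.of_le_add (capInfDist_le_add_dist L V)).continuous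

theorem mem_of_capInfDist_pos {L : ℝ} {V : Set Z} {x : Z} (h : 0 < capInfDist L V x) : x ∈ V := by
  by_contra hx
  simp [capInfDist, infEDist_zero_of_mem (show x ∈ Vᶜ from hx)] at h

theorem capInfDist_eq_of_ball_subset {L : ℝ} (hL : 0 ≤ L) {V : Set Z} {z : Z}
    (h : ball z L ⊆ V) : capInfDist L V z = L := by
  have : ENNReal.ofReal L ≤ infEDist z Vᶜ := le_infEDist.2 fun y hy => by
    rw [edist_dist]
    exact ENNReal.ofReal_le_ofReal (not_lt.1 fun hlt => hy (h (mem_ball'.2 hlt)))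
  simp [capInfDist, min_eq_left this, ENNReal.toReal_ofReal hL]

noncomputable def capInfDistSup (L : ℝ) (T : Set (Set Z)) (x : Z) : ℝ :=
  ⨆ V : T, capInfDist L V x

theorem capInfDistSup_nonneg (L : ℝ) (T : Set (Set Z)) (x : Z) : 0 ≤ capInfDistSup L T x := by
  unfold capInfDistSup
  exact Real.iSup_nonneg fun V => capInfDist_nonneg L (V : Set Z) x

theorem capInfDist_le_capInfDistSup {L : ℝ} (hL : 0 ≤ L) {T : Set (Set Z)} {V : Set Z}
    (hV : V ∈ T) (x : Z) : capInfDist L V x ≤ capInfDistSup L T x := by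
  have hbdd : BddAbove (range fun W : T => capInfDist L (W : Set Z) x) := by
    refine ⟨L, ?_⟩
    rintro _ ⟨W, rfl⟩
    exact capInfDist_le hL (W : Set Z) x
  exact le_ciSup hbdd ⟨V, hV⟩

theorem capInfDistSup_le {L b : ℝ} {T : Set (Set Z)} {x : Z} (hb : 0 ≤ b)
    (h : ∀ V ∈ T, capInfDist L V x ≤ b) : capInfDistSup L T x ≤ b :=
  Real.iSup_le (fun V => h (V : Set Z) V.2) hb

theorem capInfDistSup_le_add_dist {L : ℝ} (hL : 0 ≤ L) (T : Set (Set Z)) (x y : Z) :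
    capInfDistSup L T x ≤ capInfDistSup L T y + dist x y :=
  capInfDistSup_le (add_nonneg (capInfDistSup_nonneg L T y) dist_nonneg) fun V hV =>
    (capInfDist_le_add_dist L V x y).trans
      (add_le_add_left (capInfDist_le_capInfDistSup hL hV y) _)

theorem continuous_capInfDistSup {L : ℝ} (hL : 0 ≤ L) (T : Set (Set Z)) :
    Continuous (capInfDistSup L T) :=
  (LipschitzWith.of_le_add (capInfDistSup_le_add_dist hL T)).continuous

def colorPiece (L : ℝ) (U S : Set (Set Z)) (c : ℝ) : Set Z :=
  {x | ∀ V ∈ S, capInfDistSup L (U \ S) x + c < capInfDist L V x}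

variable {L c : ℝ} {U S T : Set (Set Z)}

theorem isOpen_colorPiece (hL : 0 ≤ L) (hS : S.Finite) : IsOpen (colorPiece L U S c) := by
  have : colorPiece L U S c =
      ⋂ V ∈ S, {x | capInfDistSup L (U \ S) x + c < capInfDist L V x} := by
    ext; simp [colorPiece]
  rw [this]
  exact hS.isOpen_biInter fun V _ =>
    isOpen_lt ((continuous_capInfDistSup hL _).add continuous_const) (continuous_capInfDist L V)

theorem colorPiece_subset (hc : 0 ≤ c) {V : Set Z} (hV : V ∈ S) : colorPiece L U S c ⊆ V :=
  fun x hx => mem_of_capInfDist_pos (by linarith [hx V hV, capInfDistSup_nonneg L (U \ S) x])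

theorem lt_dist_of_mem_colorPiece (hL : 0 ≤ L) (hSU : S ⊆ U) (hTU : T ⊆ U) (hS : S.Finite)
    (hT : T.Finite) (hcard : S.ncard = T.ncard) (hST : S ≠ T) {x y : Z}
    (hx : x ∈ colorPiece L U S c) (hy : y ∈ colorPiece L U T c) : c < dist x y := by
  obtain ⟨V, hVS, hVT⟩ := not_subset.1 fun h => hST (eq_of_subset_of_ncard_le h hcard.ge hT)
  obtain ⟨E, hET, hES⟩ := not_subset.1 fun h => hST (eq_of_subset_of_ncard_le h hcard.le hS).symm
  have h1 := capInfDist_le_capInfDistSup hL (show E ∈ U \ S from ⟨hTU hET, hES⟩) x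
  have h2 := capInfDist_le_capInfDistSup hL (show V ∈ U \ T from ⟨hSU hVS, hVT⟩) y
  have h3 := capInfDist_le_add_dist L V x y
  have h4 := capInfDist_le_add_dist L E y x
  rw [dist_comm] at h4
  linarith [hx V hVS, hy E hET]

theorem ball_subset_colorPiece (hL : 0 ≤ L) {t : ℝ} {z : Z} (hc : 0 ≤ t - 2 * c)
    (hS : ∀ V ∈ S, t < capInfDist L V z) (hT : ∀ E ∈ U \ S, capInfDist L E z ≤ t - 2 * c) :
    ball z (c / 2) ⊆ colorPiece L U S c := by
  intro x hx V hV
  rw [mem_ball] at hx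
  have h1 := capInfDistSup_le_add_dist hL (U \ S) x z
  have h2 := capInfDistSup_le hc hT
  have h3 := capInfDist_le_add_dist L V z x
  rw [dist_comm] at h3
  linarith [hS V hV]

theorem exists_ball_subset_colorPiece (hL : 0 < L) {m : ℕ} (hmult : MultiplicityLE U m) {z : Z}
    (hleb : ∃ V ∈ U, ball z L ⊆ V) :
    ∃ S ⊆ U, S.Finite ∧ S.ncard ≠ 0 ∧ S.ncard ≤ m ∧
      ball z (L / (4 * (m + 1))) ⊆ colorPiece L U S (L / (2 * (m + 1))) := by
  set c := L / (2 * (m + 1)) with hc_def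
  have hc : 0 < c := by positivity
  have hcm : 2 * c * (m + 1) = L := by rw [hc_def]; field_simp
  -- Pigeonhole: the nested level sets `level 1 ⊆ ⋯ ⊆ level (m + 1)` consist of members through
  -- `z`, of which there are at most `m`, so two consecutive ones agree.
  set level : ℕ → Set (Set Z) := fun k => {V | V ∈ U ∧ L - 2 * c * k < capInfDist L V z}
  have hmono : Monotone level := fun k k' hk V hV =>
    ⟨hV.1, lt_of_le_of_lt (by gcongr) hV.2⟩
  have hlast : level (m + 1) ⊆ {V | V ∈ U ∧ z ∈ V} := fun V hV =>
    ⟨hV.1, mem_of_capInfDist_pos (by have := hV.2; push_cast at this; linarith)⟩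
  obtain ⟨hfin, hcard⟩ := encard_le_coe_iff_finite_ncard_le.1 (hmult z)
  obtain ⟨V₀, hV₀U, hV₀⟩ := hleb
  have hfirst : (level 1).Nonempty :=
    ⟨V₀, hV₀U, by rw [capInfDist_eq_of_ball_subset hL.le hV₀]; push_cast; linarith⟩
  obtain ⟨k, hk1, hkm, hk⟩ := exists_succ_subset_of_monotone hmono (hfin.subset hlast)
    ((ncard_le_ncard hlast hfin).trans hcard) hfirst
  have hsub : level k ⊆ {V | V ∈ U ∧ z ∈ V} := (hmono (by omega)).trans hlast
  refine ⟨level k, fun V hV => hV.1, hfin.subset hsub,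
    ((ncard_pos (hfin.subset hsub)).2 (hfirst.mono (hmono hk1))).ne',
    (ncard_le_ncard hsub hfin).trans hcard, ?_⟩
  have hkm' : (k : ℝ) + 1 ≤ m + 1 := by exact_mod_cast Nat.succ_le_succ hkm
  have hrad : L / (4 * (m + 1)) = c / 2 := by rw [hc_def]; field_simp; ring
  rw [hrad]
  exact ball_subset_colorPiece hL.le (t := L - 2 * c * k) (by nlinarith) (fun V hV => hV.2)
    fun E ⟨hEU, hE⟩ => not_lt.1 fun h => hE (hk ⟨hEU, by push_cast; linarith⟩)

end Coloring

/-- Ostrand's coloring lemma, in metric form. -/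
theorem exists_isColoredCover_of_multiplicityLE {Z : Type*} [MetricSpace Z] {U : Set (Set Z)}
    {m : ℕ} {L M : ℝ} (hL : 0 < L) (hmult : MultiplicityLE U m)
    (hmesh : ∀ V ∈ U, ∀ x ∈ V, ∀ y ∈ V, dist x y ≤ M) (hleb : ∀ z, ∃ V ∈ U, ball z L ⊆ V) :
    ∃ A : Fin m → Set (Set Z), IsColoredCover A M (L / (4 * (m + 1))) (L / (4 * (m + 1))) := by
  set c := L / (2 * (m + 1))
  refine ⟨fun i => {P | ∃ S ⊆ U, S.Finite ∧ S.ncard = i + 1 ∧ P = colorPiece L U S c},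
    ⟨?_, ?_, ?_, ?_⟩⟩
  · rintro i _ ⟨S, -, hS, -, rfl⟩
    exact isOpen_colorPiece hL.le hS
  · rintro i _ ⟨S, hSU, -, hcard, rfl⟩ x hx y hy
    obtain ⟨V, hV⟩ := nonempty_of_ncard_ne_zero (by omega : S.ncard ≠ 0)
    have hc : 0 ≤ c := by positivity
    exact hmesh V (hSU hV) x (colorPiece_subset hc hV hx) y (colorPiece_subset hc hV hy)
  · rintro i _ ⟨S, hSU, hS, hScard, rfl⟩ _ ⟨T, hTU, hT, hTcard, rfl⟩ hne x hx y hy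
    calc L / (4 * (m + 1)) ≤ c := div_le_div_of_nonneg_left hL.le (by positivity) (by linarith)
      _ ≤ dist x y := (lt_dist_of_mem_colorPiece hL.le hSU hTU hS hT (hScard.trans hTcard.symm)
          (by rintro rfl; exact hne rfl) hx hy).le
  · intro z
    obtain ⟨S, hSU, hS, hS0, hSm, hball⟩ := exists_ball_subset_colorPiece hL hmult (hleb z)
    exact ⟨⟨S.ncard - 1, by omega⟩, _, ⟨S, hSU, hS, by simp only; omega, rfl⟩, hball⟩

theorem IsColoredCover.multiplicityLE {Z ι : Type*} [MetricSpace Z] [Fintype ι]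
    {A : ι → Set (Set Z)} {M sep leb : ℝ} (h : IsColoredCover A M sep leb) (hsep : 0 < sep) :
    MultiplicityLE (⋃ i, A i) (Fintype.card ι) := by
  intro z
  set S := {V | V ∈ ⋃ i, A i ∧ z ∈ V}
  have hcolor : ∀ V : S, ∃ i, (V : Set Z) ∈ A i := fun V => mem_iUnion.1 V.2.1
  choose color hcolor using hcolor
  -- two members of one color through `z` would be at distance `0 < sep`
  have hinj : Function.Injective color := fun V W hVW => Subtype.ext <| by
    by_contra hne
    have := h.le_dist _ _ (hcolor V) _ (hVW ▸ hcolor W) hne z V.2.2 z W.2.2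
    rw [dist_self] at this
    linarith
  rw [← ENat.card_coe_set_eq, ← ENat.card_eq_coe_fintype_card]
  exact ENat.card_le_card_of_injective hinj

/-- The colored counterpart of `LDimLE X (m - 1)`. -/
def HasColoredCovers (X : Type*) [MetricSpace X] (m : ℕ) : Prop :=
  ∃ η s₀ : ℝ, 0 < η ∧ η < 1 ∧ 0 < s₀ ∧ ∀ s : ℝ, 0 < s → s < s₀ →
    ∃ A : Fin m → Set (Set X), IsColoredCover A s (η * s) (η * s)

section Dimension

variable {X : Type*} [MetricSpace X]

theorem LDimLE.mono {N n : ℕ} (h : LDimLE X N) (hNn : N ≤ n) : LDimLE X n := by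
  obtain ⟨δ, hδ0, hδ1, r₀, hr₀, h⟩ := h
  refine ⟨δ, hδ0, hδ1, r₀, hr₀, fun r hr hr₀ => ?_⟩
  obtain ⟨U, hopen, hcov, hmult, hmesh, hleb⟩ := h r hr hr₀
  exact ⟨U, hopen, hcov, hmult.mono (by omega), hmesh, hleb⟩

theorem LDimLE.hasColoredCovers {N : ℕ} (h : LDimLE X N) : HasColoredCovers X (N + 1) := by
  obtain ⟨δ, hδ0, hδ1, r₀, hr₀, h⟩ := h
  refine ⟨δ / (4 * (N + 2)), r₀, by positivity, ?_, hr₀, fun s hs hs₀ => ?_⟩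
  · rw [div_lt_one (by positivity)]
    linarith [(Nat.cast_nonneg N : (0 : ℝ) ≤ N)]
  obtain ⟨U, -, -, hmult, hmesh, hleb⟩ := h s hs hs₀
  obtain ⟨A, hA⟩ := exists_isColoredCover_of_multiplicityLE (by positivity) hmult hmesh hleb
  have hη : δ * s / (4 * ((N + 1 : ℕ) + 1)) = δ / (4 * (N + 2)) * s := by push_cast; ring
  exact ⟨A, hη ▸ hA⟩

theorem HasColoredCovers.ldimLE {n : ℕ} (h : HasColoredCovers X (n + 1)) : LDimLE X n := by
  obtain ⟨η, s₀, hη0, hη1, hs₀, h⟩ := h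
  refine ⟨η, hη0, hη1, s₀, hs₀, fun r hr hr₀ => ?_⟩
  obtain ⟨A, hA⟩ := h r hr hr₀
  refine ⟨⋃ i, A i, fun V hV => ?_, fun z => ?_, ?_, fun V hV => ?_, fun z => ?_⟩
  · obtain ⟨i, hi⟩ := mem_iUnion.1 hV
    exact hA.isOpen i V hi
  · obtain ⟨i, V, hV, hball⟩ := hA.exists_ball_subset z
    exact ⟨V, mem_iUnion.2 ⟨i, hV⟩, hball (mem_ball_self (by positivity))⟩
  · simpa using hA.multiplicityLE (by positivity)
  · obtain ⟨i, hi⟩ := mem_iUnion.1 hV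
    exact hA.dist_le i V hi
  · obtain ⟨i, V, hV, hball⟩ := hA.exists_ball_subset z
    exact ⟨V, mem_iUnion.2 ⟨i, hV⟩, hball⟩

end Dimension

theorem DimLE.exists_isColoredCover {Y : Type*} [MetricSpace Y] [CompactSpace Y] {n m : ℕ}
    (hY : DimLE Y n) (hm : n + 1 ≤ m) {ε : ℝ} (hε : 0 < ε) :
    ∃ γ > 0, ∃ C : Fin m → Set (Set Y), IsColoredCover C ε γ γ := by
  obtain ⟨U, hopen, hcov, hmult, hmesh⟩ := hY ε hε
  obtain ⟨δ, hδ, hleb⟩ := lebesgue_number_lemma_of_metric_sUnion isCompact_univ hopen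
    fun y _ => mem_sUnion.2 (hcov y)
  obtain ⟨C, hC⟩ := exists_isColoredCover_of_multiplicityLE hδ (hmult.mono hm) hmesh
    fun y => hleb y (mem_univ y)
  exact ⟨_, by positivity, C, hC⟩

def IsQuasiSimilarOn {X Y : Type*} [MetricSpace X] [MetricSpace Y] (lam K R : ℝ) (f : X → Y)
    (C : Set X) : Prop :=
  ∀ x₁ ∈ C, ∀ x₂ ∈ C, (1 / lam) * R ^ K * dist x₁ x₂ ^ K ≤ dist (f x₁) (f x₂) ∧
    dist (f x₁) (f x₂) ≤ lam * R ^ (1 / K) * dist x₁ x₂ ^ (1 / K)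

namespace IsQuasiSimilarOn

variable {X Y : Type*} [MetricSpace X] [MetricSpace Y] {lam K R : ℝ} {f : X → Y} {C : Set X}
  {x y : X}

theorem dist_lt (hf : IsQuasiSimilarOn lam K R f C) (hlam : 0 < lam) (hK : 0 < K) (hR : 0 < R)
    (hx : x ∈ C) (hy : y ∈ C) {γ : ℝ} (hγ : 0 ≤ γ) (h : dist x y < (γ / lam) ^ K / R) :
    dist (f x) (f y) < γ := by
  have hRd : R * dist x y < (γ / lam) ^ K := by rwa [lt_div_iff₀ hR, mul_comm] at h
  calc dist (f x) (f y) ≤ lam * R ^ (1 / K) * dist x y ^ (1 / K) := (hf x hx y hy).2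
    _ = lam * (R * dist x y) ^ K⁻¹ := by rw [Real.mul_rpow hR.le dist_nonneg, one_div]; ring
    _ < lam * ((γ / lam) ^ K) ^ K⁻¹ := by gcongr
    _ = γ := by rw [Real.rpow_rpow_inv (by positivity) hK.ne']; field_simp

theorem le_dist (hf : IsQuasiSimilarOn lam K R f C) (hlam : 0 < lam) (hK : 0 < K) (hR : 0 < R)
    (hx : x ∈ C) (hy : y ∈ C) {γ : ℝ} (hγ : 0 ≤ γ) (h : γ ≤ dist (f x) (f y)) :
    (γ / lam) ^ K / R ≤ dist x y :=
  not_lt.1 fun hlt => (hf.dist_lt hlam hK hR hx hy hγ hlt).not_ge h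

theorem dist_le_of_dist_image_le (hf : IsQuasiSimilarOn lam K R f C) (hlam : 0 < lam)
    (hK : 0 < K) (hR : 0 < R) (hx : x ∈ C) (hy : y ∈ C) {β : ℝ} (hβ : 0 ≤ β)
    (h : dist (f x) (f y) ≤ β ^ K / lam) : dist x y ≤ β / R := by
  have hpow : (R * dist x y) ^ K ≤ β ^ K := by
    rw [Real.mul_rpow hR.le dist_nonneg]
    calc R ^ K * dist x y ^ K = lam * ((1 / lam) * R ^ K * dist x y ^ K) := by field_simp
      _ ≤ lam * (β ^ K / lam) := by gcongr; exact (hf x hx y hy).1.trans h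
      _ = β ^ K := by field_simp
  rw [le_div_iff₀ hR, mul_comm]
  exact (Real.rpow_le_rpow_iff (by positivity) hβ hK).1 hpow

theorem continuousOn (hf : IsQuasiSimilarOn lam K R f C) (hlam : 0 < lam) (hK : 0 < K)
    (hR : 0 < R) : ContinuousOn f C :=
  Metric.continuousOn_iff.2 fun _ hb ε hε =>
    ⟨(ε / lam) ^ K / R, by positivity, fun _ ha had => hf.dist_lt hlam hK hR ha hb hε.le had⟩

end IsQuasiSimilarOn

section Pullback

variable {X Y : Type*} [MetricSpace X] [MetricSpace Y] {lam K R : ℝ} {𝓑 : Set (Set X)}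
  {f : Set X → X → Y}

def pullbackFamily (𝓑 : Set (Set X)) (f : Set X → X → Y) (C : Set (Set Y)) : Set (Set X) :=
  {W | ∃ B ∈ 𝓑, ∃ Ω ∈ C, W = B ∩ f B ⁻¹' Ω}

theorem isOpen_of_mem_pullbackFamily (hf : ∀ B ∈ 𝓑, IsQuasiSimilarOn lam K R (f B) B)
    (hlam : 0 < lam) (hK : 0 < K) (hR : 0 < R) (h𝓑 : ∀ B ∈ 𝓑, IsOpen B) {C : Set (Set Y)}
    (hC : ∀ Ω ∈ C, IsOpen Ω) {W : Set X} (hW : W ∈ pullbackFamily 𝓑 f C) : IsOpen W := by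
  obtain ⟨B, hB, Ω, hΩ, rfl⟩ := hW
  exact ((hf B hB).continuousOn hlam hK hR).isOpen_inter_preimage (h𝓑 B hB) (hC Ω hΩ)

theorem dist_le_of_mem_pullbackFamily (hf : ∀ B ∈ 𝓑, IsQuasiSimilarOn lam K R (f B) B)
    (hlam : 0 < lam) (hK : 0 < K) (hR : 0 < R) {C : Set (Set Y)} {β : ℝ} (hβ : 0 ≤ β)
    (hC : ∀ Ω ∈ C, ∀ u ∈ Ω, ∀ v ∈ Ω, dist u v ≤ β ^ K / lam) {W : Set X}
    (hW : W ∈ pullbackFamily 𝓑 f C) {x y : X} (hx : x ∈ W) (hy : y ∈ W) :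
    dist x y ≤ β / R := by
  obtain ⟨B, hB, Ω, hΩ, rfl⟩ := hW
  exact (hf B hB).dist_le_of_dist_image_le hlam hK hR hx.1 hy.1 hβ (hC Ω hΩ _ hx.2 _ hy.2)

theorem le_dist_of_mem_pullbackFamily (hf : ∀ B ∈ 𝓑, IsQuasiSimilarOn lam K R (f B) B)
    (hlam : 0 < lam) (hK : 0 < K) (hR : 0 < R) {S γ : ℝ} (hγ : 0 ≤ γ)
    (h𝓑 : ∀ B ∈ 𝓑, ∀ B' ∈ 𝓑, B ≠ B' → ∀ x ∈ B, ∀ y ∈ B', S ≤ dist x y) {C : Set (Set Y)}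
    (hC : ∀ Ω ∈ C, ∀ Ω' ∈ C, Ω ≠ Ω' → ∀ u ∈ Ω, ∀ v ∈ Ω', γ ≤ dist u v) {W W' : Set X}
    (hW : W ∈ pullbackFamily 𝓑 f C) (hW' : W' ∈ pullbackFamily 𝓑 f C) (hne : W ≠ W')
    {x y : X} (hx : x ∈ W) (hy : y ∈ W') : min S ((γ / lam) ^ K / R) ≤ dist x y := by
  obtain ⟨B, hB, Ω, hΩ, rfl⟩ := hW
  obtain ⟨B', hB', Ω', hΩ', rfl⟩ := hW'
  by_cases hBB : B = B'
  · subst hBB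
    have hΩΩ : Ω ≠ Ω' := by rintro rfl; exact hne rfl
    exact min_le_of_right_le <| (hf B hB).le_dist hlam hK hR hx.1 hy.1 hγ
      (hC Ω hΩ Ω' hΩ' hΩΩ _ hx.2 _ hy.2)
  · exact min_le_of_left_le (h𝓑 B hB B' hB' hBB x hx.1 y hy.1)

theorem exists_ball_subset_pullbackFamily (hf : ∀ B ∈ 𝓑, IsQuasiSimilarOn lam K R (f B) B)
    (hlam : 0 < lam) (hK : 0 < K) (hR : 0 < R) {ι : Type*} {C : ι → Set (Set Y)} {γ : ℝ}
    (hγ : 0 ≤ γ) (hC : ∀ y, ∃ i, ∃ Ω ∈ C i, ball y γ ⊆ Ω) {B : Set X} (hB : B ∈ 𝓑) {z : X}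
    {ρ : ℝ} (hz : ball z ρ ⊆ B) :
    ∃ i, ∃ W ∈ pullbackFamily 𝓑 f (C i), ball z (min ρ ((γ / lam) ^ K / R)) ⊆ W := by
  obtain ⟨i, Ω, hΩ, hball⟩ := hC (f B z)
  refine ⟨i, _, ⟨B, hB, Ω, hΩ, rfl⟩, fun x hx => ?_⟩
  have hxB : x ∈ B := hz (ball_subset_ball (min_le_left _ _) hx)
  have hzB : z ∈ B := hz (mem_ball_self ((pos_of_mem_ball hx).trans_le (min_le_left _ _)))
  exact ⟨hxB, hball ((hf B hB).dist_lt hlam hK hR hxB hzB hγ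
    ((mem_ball.1 hx).trans_le (min_le_right _ _)))⟩

end Pullback

section Absorb

variable {X : Type*} [MetricSpace X]

def enlarge (P : Set (Set X)) (a : ℝ) (B : Set X) : Set X :=
  B ∪ ⋃₀ {W | W ∈ P ∧ ∃ x ∈ W, ∃ y ∈ B, dist x y < a}

def absorb (A P : Set (Set X)) (a : ℝ) : Set (Set X) :=
  enlarge P a '' A ∪ {W | W ∈ P ∧ ∀ B ∈ A, ∀ x ∈ W, ∀ y ∈ B, a ≤ dist x y}

variable {A P : Set (Set X)} {a μ : ℝ}

theorem exists_dist_le_of_mem_enlarge (hμ : 0 ≤ μ) (ha : 0 ≤ a)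
    (hP : ∀ W ∈ P, ∀ x ∈ W, ∀ y ∈ W, dist x y ≤ μ) {B : Set X} {x : X}
    (hx : x ∈ enlarge P a B) : ∃ y ∈ B, dist x y ≤ μ + a := by
  rcases hx with hx | ⟨W, ⟨hW, w, hw, u, hu, hwu⟩, hxW⟩
  · exact ⟨x, hx, by rw [dist_self]; positivity⟩
  · exact ⟨u, hu, by linarith [dist_triangle x w u, hP W hW x hxW w hw]⟩

theorem isOpen_of_mem_absorb (hA : ∀ B ∈ A, IsOpen B) (hP : ∀ W ∈ P, IsOpen W) {V : Set X}
    (hV : V ∈ absorb A P a) : IsOpen V := by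
  rcases hV with ⟨B, hB, rfl⟩ | ⟨hV, -⟩
  · exact (hA B hB).union (isOpen_sUnion fun W hW => hP W hW.1)
  · exact hP V hV

theorem dist_le_of_mem_absorb {M : ℝ} (hM : 0 ≤ M) (hμ : 0 ≤ μ) (ha : 0 ≤ a)
    (hA : ∀ B ∈ A, ∀ x ∈ B, ∀ y ∈ B, dist x y ≤ M) (hP : ∀ W ∈ P, ∀ x ∈ W, ∀ y ∈ W, dist x y ≤ μ)
    {V : Set X} (hV : V ∈ absorb A P a) : ∀ x ∈ V, ∀ y ∈ V, dist x y ≤ M + 2 * (μ + a) := by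
  intro x hx y hy
  rcases hV with ⟨B, hB, rfl⟩ | ⟨hV, -⟩
  · obtain ⟨x₀, hx₀, hxx₀⟩ := exists_dist_le_of_mem_enlarge hμ ha hP hx
    obtain ⟨y₀, hy₀, hyy₀⟩ := exists_dist_le_of_mem_enlarge hμ ha hP hy
    linarith [dist_triangle4 x x₀ y₀ y, dist_comm y y₀, hA B hB x₀ hx₀ y₀ hy₀]
  · linarith [hP V hV x hx y hy]

theorem le_dist_of_mem_enlarge_of_far {σ t : ℝ} (hta : t ≤ a) (htσ : t ≤ σ)
    (hPsep : ∀ W ∈ P, ∀ W' ∈ P, W ≠ W' → ∀ x ∈ W, ∀ y ∈ W', σ ≤ dist x y) {B W : Set X}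
    (hB : B ∈ A) (hW : W ∈ P) (hfar : ∀ B ∈ A, ∀ x ∈ W, ∀ y ∈ B, a ≤ dist x y) {x y : X}
    (hx : x ∈ enlarge P a B) (hy : y ∈ W) : t ≤ dist x y := by
  rcases hx with hx | ⟨W', ⟨hW', u, hu, v, hv, huv⟩, hxW'⟩
  · rw [dist_comm]
    exact hta.trans (hfar B hB y hy x hx)
  · have hne : W' ≠ W := by
      rintro rfl
      exact (hfar B hB u hu v hv).not_gt huv
    exact htσ.trans (hPsep W' hW' W hW hne x hxW' y hy)

theorem le_dist_of_mem_absorb {S σ t : ℝ} (hμ : 0 ≤ μ) (ha : 0 ≤ a)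
    (hP : ∀ W ∈ P, ∀ x ∈ W, ∀ y ∈ W, dist x y ≤ μ)
    (hAsep : ∀ B ∈ A, ∀ B' ∈ A, B ≠ B' → ∀ x ∈ B, ∀ y ∈ B', S ≤ dist x y)
    (hPsep : ∀ W ∈ P, ∀ W' ∈ P, W ≠ W' → ∀ x ∈ W, ∀ y ∈ W', σ ≤ dist x y)
    (hta : t ≤ a) (htσ : t ≤ σ) (htS : t ≤ S - 2 * (μ + a)) {V V' : Set X}
    (hV : V ∈ absorb A P a) (hV' : V' ∈ absorb A P a) (hne : V ≠ V') :
    ∀ x ∈ V, ∀ y ∈ V', t ≤ dist x y := by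
  intro x hx y hy
  rcases hV with ⟨B, hB, rfl⟩ | ⟨hV, hVfar⟩ <;> rcases hV' with ⟨B', hB', rfl⟩ | ⟨hV', hV'far⟩
  · have hBB : B ≠ B' := by rintro rfl; exact hne rfl
    obtain ⟨x₀, hx₀, hxx₀⟩ := exists_dist_le_of_mem_enlarge hμ ha hP hx
    obtain ⟨y₀, hy₀, hyy₀⟩ := exists_dist_le_of_mem_enlarge hμ ha hP hy
    linarith [dist_triangle4 x₀ x y y₀, dist_comm x₀ x, hAsep B hB B' hB' hBB x₀ hx₀ y₀ hy₀]
  · exact le_dist_of_mem_enlarge_of_far hta htσ hPsep hB hV' hV'far hx hy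
  · rw [dist_comm]
    exact le_dist_of_mem_enlarge_of_far hta htσ hPsep hB' hV hVfar hy hx
  · exact htσ.trans (hPsep V hV V' hV' hne x hx y hy)

theorem exists_superset_mem_absorb {W : Set X} (hW : W ∈ P) : ∃ V ∈ absorb A P a, W ⊆ V := by
  by_cases hnear : ∃ B ∈ A, ∃ x ∈ W, ∃ y ∈ B, dist x y < a
  · obtain ⟨B, hB, hWB⟩ := hnear
    exact ⟨enlarge P a B, Or.inl ⟨B, hB, rfl⟩, fun x hx => Or.inr ⟨W, ⟨hW, hWB⟩, hx⟩⟩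
  · push Not at hnear
    exact ⟨W, Or.inr ⟨hW, hnear⟩, subset_rfl⟩

theorem IsColoredCover.absorb_last {m : ℕ} {A : Fin (m + 1) → Set (Set X)}
    {P : Fin m → Set (Set X)} {M S ℓ σ t r : ℝ} (hA : IsColoredCover A M S ℓ) (hM : 0 ≤ M)
    (hμ : 0 ≤ μ) (ha : 0 ≤ a) (hPopen : ∀ i, ∀ W ∈ P i, IsOpen W)
    (hPmesh : ∀ i, ∀ W ∈ P i, ∀ x ∈ W, ∀ y ∈ W, dist x y ≤ μ)
    (hPsep : ∀ i, ∀ W ∈ P i, ∀ W' ∈ P i, W ≠ W' → ∀ x ∈ W, ∀ y ∈ W', σ ≤ dist x y)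
    (hPleb : ∀ z, ∀ B ∈ A (Fin.last m), ball z ℓ ⊆ B → ∃ i, ∃ W ∈ P i, ball z r ⊆ W)
    (hr : r ≤ ℓ) (hta : t ≤ a) (htσ : t ≤ σ) (htS : t ≤ S - 2 * (μ + a)) :
    IsColoredCover (fun i => absorb (A i.castSucc) (P i) a) (M + 2 * (μ + a)) t r where
  isOpen i _ hV := isOpen_of_mem_absorb (hA.isOpen _) (hPopen i) hV
  dist_le i _ hV := dist_le_of_mem_absorb hM hμ ha (hA.dist_le _) (hPmesh i) hV
  le_dist i _ hV _ hV' := le_dist_of_mem_absorb hμ ha (hPmesh i) (hA.le_dist _) (hPsep i) hta htσ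
    htS hV hV'
  exists_ball_subset z := by
    obtain ⟨j, B, hB, hball⟩ := hA.exists_ball_subset z
    rcases Fin.eq_castSucc_or_eq_last j with ⟨i, rfl⟩ | rfl
    · exact ⟨i, enlarge (P i) a B, Or.inl ⟨B, hB, rfl⟩,
        (ball_subset_ball hr).trans (hball.trans subset_union_left)⟩
    · obtain ⟨i, W, hW, hzW⟩ := hPleb z B hB hball
      obtain ⟨V, hV, hWV⟩ := exists_superset_mem_absorb (A := A i.castSucc) (a := a) hW
      exact ⟨i, V, hV, hzW.trans hWV⟩

end Absorb

theorem HasColoredCovers.reduce {X Y : Type*} [MetricSpace X] [MetricSpace Y] {lam K R₀ : ℝ}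
    {m : ℕ} (hlam : 0 < lam) (hK : 0 < K) (hR₀ : 0 < R₀)
    (hqs : ∀ R : ℝ, R₀ < R → ∀ C : Set X, (∀ x ∈ C, ∀ y ∈ C, dist x y ≤ 1 / R) →
      ∃ f : X → Y, IsQuasiSimilarOn lam K R f C)
    (hY : ∀ ε > 0, ∃ γ > 0, ∃ C : Fin m → Set (Set Y), IsColoredCover C ε γ γ)
    (h : HasColoredCovers X (m + 1)) : HasColoredCovers X m := by
  obtain ⟨η, s₀, hη0, hη1, hs₀, hX⟩ := h
  obtain ⟨γ, hγ, C, hC⟩ := hY ((η / 8) ^ K / lam) (by positivity)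
  set τ := min (η / 4) ((γ / lam) ^ K)
  have hτ0 : 0 < τ := lt_min (by positivity) (by positivity)
  have hτη : τ ≤ η / 4 := min_le_left _ _
  refine ⟨τ / 2, 2 * min s₀ R₀⁻¹, by positivity, by linarith, by positivity, fun s' hs' hs's₀ => ?_⟩
  set s := s' / 2 with hs_def
  have hs : 0 < s := by positivity
  have hss₀ : s < min s₀ R₀⁻¹ := by linarith
  obtain ⟨A, hA⟩ := hX s hs (hss₀.trans_le (min_le_left _ _))
  have hR : R₀ < s⁻¹ := (lt_inv_comm₀ hR₀ hs).2 (hss₀.trans_le (min_le_right _ _))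
  have hR' : 0 < s⁻¹ := by positivity
  -- `choose!` needs a default map, which `hqs` provides through `C = ∅`
  have : Nonempty (X → Y) := let ⟨f, _⟩ := hqs s⁻¹ hR ∅ (by simp); ⟨f⟩
  choose! f hf using fun B (hB : B ∈ A (Fin.last m)) =>
    hqs s⁻¹ hR B (by simpa using hA.dist_le _ B hB)
  have hτs : τ * s ≤ η / 4 * s := by gcongr
  have hτσ : τ * s ≤ min (η * s) ((γ / lam) ^ K / s⁻¹) :=
    le_min (by nlinarith) (by rw [div_inv_eq_mul]; gcongr; exact min_le_right _ _)
  have hnew := hA.absorb_last (P := fun i => pullbackFamily (A (Fin.last m)) f (C i))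
    (μ := η / 8 * s) (a := η / 4 * s) (σ := min (η * s) ((γ / lam) ^ K / s⁻¹)) (t := τ * s)
    (r := τ * s) hs.le (by positivity) (by positivity)
    (fun i W hW => isOpen_of_mem_pullbackFamily hf hlam hK hR' (hA.isOpen _) (hC.isOpen i) hW)
    (fun i W hW x hx y hy => by
      simpa [div_inv_eq_mul] using dist_le_of_mem_pullbackFamily hf hlam hK hR'
        (by positivity) (hC.dist_le i) hW hx hy)
    (fun i W hW W' hW' hne x hx y hy => le_dist_of_mem_pullbackFamily hf hlam hK hR' hγ.le
      (hA.le_dist _) (hC.le_dist i) hW hW' hne hx hy)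
    (fun z B hB hball => by
      obtain ⟨i, W, hW, hzW⟩ := exists_ball_subset_pullbackFamily hf hlam hK hR' hγ.le
        hC.exists_ball_subset hB hball
      exact ⟨i, W, hW, (ball_subset_ball hτσ).trans hzW⟩)
    (by nlinarith) hτs hτσ (by linarith)
  have hτ2 : τ / 2 * s' = τ * s := by rw [hs_def]; ring
  rw [hτ2]
  exact ⟨_, hnew.mono (by nlinarith)⟩

theorem ldim_le_dim_of_locally_quasi_similar_general {X Y : Type*} [MetricSpace X] [MetricSpace Y]
    [CompactSpace Y]
    -- X is locally quasi-similar to Y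
    (hlqs : ∃ lam K R₀ : ℝ, 1 ≤ lam ∧ 1 ≤ K ∧ 1 < R₀ ∧
        ∀ R : ℝ, R₀ < R → ∀ C : Set X, (∀ x ∈ C, ∀ y ∈ C, dist x y ≤ 1 / R) →
          ∃ f : X → Y, ∀ x₁ ∈ C, ∀ x₂ ∈ C,
            (1 / lam) * R ^ K * dist x₁ x₂ ^ K ≤ dist (f x₁) (f x₂) ∧
              dist (f x₁) (f x₂) ≤ lam * R ^ (1 / K) * dist x₁ x₂ ^ (1 / K))
    (hfin : ∃ N : ℕ, LDimLE X N) (n : ℕ) (hY : DimLE Y n) :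
    LDimLE X n := by
  obtain ⟨lam, K, R₀, hlam, hK, hR₀, hqs⟩ := hlqs
  obtain ⟨N, hN⟩ := hfin
  rcases le_or_gt N n with hNn | hnN
  · exact hN.mono hNn
  have descend : ∀ m, n + 1 ≤ m → HasColoredCovers X m → HasColoredCovers X (n + 1) := by
    intro m hm
    induction m, hm using Nat.le_induction with
    | base => exact id
    | succ m hm ih =>
      exact fun h => ih (h.reduce (by linarith) (by linarith) (by linarith) hqs
        fun ε hε => hY.exists_isColoredCover hm hε)
  exact (descend (N + 1) (by omega) hN.hasColoredCovers).ldimLE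

/-- If `X` is locally quasi-similar to a compact metric space `Y` and `ℓ-dim X` is finite,
then `ℓ-dim X ≤ dim Y`. -/
theorem ldim_le_dim_of_locally_quasi_similar {X Y : Type*} [MetricSpace X] [MetricSpace Y]
    [Nonempty Y] [CompactSpace Y]
    -- X is locally quasi-similar to Y
    (hlqs : ∃ lam K R₀ : ℝ, 1 ≤ lam ∧ 1 ≤ K ∧ 1 < R₀ ∧
        ∀ R : ℝ, R₀ < R → ∀ C : Set X, (∀ x ∈ C, ∀ y ∈ C, dist x y ≤ 1 / R) →
          ∃ f : X → Y, ∀ x₁ ∈ C, ∀ x₂ ∈ C,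
            (1 / lam) * R ^ K * dist x₁ x₂ ^ K ≤ dist (f x₁) (f x₂) ∧
              dist (f x₁) (f x₂) ≤ lam * R ^ (1 / K) * dist x₁ x₂ ^ (1 / K))
    (hfin : ∃ N : ℕ, LDimLE X N) (n : ℕ) (hY : DimLE Y n) :
    LDimLE X n :=
  ldim_le_dim_of_locally_quasi_similar_general hlqs hfin n hY
end

section
/- Existence of blockers in free groups: let r ≥ 3 and let F_r be the free group on a set S of r generators. Let u ∈ F_r with word length ‖u‖ ≥ 2. Then there exists a constant C_u > 0 such that for all x, y ∈ F_r ∖ {1} there exists w ∈ F_r with ‖u‖ ≤ ‖w‖ < C_u such that the product x·w·y is reduced, i.e. ‖xwy‖ = ‖x‖ + ‖w‖ + ‖y‖, and w is a u-blocker for (x, y): #_u(xwy) = #_u(x) + #_u(y) and #_{u⁻¹}(xwy) = #_{u⁻¹}(x) + #_{u⁻¹}(y). -/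
/-- The number of (possibly overlapping) occurrences of the word `u` as a contiguous subword
of the word `v`. -/
def occCount {α : Type*} [DecidableEq α] (u v : List α) : ℕ :=
  ((List.range (v.length + 1 - u.length)).filter
    fun i => decide ((v.drop i).take u.length = u)).length

/-!
The blocker is `w = d cⁿ` with `n = ‖u‖`, where the letters `c` and `d` avoid a few forbidden
values, which is possible because there are `2r ≥ 6` letters: `c` differs from the first and last
letters of `u` and `u⁻¹` and from the inverse of the first letter of `y`, and `d` differs from the
last letters of `u` and `u⁻¹` and from the inverses of `c` and of the last letter of `x`. Then
`x w y` is reduced, and a window of length `n` of `x w y` that meets `w` either starts inside `cⁿ`,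
hence starts with `c`, or starts in `x` and ends inside `w`, hence ends with `d` or `c`; so it is
neither `u` nor `u⁻¹`, and all their occurrences in `x w y` lie inside `x` or inside `y`.
-/

open List

namespace FreeGroup

variable {α : Type*}

theorem rel_iff_ne_inv {a b : α × Bool} : (a.1 = b.1 → a.2 = b.2) ↔ b ≠ (a.1, !a.2) := by
  obtain ⟨a₁, a₂⟩ := a
  obtain ⟨b₁, b₂⟩ := b
  cases a₂ <;> cases b₂ <;> simp [eq_comm]

theorem ne_inv_comm {a b : α × Bool} : b ≠ (a.1, !a.2) ↔ a ≠ (b.1, !b.2) := by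
  rw [← rel_iff_ne_inv, ← rel_iff_ne_inv, eq_comm, @eq_comm _ a.2]

theorem IsReduced.append {L₁ L₂ : List (α × Bool)} (h₁ : IsReduced L₁) (h₂ : IsReduced L₂)
    (h : ∀ a ∈ L₁.getLast?, ∀ b ∈ L₂.head?, b ≠ (a.1, !a.2)) : IsReduced (L₁ ++ L₂) :=
  isChain_append.2 ⟨h₁, h₂, fun a ha b hb => rel_iff_ne_inv.2 (h a ha b hb)⟩

theorem isReduced_cons_replicate {c d : α × Bool} (h : c ≠ (d.1, !d.2)) (n : ℕ) :
    IsReduced (d :: replicate n c) := by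
  cases n with
  | zero => exact .singleton
  | succ n =>
    refine IsReduced.append (L₁ := [d]) .singleton ?_ (by simpa using h)
    exact isChain_replicate_of_rel (n + 1) fun (_ : c.1 = c.1) => rfl

variable [DecidableEq α]

theorem toWord_mul_mk_mul {x y : FreeGroup α} {L : List (α × Bool)}
    (h : IsReduced (x.toWord ++ L ++ y.toWord)) :
    (x * mk L * y).toWord = x.toWord ++ L ++ y.toWord := by
  have hmk : x * mk L * y = mk (x.toWord ++ L ++ y.toWord) := by
    rw [← mul_mk, ← mul_mk, mk_toWord, mk_toWord]
  rw [hmk, toWord_mk, h.reduce_eq]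

end FreeGroup

section Occurrences

open scoped Finset

variable {α : Type*}

theorem getElem?_append_cons_replicate_append (X Y : List α) (c d : α) {n j : ℕ}
    (h₁ : X.length ≤ j) (h₂ : j ≤ X.length + n) :
    (X ++ d :: replicate n c ++ Y)[j]? = some (if j = X.length then d else c) := by
  obtain ⟨k, rfl⟩ := Nat.exists_eq_add_of_le h₁
  rw [append_assoc, getElem?_append_right (by omega), Nat.add_sub_cancel_left, cons_append]
  cases k with
  | zero => simp
  | succ k => simp [getElem?_append_left, show k < n by omega]

variable [DecidableEq α]

theorem occCount_eq_card (U V : List α) :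
    occCount U V = #{i ∈ Finset.range (V.length + 1 - U.length) | (V.drop i).take U.length = U} :=
  rfl

theorem occCount_append_append {U X W Y : List α} (hU : U ≠ [])
    (h : ∀ i, X.length < i + U.length → i < X.length + W.length →
      ((X ++ W ++ Y).drop i).take U.length ≠ U) :
    occCount U (X ++ W ++ Y) = occCount U X + occCount U Y := by
  have hL : 0 < U.length := length_pos_iff.2 hU
  have hZ : (X ++ W ++ Y).length = X.length + W.length + Y.length := by simp [Nat.add_assoc]
  have hpos : {i ∈ Finset.range ((X ++ W ++ Y).length + 1 - U.length) |
        ((X ++ W ++ Y).drop i).take U.length = U} =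
      {i ∈ Finset.range (X.length + 1 - U.length) | (X.drop i).take U.length = U} ∪
        {j ∈ Finset.range (Y.length + 1 - U.length) | (Y.drop j).take U.length = U}.map
          (addLeftEmbedding (X.length + W.length)) := by
    ext i
    simp only [Finset.mem_union, Finset.mem_filter, Finset.mem_range, Finset.mem_map,
      addLeftEmbedding_apply, hZ]
    constructor
    · rintro ⟨hi, hmatch⟩
      by_cases hiX : i + U.length ≤ X.length
      · left
        rw [append_assoc, drop_append_of_le_length (by omega),
          take_append_of_le_length (by simp; omega)] at hmatch
        exact ⟨by omega, hmatch⟩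
      · by_cases hiY : X.length + W.length ≤ i
        · right
          obtain ⟨j, rfl⟩ := Nat.exists_eq_add_of_le hiY
          rw [← length_append, drop_length_add_append] at hmatch
          exact ⟨j, ⟨by omega, hmatch⟩, rfl⟩
        · exact absurd hmatch (h i (by omega) (by omega))
    · rintro (⟨hi, hmatch⟩ | ⟨j, ⟨hj, hmatch⟩, rfl⟩)
      · rw [append_assoc, drop_append_of_le_length (by omega),
          take_append_of_le_length (by simp; omega)]
        exact ⟨by omega, hmatch⟩
      · rw [← length_append, drop_length_add_append]
        exact ⟨by simp; omega, hmatch⟩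
  rw [occCount_eq_card, occCount_eq_card, occCount_eq_card, hpos, Finset.card_union_of_disjoint,
    Finset.card_map]
  simp only [Finset.disjoint_left, Finset.mem_filter, Finset.mem_range, Finset.mem_map,
    addLeftEmbedding_apply]
  rintro _ ⟨hi, -⟩ ⟨j, -, rfl⟩
  omega

theorem occCount_append_cons_replicate_append {V X Y : List α} {c d : α} (hV : V ≠ [])
    (hc_head : c ≠ V.head hV) (hc_last : c ≠ V.getLast hV) (hd_last : d ≠ V.getLast hV) :
    occCount V (X ++ d :: replicate V.length c ++ Y) = occCount V X + occCount V Y := by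
  refine occCount_append_append hV fun i hi₁ hi₂ hmatch => ?_
  have hentry : ∀ k < V.length, (X ++ d :: replicate V.length c ++ Y)[i + k]? = V[k]? := by
    intro k hk
    conv_rhs => rw [← hmatch]
    rw [getElem?_take, if_pos hk, getElem?_drop]
  simp only [length_cons, length_replicate] at hi₂
  rcases Nat.lt_or_ge X.length i with hi | hi
  · have hfirst := hentry 0 (length_pos_iff.2 hV)
    rw [← head?_eq_getElem?, head?_eq_some_head hV,
      getElem?_append_cons_replicate_append _ _ _ _ (by omega) (by omega), if_neg (by omega)]
      at hfirst
    exact hc_head (Option.some_inj.1 hfirst)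
  · have hlast := hentry (V.length - 1) (by omega)
    rw [← getLast?_eq_getElem?, getLast?_eq_some_getLast hV,
      getElem?_append_cons_replicate_append _ _ _ _ (by omega) (by omega)] at hlast
    split_ifs at hlast
    exacts [hd_last (Option.some_inj.1 hlast), hc_last (Option.some_inj.1 hlast)]

end Occurrences

open FreeGroup

theorem exists_blocker_word {α : Type*} [Fintype α] [DecidableEq α] (hα : 3 ≤ Fintype.card α)
    {U X Y : List (α × Bool)} (hU : U ≠ []) (hX : X ≠ []) (hY : Y ≠ [])
    (hXr : IsReduced X) (hYr : IsReduced Y) :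
    ∃ W : List (α × Bool), W.length = U.length + 1 ∧ IsReduced (X ++ W ++ Y) ∧
      occCount U (X ++ W ++ Y) = occCount U X + occCount U Y ∧
      occCount (invRev U) (X ++ W ++ Y) = occCount (invRev U) X + occCount (invRev U) Y := by
  have hfresh : ∀ l : List (α × Bool), l.length ≤ 5 → ∃ a, a ∉ l := fun l hl =>
    Cardinal.exists_notMem_of_length_lt l <| by
      rw [Cardinal.mk_fintype, Fintype.card_prod, Fintype.card_bool]
      exact_mod_cast (by omega)
  have hU' : invRev U ≠ [] := by simpa [invRev] using hU
  obtain ⟨c, hc⟩ := hfresh [U.head hU, U.getLast hU, (invRev U).head hU',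
    (invRev U).getLast hU', ((Y.head hY).1, !(Y.head hY).2)] (by simp)
  obtain ⟨d, hd⟩ := hfresh [U.getLast hU, (invRev U).getLast hU', (c.1, !c.2),
    ((X.getLast hX).1, !(X.getLast hX).2)] (by simp)
  simp only [mem_cons, not_mem_nil, or_false, not_or] at hc hd
  obtain ⟨hc_head, hc_last, hc_head', hc_last', hcY⟩ := hc
  obtain ⟨hd_last, hd_last', hdc, hdX⟩ := hd
  refine ⟨d :: replicate U.length c, by simp, ?_, ?_, ?_⟩
  · refine ((hXr.append (isReduced_cons_replicate ?_ _) ?_).append hYr ?_)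
    · exact ne_inv_comm.2 hdc
    · simpa [getLast?_eq_some_getLast hX] using hdX
    · have hlast : (X ++ d :: replicate U.length c).getLast? = some c := by
        simp [getLast?_cons, getLast?_replicate, hU]
      simpa [hlast, head?_eq_some_head hY] using ne_inv_comm.2 hcY
  · exact occCount_append_cons_replicate_append hU hc_head hc_last hd_last
  · rw [← invRev_length (L₁ := U)]
    exact occCount_append_cons_replicate_append hU' hc_head' hc_last' hd_last'

/-- Existence of blockers in free groups of rank at least 3: for every `u` of length `≥ 2`
there is a constant `C_u` such that every pair `(x, y)` of nontrivial elements admits a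
`u`-blocker `w` with `‖u‖ ≤ ‖w‖ < C_u`. -/
theorem blockers_exist (r : ℕ) (hr : 3 ≤ r) (u : FreeGroup (Fin r))
    (hu : 2 ≤ (FreeGroup.toWord u).length) :
    ∃ Cu : ℕ, 0 < Cu ∧
      ∀ x y : FreeGroup (Fin r), x ≠ 1 → y ≠ 1 →
        ∃ w : FreeGroup (Fin r),
          (FreeGroup.toWord u).length ≤ (FreeGroup.toWord w).length ∧
          (FreeGroup.toWord w).length < Cu ∧
          -- the product x·w·y is reduced
          (FreeGroup.toWord (x * w * y)).length =
            (FreeGroup.toWord x).length + (FreeGroup.toWord w).length +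
              (FreeGroup.toWord y).length ∧
          -- w is a u-blocker for (x, y)
          occCount (FreeGroup.toWord u) (FreeGroup.toWord (x * w * y)) =
            occCount (FreeGroup.toWord u) (FreeGroup.toWord x) +
              occCount (FreeGroup.toWord u) (FreeGroup.toWord y) ∧
          occCount (FreeGroup.toWord u⁻¹) (FreeGroup.toWord (x * w * y)) =
            occCount (FreeGroup.toWord u⁻¹) (FreeGroup.toWord x) +
              occCount (FreeGroup.toWord u⁻¹) (FreeGroup.toWord y) := by
  refine ⟨u.toWord.length + 2, by omega, fun x y hx hy => ?_⟩
  obtain ⟨W, hW_length, hW_reduced, hocc, hocc_inv⟩ :=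
    exists_blocker_word (U := u.toWord) (by simpa using hr) (ne_nil_of_length_pos (by omega))
      (toWord_eq_nil_iff.not.2 hx) (toWord_eq_nil_iff.not.2 hy) isReduced_toWord isReduced_toWord
  have hW : (mk W).toWord = W := (hW_reduced.infix ⟨x.toWord, y.toWord, rfl⟩).reduce_eq
  refine ⟨mk W, ?_, ?_, ?_, ?_, ?_⟩
  · rw [hW, hW_length]; omega
  · rw [hW, hW_length]; omega
  · rw [toWord_mul_mk_mul hW_reduced, hW, length_append, length_append]
  · rw [toWord_mul_mk_mul hW_reduced, hocc]
  · rw [toWord_mul_mk_mul hW_reduced, toWord_inv, hocc_inv]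
end

section
/- Let G be a group, let Λ ⊆ G with 1 ∈ Λ, and let N : Λ → [0,∞) with N(1) = 0. For r > 0 set B_r := {x ∈ Λ : N(x) < r}, and assume each B_r is finite. Suppose there are constants C₀ ≥ 1 and δ ∈ ℕ with |B_r| ≤ C₀·r^δ for all r > 0, and constants C₁, C₂ ≥ 1 and K ≥ 0 with |B_r·B_r·B_r| ≤ C₂·|B_{C₁·r + K}| for all r > 0, where B_r·B_r·B_r is the triple product set in G. Then there exist a constant C ≥ 1 and an unbounded strictly increasing sequence (r_n)_{n∈ℕ} of positive real numbers such that |B_{r_n}·B_{r_n}·B_{r_n}| ≤ C·|B_{r_n}| for all n ∈ ℕ. -/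
/-!
Write `b r = |B_r|`. If `b(C₁ r + K) > 2 (C₁ + K)^δ b(r)` for all large `r`, iterating
`r ↦ C₁ r + K` from some `R ≥ 1` multiplies the radius by at most `M = C₁ + K` per step while
multiplying `b` by more than `2 M^δ`, so after `k` steps `b ≥ (2 M^δ)^k b(R)` although the
polynomial growth bound gives `b ≤ C₀ M^{kδ} R^δ`: impossible once `2^k > C₀ R^δ / b(R)`.
Hence `b(C₁ r + K) ≤ 2 M^δ b(r)` for arbitrarily large `r`, and the tripling hypothesis turns
each such `r` into a radius with `|B_r³| ≤ 2 C₂ M^δ |B_r|`.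
-/

open Pointwise Filter

lemma iterate_mem_Icc_of_le_of_le_mul {α : Type*} [Semiring α] [LinearOrder α]
    [IsStrictOrderedRing α] {φ : α → α} {M R : α}
    (hφ : ∀ x, 1 ≤ x → x ≤ φ x ∧ φ x ≤ M * x) (hR : 1 ≤ R) (k : ℕ) :
    φ^[k] R ∈ Set.Icc R (M ^ k * R) := by
  induction k with
  | zero => simp
  | succ k ih =>
    obtain ⟨hRx, hxM⟩ := ih
    have hM : 0 ≤ M := zero_le_one.trans (by simpa using (hφ 1 le_rfl).1.trans (hφ 1 le_rfl).2)
    obtain ⟨hle, hleM⟩ := hφ _ (hR.trans hRx)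
    rw [Function.iterate_succ_apply', pow_succ']
    exact ⟨hRx.trans hle, hleM.trans (by rw [mul_assoc]; gcongr)⟩

lemma pow_mul_le_iterate {α β : Type*} [Semiring β] [PartialOrder β] [IsOrderedRing β]
    {f : α → β} {φ : α → α} {D : β} {R : α} (hD : 0 ≤ D)
    (hstep : ∀ k, D * f (φ^[k] R) ≤ f (φ^[k + 1] R)) (k : ℕ) :
    D ^ k * f R ≤ f (φ^[k] R) := by
  induction k with
  | zero => simp
  | succ k ih =>
    calc D ^ (k + 1) * f R = D * (D ^ k * f R) := by rw [pow_succ', mul_assoc]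
      _ ≤ D * f (φ^[k] R) := by gcongr
      _ ≤ f (φ^[k + 1] R) := hstep k

theorem exists_ge_apply_le_mul_of_le_pow {f φ : ℝ → ℝ} {M C₀ R : ℝ} {δ : ℕ}
    (hφ : ∀ x, 1 ≤ x → x ≤ φ x ∧ φ x ≤ M * x) (hpos : ∀ x, 1 ≤ x → 0 < f x)
    (hpoly : ∀ x, 1 ≤ x → f x ≤ C₀ * x ^ δ) (hR : 1 ≤ R) :
    ∃ r, R ≤ r ∧ f (φ r) ≤ 2 * M ^ δ * f r := by
  by_contra! hgrow
  have hM : 1 ≤ M := by linarith [hφ 1 le_rfl]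
  have horbit := iterate_mem_Icc_of_le_of_le_mul hφ hR
  have hlower : ∀ k, (2 * M ^ δ) ^ k * f R ≤ f (φ^[k] R) :=
    pow_mul_le_iterate (by positivity) fun k => by
    rw [Function.iterate_succ_apply']
    exact (hgrow _ (horbit k).1).le
  have hfR := hpos R hR
  have hC₀ : 0 ≤ C₀ := nonneg_of_mul_nonneg_left (hfR.le.trans (hpoly R hR)) (by positivity)
  have hbound (k : ℕ) : 2 ^ k * f R ≤ C₀ * R ^ δ := by
    obtain ⟨hRk, hkM⟩ := horbit k
    refine le_of_mul_le_mul_left ?_ (by positivity : 0 < (M ^ δ) ^ k)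
    calc (M ^ δ) ^ k * (2 ^ k * f R) = (2 * M ^ δ) ^ k * f R := by ring
      _ ≤ f (φ^[k] R) := hlower k
      _ ≤ C₀ * (φ^[k] R) ^ δ := hpoly _ (hR.trans hRk)
      _ ≤ C₀ * (M ^ k * R) ^ δ := by gcongr; linarith
      _ = (M ^ δ) ^ k * (C₀ * R ^ δ) := by ring
  obtain ⟨k, hk⟩ := pow_unbounded_of_one_lt (C₀ * R ^ δ / f R) one_lt_two
  rw [div_lt_iff₀ hfR] at hk
  linarith [hbound k]

lemma exists_strictMono_tendsto_atTop_of_frequently {P : ℝ → Prop}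
    (h : ∃ᶠ x in atTop, P x) :
    ∃ rs : ℕ → ℝ, StrictMono rs ∧ Tendsto rs atTop atTop ∧ ∀ n, P (rs n) := by
  choose g hg hPg using fun a : ℝ => frequently_atTop.1 h (a + 1)
  have hsucc (n : ℕ) : g^[n + 2] 0 = g (g^[n + 1] 0) := Function.iterate_succ_apply' _ _ _
  have hge (n : ℕ) : (n : ℝ) ≤ g^[n + 1] 0 := by
    induction n with
    | zero => simp only [Nat.cast_zero, zero_add, Function.iterate_one]; linarith [hg 0]
    | succ n ih => rw [hsucc]; push_cast; linarith [hg (g^[n + 1] 0)]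
  refine ⟨fun n => g^[n + 1] 0, strictMono_nat_of_lt_succ fun n => ?_,
    tendsto_atTop_mono hge tendsto_natCast_atTop_atTop, fun n => ?_⟩
  · simp only [hsucc]; linarith [hg (g^[n + 1] 0)]
  · show P (g^[n + 1] 0)
    rw [Function.iterate_succ_apply']
    exact hPg _

theorem tripling_radii_sequence_general {G : Type*} [Group G] (Λ : Set G) (hone : (1 : G) ∈ Λ)
    (N : G → ℝ) (hN1 : N 1 = 0)
    (hfin : ∀ r : ℝ, 0 < r → {x ∈ Λ | N x < r}.Finite)
    (C₀ : ℝ) (δ : ℕ)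
    (hpoly : ∀ r : ℝ, 0 < r → ({x ∈ Λ | N x < r}.ncard : ℝ) ≤ C₀ * r ^ δ)
    (C₁ C₂ : ℝ) (hC₁ : 1 ≤ C₁) (hC₂ : 1 ≤ C₂) (K : ℝ) (hK : 0 ≤ K)
    (htrip : ∀ r : ℝ, 0 < r →
        (({x ∈ Λ | N x < r} * {x ∈ Λ | N x < r} * {x ∈ Λ | N x < r}).ncard : ℝ) ≤
          C₂ * ({x ∈ Λ | N x < C₁ * r + K}.ncard : ℝ)) :
    ∃ C : ℝ, 1 ≤ C ∧ ∃ rs : ℕ → ℝ, StrictMono rs ∧ (∀ n : ℕ, 0 < rs n) ∧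
      Filter.Tendsto rs Filter.atTop Filter.atTop ∧
      ∀ n : ℕ,
        (({x ∈ Λ | N x < rs n} * {x ∈ Λ | N x < rs n} * {x ∈ Λ | N x < rs n}).ncard : ℝ) ≤
          C * ({x ∈ Λ | N x < rs n}.ncard : ℝ) := by
  have hpos (r : ℝ) (hr : 0 < r) : 0 < ({x ∈ Λ | N x < r}.ncard : ℝ) := by
    exact_mod_cast (Set.ncard_pos (hfin r hr)).2 ⟨1, hone, by rwa [hN1]⟩
  have hφ (x : ℝ) (hx : 1 ≤ x) : x ≤ C₁ * x + K ∧ C₁ * x + K ≤ (C₁ + K) * x :=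
    ⟨by nlinarith, by nlinarith⟩
  set C := C₂ * (2 * (C₁ + K) ^ δ)
  have hfreq : ∃ᶠ r in atTop, 1 ≤ r ∧
      (({x ∈ Λ | N x < r} * {x ∈ Λ | N x < r} * {x ∈ Λ | N x < r}).ncard : ℝ) ≤
        C * ({x ∈ Λ | N x < r}.ncard : ℝ) := by
    refine frequently_atTop.2 fun R => ?_
    obtain ⟨r, hRr, hr⟩ := exists_ge_apply_le_mul_of_le_pow
      (f := fun r => ({x ∈ Λ | N x < r}.ncard : ℝ)) hφ (fun x hx => hpos x (by linarith))
      (fun x hx => hpoly x (by linarith)) (le_max_right R 1)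
    have hr1 : 1 ≤ r := (le_max_right _ _).trans hRr
    refine ⟨r, (le_max_left _ _).trans hRr, hr1, ?_⟩
    calc _ ≤ C₂ * ({x ∈ Λ | N x < C₁ * r + K}.ncard : ℝ) := htrip r (by linarith)
      _ ≤ C₂ * (2 * (C₁ + K) ^ δ * ({x ∈ Λ | N x < r}.ncard : ℝ)) := by gcongr
      _ = C * ({x ∈ Λ | N x < r}.ncard : ℝ) := by ring
  obtain ⟨rs, hmono, htend, hrs⟩ := exists_strictMono_tendsto_atTop_of_frequently hfreq
  refine ⟨C, ?_, rs, hmono, fun n => by linarith [(hrs n).1], htend, fun n => (hrs n).2⟩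
  have : 1 ≤ (C₁ + K) ^ δ := one_le_pow₀ (by linarith)
  nlinarith

/-- Pigeonhole for polynomially growing balls with small tripling: there is a constant `C` and
an unbounded increasing sequence of radii `r_n` along which the balls `B_{r_n}` satisfy
`|B_{r_n}³| ≤ C·|B_{r_n}|`. -/
theorem tripling_radii_sequence {G : Type*} [Group G] (Λ : Set G) (hone : (1 : G) ∈ Λ)
    (N : G → ℝ) (hN1 : N 1 = 0) (hNnonneg : ∀ x ∈ Λ, 0 ≤ N x)
    (hfin : ∀ r : ℝ, 0 < r → {x ∈ Λ | N x < r}.Finite)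
    (C₀ : ℝ) (hC₀ : 1 ≤ C₀) (δ : ℕ)
    (hpoly : ∀ r : ℝ, 0 < r → ({x ∈ Λ | N x < r}.ncard : ℝ) ≤ C₀ * r ^ δ)
    (C₁ C₂ : ℝ) (hC₁ : 1 ≤ C₁) (hC₂ : 1 ≤ C₂) (K : ℝ) (hK : 0 ≤ K)
    (htrip : ∀ r : ℝ, 0 < r →
        (({x ∈ Λ | N x < r} * {x ∈ Λ | N x < r} * {x ∈ Λ | N x < r}).ncard : ℝ) ≤
          C₂ * ({x ∈ Λ | N x < C₁ * r + K}.ncard : ℝ)) :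
    ∃ C : ℝ, 1 ≤ C ∧ ∃ rs : ℕ → ℝ, StrictMono rs ∧ (∀ n : ℕ, 0 < rs n) ∧
      Filter.Tendsto rs Filter.atTop Filter.atTop ∧
      ∀ n : ℕ,
        (({x ∈ Λ | N x < rs n} * {x ∈ Λ | N x < rs n} * {x ∈ Λ | N x < rs n}).ncard : ℝ) ≤
          C * ({x ∈ Λ | N x < rs n}.ncard : ℝ) :=
  tripling_radii_sequence_general Λ hone N hN1 hfin C₀ δ hpoly C₁ C₂ hC₁ hC₂ K hK htrip
end
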